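/- arXiv:2510.19234 — 15 statements merged into one kernel-verified Lean document; each statement's English description precedes it below -/
import Mathlib

section
/- Let F be a field of characteristic zero, let d, τ ∈ ℕ, and let β : ℕ → F be a sequence satisfying β_s · β_t = (β_s + β_t) · β_{s+t+d} for all s, t ≥ τ. Then either β_i = 0 for all i ≥ τ, or there exist natural numbers k and Δ with β_k ≠ 0, τ ≤ k, 0 ≤ k − τ < Δ ≤ k + d, and Δ ∣ k + d, such that for every t ≥ τ one has: β_t = ((k+d)·β_k)/(k+d+Δ·s) whenever t = k + Δ·s for some s ≥ 0, and β_t = 0 otherwise (here natural numbers are cast into F). In particular, if d = τ = 0, then β_i = 0 for all i ≥ 0. -/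
section Aux

variable {F : Type*} [Field F] [CharZero F]

private lemma comb_ne {d τ : ℕ} {β : ℕ → F}
    (hrec : ∀ s t : ℕ, τ ≤ s → τ ≤ t → β s * β t = (β s + β t) * β (s + t + d))
    {s t : ℕ} (hs : τ ≤ s) (ht : τ ≤ t) (hbs : β s ≠ 0) (hbt : β t ≠ 0) :
    β (s + t + d) ≠ 0 ∧ (β (s + t + d))⁻¹ = (β s)⁻¹ + (β t)⁻¹ := by
  have h := hrec s t hs ht
  have hne : β (s + t + d) ≠ 0 := by
    intro h0
    rw [h0, mul_zero] at h
    rcases mul_eq_zero.mp h with h1 | h1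
    · exact hbs h1
    · exact hbt h1
  refine ⟨hne, ?_⟩
  field_simp
  linear_combination h

private lemma comb_zero {d τ : ℕ} {β : ℕ → F}
    (hrec : ∀ s t : ℕ, τ ≤ s → τ ≤ t → β s * β t = (β s + β t) * β (s + t + d))
    {m t : ℕ} (hm : τ ≤ m) (ht : τ ≤ t) (hbm : β m = 0) (hbt : β t ≠ 0) :
    β (m + t + d) = 0 := by
  have h := hrec m t hm ht
  rw [hbm, zero_mul, zero_add] at h
  exact (mul_eq_zero.mp h.symm).resolve_left hbt

private lemma comb_iter {d τ : ℕ} {β : ℕ → F}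
    (hrec : ∀ s t : ℕ, τ ≤ s → τ ≤ t → β s * β t = (β s + β t) * β (s + t + d))
    {x : ℕ} (hx : τ ≤ x) (hbx : β x ≠ 0) (n : ℕ) :
    β (x + n * (x + d)) ≠ 0 ∧ (β (x + n * (x + d)))⁻¹ = ((n : F) + 1) * (β x)⁻¹ := by
  induction n with
  | zero => simpa using hbx
  | succ n ih =>
    have hx2 : τ ≤ x + n * (x + d) := le_trans hx (Nat.le_add_right _ _)
    have h := comb_ne hrec hx hx2 hbx ih.1
    have heq : x + (x + n * (x + d)) + d = x + (n + 1) * (x + d) := by ring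
    rw [heq] at h
    refine ⟨h.1, ?_⟩
    rw [h.2, ih.2]
    push_cast
    ring

private lemma pos_of_ne {d τ : ℕ} {β : ℕ → F}
    (hrec : ∀ s t : ℕ, τ ≤ s → τ ≤ t → β s * β t = (β s + β t) * β (s + t + d))
    {t : ℕ} (ht : τ ≤ t) (hbt : β t ≠ 0) : 0 < t + d := by
  by_contra h
  push_neg at h
  have ht0 : t = 0 := by omega
  have hd0 : d = 0 := by omega
  subst ht0; subst hd0
  have h0 := hrec 0 0 ht ht
  simp only [Nat.add_zero, Nat.zero_add] at h0
  exact hbt (mul_self_eq_zero.mp (by linear_combination -h0))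

private lemma key_ratio {d τ : ℕ} {β : ℕ → F}
    (hrec : ∀ s t : ℕ, τ ≤ s → τ ≤ t → β s * β t = (β s + β t) * β (s + t + d))
    {k t : ℕ} (hk : τ ≤ k) (ht : τ ≤ t) (hbk : β k ≠ 0) (hbt : β t ≠ 0) :
    ((t : F) + d) * (β k)⁻¹ = ((k : F) + d) * (β t)⁻¹ := by
  have hkd : 0 < k + d := pos_of_ne hrec hk hbk
  have htd : 0 < t + d := pos_of_ne hrec ht hbt
  obtain ⟨a, ha⟩ : ∃ a, t + d = a + 1 := ⟨t + d - 1, by omega⟩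
  obtain ⟨b, hb⟩ : ∃ b, k + d = b + 1 := ⟨k + d - 1, by omega⟩
  have h1 := (comb_iter hrec hk hbk a).2
  have h2 := (comb_iter hrec ht hbt b).2
  have hpt : k + a * (k + d) = t + b * (t + d) := by
    rw [hb, ha]
    have e1 : a * (b + 1) = a * b + a := by ring
    have e2 : b * (a + 1) = a * b + b := by ring
    rw [e1, e2]
    generalize a * b = p
    omega
  rw [hpt, h2] at h1
  have ha' : ((a : F) + 1) = (t : F) + d := by
    have := congrArg (Nat.cast : ℕ → F) ha
    push_cast at this
    exact this.symm
  have hb' : ((b : F) + 1) = (k : F) + d := by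
    have := congrArg (Nat.cast : ℕ → F) hb
    push_cast at this
    exact this.symm
  rw [ha', hb'] at h1
  linear_combination -h1

end Aux

/-- Lemma on the recurrence `β_s β_t = (β_s + β_t) β_{s+t+d}` for `s, t ≥ τ`:
either all terms vanish, or the nonzero terms are located in an arithmetic
progression `k + Δ ℕ` with `k - τ < Δ ≤ k + d`, `Δ ∣ k + d`, and are given by
`β_{k+Δs} = (k+d) β_k / (k+d+Δs)`.  In particular, if `d = τ = 0` then all terms vanish. -/
theorem recurrence_seq_classification {F : Type*} [Field F] [CharZero F]
    (d τ : ℕ) (β : ℕ → F)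
    (hrec : ∀ s t : ℕ, τ ≤ s → τ ≤ t → β s * β t = (β s + β t) * β (s + t + d)) :
    ((∀ i, τ ≤ i → β i = 0) ∨
      ∃ k Δ : ℕ, β k ≠ 0 ∧ τ ≤ k ∧ k - τ < Δ ∧ Δ ≤ k + d ∧ Δ ∣ (k + d) ∧
        ∀ t, τ ≤ t →
          (∀ s : ℕ, t = k + Δ * s →
              β t = (((k : F) + d) * β k) / ((k : F) + d + Δ * s)) ∧
          ((∀ s : ℕ, t ≠ k + Δ * s) → β t = 0)) ∧
    (d = 0 → τ = 0 → ∀ i : ℕ, β i = 0) := by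
  classical
  by_cases hz : ∀ i, τ ≤ i → β i = 0
  · exact ⟨Or.inl hz, fun _ hτ i => hz i (by omega)⟩
  push_neg at hz
  obtain ⟨i₀, hi₀, hbi₀⟩ := hz
  have hex : ∃ n, τ ≤ n ∧ β n ≠ 0 := ⟨i₀, hi₀, hbi₀⟩
  set k := Nat.find hex with hkdef
  obtain ⟨hk, hbk⟩ := Nat.find_spec hex
  have hmin : ∀ m, m < k → τ ≤ m → β m = 0 := by
    intro m hm hτm
    by_contra hbm
    exact Nat.find_min hex hm ⟨hτm, hbm⟩
  have hkd : 0 < k + d := pos_of_ne hrec hk hbk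
  -- the set of offsets with nonzero β
  have hQadd : ∀ n m, β (k + n) ≠ 0 → β (k + m) ≠ 0 → β (k + (n + m)) ≠ 0 := by
    intro n m hn hm
    intro h0
    have hτnm : τ ≤ k + (n + m) := le_trans hk (Nat.le_add_right _ _)
    have hz1 := comb_zero hrec hτnm hk h0 hbk
    have h1 := (comb_ne hrec (le_trans hk (Nat.le_add_right _ _))
      (le_trans hk (Nat.le_add_right _ _)) hn hm).1
    have heq : k + n + (k + m) + d = k + (n + m) + k + d := by ring
    rw [heq] at h1
    exact h1 hz1
  have hQkd : β (k + (k + d)) ≠ 0 := by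
    have := (comb_ne hrec hk hk hbk hbk).1
    have heq : k + k + d = k + (k + d) := by ring
    rwa [heq] at this
  have hexΔ : ∃ n, 0 < n ∧ β (k + n) ≠ 0 := ⟨k + d, hkd, hQkd⟩
  set Δ := Nat.find hexΔ with hΔdef
  obtain ⟨hΔpos, hQΔ⟩ := Nat.find_spec hexΔ
  have hΔmin : ∀ m, 0 < m → m < Δ → β (k + m) = 0 := by
    intro m hm hmΔ
    by_contra hbm
    exact Nat.find_min hexΔ hmΔ ⟨hm, hbm⟩
  -- multiples of Δ are in the support
  have hQmul : ∀ s : ℕ, β (k + Δ * s) ≠ 0 := by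
    intro s
    induction s with
    | zero => simpa using hbk
    | succ s ih =>
      have := hQadd (Δ * s) Δ ih hQΔ
      have heq : Δ * s + Δ = Δ * (s + 1) := by ring
      rwa [heq] at this
  -- subtraction of Δ preserves the support
  have hsub : ∀ n, Δ ≤ n → β (k + n) ≠ 0 → β (k + (n - Δ)) ≠ 0 := by
    intro n hΔn hn h0
    have hτm : τ ≤ k + (n - Δ) := le_trans hk (Nat.le_add_right _ _)
    have hτt : τ ≤ k + Δ := le_trans hk (Nat.le_add_right _ _)
    have hz1 := comb_zero hrec hτm hτt h0 hQΔ
    have h1 := (comb_ne hrec hk (le_trans hk (Nat.le_add_right _ _)) hbk hn).1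
    have heq : k + (n - Δ) + (k + Δ) + d = k + (k + n) + d := by omega
    rw [heq] at hz1
    have heq2 : k + (k + n) + d = k + (n - Δ) + (k + Δ) + d := by omega
    exact h1 hz1
  -- every support offset is a multiple of Δ
  have hdvd : ∀ n, β (k + n) ≠ 0 → Δ ∣ n := by
    intro n
    induction n using Nat.strong_induction_on with
    | _ n ih =>
      intro hn
      rcases Nat.eq_zero_or_pos n with h0 | h0
      · simp [h0]
      rcases lt_or_ge n Δ with h1 | h1
      · exact absurd (hΔmin n h0 h1) hn
      · have h2 := ih (n - Δ) (by omega) (hsub n h1 hn)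
        obtain ⟨c, hc⟩ := h2
        exact ⟨c + 1, by have e : Δ * (c + 1) = Δ * c + Δ := by ring
                         omega⟩
  -- k - τ < Δ
  have hkτΔ : k - τ < Δ := by
    by_contra hcon
    push_neg at hcon
    have hτk : τ ≤ k - Δ := by omega
    have hΔk : Δ ≤ k := by omega
    have hne : β (k - Δ) ≠ 0 := by
      intro h0
      have hτt : τ ≤ k + Δ := le_trans hk (Nat.le_add_right _ _)
      have hz1 := comb_zero hrec hτk hτt h0 hQΔ
      have h1 := (comb_ne hrec hk hk hbk hbk).1
      have heq : k - Δ + (k + Δ) + d = k + k + d := by omega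
      rw [heq] at hz1
      exact h1 hz1
    exact hne (hmin (k - Δ) (by omega) hτk)
  have hΔdvd : Δ ∣ (k + d) := hdvd (k + d) hQkd
  have hΔle : Δ ≤ k + d := Nat.le_of_dvd hkd hΔdvd
  have hmain : ∀ t, τ ≤ t →
      (∀ s : ℕ, t = k + Δ * s →
          β t = (((k : F) + d) * β k) / ((k : F) + d + Δ * s)) ∧
      ((∀ s : ℕ, t ≠ k + Δ * s) → β t = 0) := by
    intro t ht
    constructor
    · intro s hts
      have hbt : β t ≠ 0 := by rw [hts]; exact hQmul s
      have hratio := key_ratio hrec hk ht hbk hbt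
      have htdpos : 0 < t + d := pos_of_ne hrec ht hbt
      have htd0 : ((t : F) + d) ≠ 0 := by
        have : ((t + d : ℕ) : F) ≠ 0 := Nat.cast_ne_zero.mpr (by omega)
        push_cast at this
        exact this
      have hcast : ((k : F) + d + Δ * s) = (t : F) + d := by
        subst hts
        push_cast
        ring
      rw [hcast, eq_div_iff htd0]
      field_simp at hratio
      linear_combination hratio
    · intro hno
      by_contra hbt
      rcases lt_or_ge t k with h1 | h1
      · exact hbt (hmin t h1 ht)
      · have hQ : β (k + (t - k)) ≠ 0 := by
          have heq : k + (t - k) = t := by omega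
          rwa [heq]
        obtain ⟨s, hs⟩ := hdvd (t - k) hQ
        exact hno s (by omega)
  refine ⟨Or.inr ⟨k, Δ, hbk, hk, hkτΔ, hΔle, hΔdvd, hmain⟩, ?_⟩
  intro hd hτ i
  exact absurd hΔle (by omega)
end

section
/- Let F be a field of characteristic zero, let N ∈ ℕ, and let d, τ : ℕ → ℕ be sequences defined for s ≥ N. Suppose β : ℕ → ℕ → F (written β^s_t, with t ≥ τ_s and s ≥ N) satisfies β^n_m · β^s_t = β^n_m · β^s_{m+t+d_n} + β^s_t · β^n_{m+t+d_s} for all m ≥ τ_n, t ≥ τ_s, n, s ≥ N. Then either β^s_t = 0 for all t ≥ τ_s and s ≥ N, or there exist a set I ⊆ {s ∈ ℕ : s ≥ N}, a natural number Δ ≥ 1, and natural numbers k_i for i ∈ I such that for each i ∈ I: β^i_{k_i} ≠ 0, τ_i ≤ k_i, 0 ≤ k_i − τ_i < Δ ≤ k_i + d_i, and Δ ∣ k_i + d_i; and for all s ≥ N and t ≥ τ_s: β^s_t = ((k_s + d_s)·β^s_{k_s})/(k_s + d_s + Δ·l) whenever s ∈ I and t = k_s + Δ·l for some l ≥ 0,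 and β^s_t = 0 otherwise (natural numbers cast into F). In particular, if d_s = τ_s = 0 for all s ≥ N, then β^s_t = 0 for all t ≥ τ_s, s ≥ N. -/
section RecAux

variable {F : Type*} [Field F] [CharZero F]
variable {N : ℕ} {d τ : ℕ → ℕ} {β : ℕ → ℕ → F}

/-- L1: on the support, `t + d s ≥ 1`. -/
lemma rec_aux_pos
    (hrec : ∀ n s m t : ℕ, N ≤ n → N ≤ s → τ n ≤ m → τ s ≤ t →
      β n m * β s t = β n m * β s (m + t + d n) + β s t * β n (m + t + d s))
    {s t : ℕ} (hs : N ≤ s) (ht : τ s ≤ t) (hβ : β s t ≠ 0) : 1 ≤ t + d s := by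
  by_contra h
  have ht0 : t = 0 := by omega
  have hd0 : d s = 0 := by omega
  have := hrec s s t t hs hs ht ht
  rw [ht0, hd0] at this
  simp only [Nat.add_zero, Nat.zero_add] at this
  have : β s 0 * β s 0 = 0 := by linear_combination -this
  rw [ht0] at hβ
  exact hβ (by simpa [mul_self_eq_zero] using this)

/-- L2: closure of the support of a single sequence and harmonic additivity. -/
lemma rec_aux_step
    (hrec : ∀ n s m t : ℕ, N ≤ n → N ≤ s → τ n ≤ m → τ s ≤ t →
      β n m * β s t = β n m * β s (m + t + d n) + β s t * β n (m + t + d s))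
    {s m t : ℕ} (hs : N ≤ s) (hm : τ s ≤ m) (ht : τ s ≤ t)
    (hβm : β s m ≠ 0) (hβt : β s t ≠ 0) :
    β s (m + t + d s) ≠ 0 ∧ (β s (m + t + d s))⁻¹ = (β s m)⁻¹ + (β s t)⁻¹ := by
  have h := hrec s s m t hs hs hm ht
  have hfac : β s m * β s t = (β s m + β s t) * β s (m + t + d s) := by linear_combination h
  have hne : β s (m + t + d s) ≠ 0 := by
    intro h0
    rw [h0, mul_zero] at hfac
    exact (mul_ne_zero hβm hβt) hfac
  refine ⟨hne, ?_⟩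
  have hsum : β s m + β s t ≠ 0 := by
    intro h0
    rw [h0, zero_mul] at hfac
    exact (mul_ne_zero hβm hβt) hfac
  field_simp
  linear_combination hfac

end RecAux

section RecAux2
set_option linter.unusedSectionVars false

variable {F : Type*} [Field F] [CharZero F]
variable {N : ℕ} {d τ : ℕ → ℕ} {β : ℕ → ℕ → F}

/-- L3: iterating the closure along one sequence. -/
lemma rec_aux_iter
    (hrec : ∀ n s m t : ℕ, N ≤ n → N ≤ s → τ n ≤ m → τ s ≤ t →
      β n m * β s t = β n m * β s (m + t + d n) + β s t * β n (m + t + d s))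
    {s m : ℕ} (hs : N ≤ s) (hm : τ s ≤ m) (hβm : β s m ≠ 0) :
    ∀ a b : ℕ, b + d s = (a + 1) * (m + d s) →
      β s b ≠ 0 ∧ (β s b)⁻¹ = ((a : F) + 1) * (β s m)⁻¹ := by
  intro a
  induction a with
  | zero =>
    intro b hb
    have : b = m := by omega
    subst this
    exact ⟨hβm, by push_cast; ring⟩
  | succ a ih =>
    intro b hb
    set Q : ℕ := (a + 1) * (m + d s) with hQ
    have hQge : m + d s ≤ Q := Nat.le_mul_of_pos_left _ (by omega)
    have hb' : b = Q + m := by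
      have : b + d s = Q + (m + d s) := by rw [hb, hQ]; ring
      omega
    have hb0 : (Q - d s) + d s = (a + 1) * (m + d s) := by omega
    obtain ⟨ih0, ih1⟩ := ih (Q - d s) hb0
    have hτb0 : τ s ≤ Q - d s := by omega
    have hidx : m + (Q - d s) + d s = b := by omega
    obtain ⟨h0, h1⟩ := rec_aux_step hrec hs hm hτb0 hβm ih0
    rw [hidx] at h0 h1
    refine ⟨h0, ?_⟩
    rw [h1, ih1]
    push_cast
    ring

/-- L4: proportionality `β s m * (m + d s) = β s t * (t + d s)` on the support. -/
lemma rec_aux_prop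
    (hrec : ∀ n s m t : ℕ, N ≤ n → N ≤ s → τ n ≤ m → τ s ≤ t →
      β n m * β s t = β n m * β s (m + t + d n) + β s t * β n (m + t + d s))
    {s m t : ℕ} (hs : N ≤ s) (hm : τ s ≤ m) (ht : τ s ≤ t)
    (hβm : β s m ≠ 0) (hβt : β s t ≠ 0) :
    β s m * ((m : F) + (d s : F)) = β s t * ((t : F) + (d s : F)) := by
  have h1 : 1 ≤ m + d s := rec_aux_pos hrec hs hm hβm
  have h2 : 1 ≤ t + d s := rec_aux_pos hrec hs ht hβt
  set R : ℕ := (t + d s) * (m + d s) with hR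
  have hRge : t + d s ≤ R := Nat.le_mul_of_pos_right _ (by omega)
  have hRge2 : m + d s ≤ R := Nat.le_mul_of_pos_left _ (by omega)
  set b : ℕ := R - d s with hbdef
  have hb1 : b + d s = ((t + d s - 1) + 1) * (m + d s) := by
    have : (t + d s - 1) + 1 = t + d s := by omega
    rw [this, ← hR]; omega
  have hb2 : b + d s = ((m + d s - 1) + 1) * (t + d s) := by
    have : (m + d s - 1) + 1 = m + d s := by omega
    rw [this, mul_comm, ← hR]; omega
  obtain ⟨hbne, e1⟩ := rec_aux_iter hrec hs hm hβm _ _ hb1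
  obtain ⟨_, e2⟩ := rec_aux_iter hrec hs ht hβt _ _ hb2
  have key : (((t + d s - 1 : ℕ) : F) + 1) * (β s m)⁻¹
      = (((m + d s - 1 : ℕ) : F) + 1) * (β s t)⁻¹ := by
    rw [← e1, ← e2]
  have c1 : ((t + d s - 1 : ℕ) : F) + 1 = (t : F) + (d s : F) := by
    have h : ((t + d s - 1 + 1 : ℕ) : F) = ((t + d s : ℕ) : F) := by
      rw [show t + d s - 1 + 1 = t + d s from by omega]
    push_cast at h
    exact h
  have c2 : ((m + d s - 1 : ℕ) : F) + 1 = (m : F) + (d s : F) := by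
    have h : ((m + d s - 1 + 1 : ℕ) : F) = ((m + d s : ℕ) : F) := by
      rw [show m + d s - 1 + 1 = m + d s from by omega]
    push_cast at h
    exact h
  rw [c1, c2] at key
  field_simp at key
  linear_combination -key

end RecAux2

section RecAux3
set_option linter.unusedSectionVars false

variable {F : Type*} [Field F] [CharZero F]
variable {N : ℕ} {d τ : ℕ → ℕ} {β : ℕ → ℕ → F}

/-- L5: cross closure of supports. -/
lemma rec_aux_cross
    (hrec : ∀ n s m t : ℕ, N ≤ n → N ≤ s → τ n ≤ m → τ s ≤ t →
      β n m * β s t = β n m * β s (m + t + d n) + β s t * β n (m + t + d s))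
    {n s m t : ℕ} (hn : N ≤ n) (hs : N ≤ s) (hm : τ n ≤ m) (ht : τ s ≤ t)
    (hβm : β n m ≠ 0) (hβt : β s t ≠ 0) :
    β s (m + t + d n) ≠ 0 := by
  intro h0
  have h := hrec n s m t hn hs hm ht
  rw [h0, mul_zero] at h
  -- h : β n m * β s t = 0 + β s t * β n (m + t + d s)
  have heq : β n m = β n (m + t + d s) := by
    have h2 : β n m * β s t = β n (m + t + d s) * β s t := by linear_combination h
    exact mul_right_cancel₀ hβt h2
  have hne : β n (m + t + d s) ≠ 0 := heq ▸ hβm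
  have hprop := rec_aux_prop hrec hn hm (le_trans hm (by omega)) hβm hne
  rw [← heq] at hprop
  have hcast : ((m : F) + (d n : F)) = ((m + t + d s : ℕ) : F) + (d n : F) :=
    mul_left_cancel₀ hβm hprop
  have : (m : ℕ) = m + t + d s := by
    have : ((m : ℕ) : F) = ((m + t + d s : ℕ) : F) := by push_cast at hcast ⊢; linear_combination hcast
    exact_mod_cast this
  have hpos : 1 ≤ t + d s := rec_aux_pos hrec hs ht hβt
  omega

/-- L6: cross non-closure. -/
lemma rec_aux_cross0
    (hrec : ∀ n s m t : ℕ, N ≤ n → N ≤ s → τ n ≤ m → τ s ≤ t →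
      β n m * β s t = β n m * β s (m + t + d n) + β s t * β n (m + t + d s))
    {n s m t : ℕ} (hn : N ≤ n) (hs : N ≤ s) (hm : τ n ≤ m) (ht : τ s ≤ t)
    (hβm : β n m ≠ 0) (hβt : β s t = 0) :
    β s (m + t + d n) = 0 := by
  have h := hrec n s m t hn hs hm ht
  rw [hβt, mul_zero, zero_mul, add_zero] at h
  exact (mul_eq_zero.mp h.symm).resolve_left hβm

end RecAux3

section RecAux4
set_option linter.unusedSectionVars false

variable {F : Type*} [Field F] [CharZero F]
variable {N : ℕ} {d τ : ℕ → ℕ} {β : ℕ → ℕ → F}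

/-- Absorption: the support of each sequence is invariant (both ways) under adding
any element of the additive closure of the shifts. -/
lemma rec_aux_absorb
    (hrec : ∀ n s m t : ℕ, N ≤ n → N ≤ s → τ n ≤ m → τ s ≤ t →
      β n m * β s t = β n m * β s (m + t + d n) + β s t * β n (m + t + d s)) :
    ∀ x ∈ AddSubmonoid.closure {x : ℕ | ∃ n m : ℕ, N ≤ n ∧ τ n ≤ m ∧ β n m ≠ 0 ∧ x = m + d n},
      ∀ s t, N ≤ s → τ s ≤ t → (β s t ≠ 0 ↔ β s (t + x) ≠ 0) := by
  set G : Set ℕ := {x : ℕ | ∃ n m : ℕ, N ≤ n ∧ τ n ≤ m ∧ β n m ≠ 0 ∧ x = m + d n} with hG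
  let T : AddSubmonoid ℕ :=
  { carrier := {x : ℕ | ∀ s t, N ≤ s → τ s ≤ t → (β s t ≠ 0 ↔ β s (t + x) ≠ 0)}
    zero_mem' := by intro s t _ _; simp
    add_mem' := by
      intro x y hx hy s t hs ht
      rw [hx s t hs ht, show t + (x + y) = (t + x) + y from by ring]
      exact hy s (t + x) hs (by omega) }
  have hsub : G ⊆ (T : Set ℕ) := by
    rintro x ⟨n, m, hn, hm, hβm, rfl⟩ s t hs ht
    constructor
    · intro hβt
      have := rec_aux_cross hrec hn hs hm ht hβm hβt
      rwa [show m + t + d n = t + (m + d n) from by ring] at this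
    · intro hβtx
      intro h0
      have := rec_aux_cross0 hrec hn hs hm ht hβm h0
      rw [show m + t + d n = t + (m + d n) from by ring] at this
      exact hβtx this
  intro x hx
  exact (AddSubmonoid.closure_le (S := T)).mpr hsub hx

/-- Elements of the subgroup of `ℤ` generated by a set of naturals are differences of
elements of the additive monoid closure. -/
lemma int_closure_diff (Gn : Set ℕ) {z : ℤ}
    (hz : z ∈ AddSubgroup.closure ((Nat.cast : ℕ → ℤ) '' Gn)) :
    ∃ a ∈ AddSubmonoid.closure Gn, ∃ b ∈ AddSubmonoid.closure Gn, z = (a : ℤ) - b := by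
  let K : AddSubgroup ℤ :=
  { carrier := {z : ℤ | ∃ a ∈ AddSubmonoid.closure Gn, ∃ b ∈ AddSubmonoid.closure Gn,
      z = (a : ℤ) - b}
    zero_mem' := ⟨0, AddSubmonoid.zero_mem _, 0, AddSubmonoid.zero_mem _, by simp⟩
    add_mem' := by
      rintro x y ⟨a, ha, b, hb, rfl⟩ ⟨c, hc, e, he, rfl⟩
      exact ⟨a + c, AddSubmonoid.add_mem _ ha hc, b + e, AddSubmonoid.add_mem _ hb he,
        by push_cast; ring⟩
    neg_mem' := by
      rintro x ⟨a, ha, b, hb, rfl⟩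
      exact ⟨b, hb, a, ha, by ring⟩ }
  have hsub : (Nat.cast : ℕ → ℤ) '' Gn ⊆ (K : Set ℤ) := by
    rintro z ⟨a, ha, rfl⟩
    exact ⟨a, AddSubmonoid.subset_closure ha, 0, AddSubmonoid.zero_mem _, by simp⟩
  exact (AddSubgroup.closure_le K).mpr hsub hz

end RecAux4


/-- Two-parameter version of the recurrence lemma: if
`β^n_m β^s_t = β^n_m β^s_{m+t+d_n} + β^s_t β^n_{m+t+d_s}` for `m ≥ τ_n, t ≥ τ_s, n, s ≥ N`,
then either all terms vanish, or there are a set `I`, a common step `Δ ≥ 1` and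
offsets `k_i` (for `i ∈ I`) with `β^i_{k_i} ≠ 0`, `k_i - τ_i < Δ ≤ k_i + d_i`,
`Δ ∣ k_i + d_i`, describing all the coefficients explicitly.
In particular, if `d_s = τ_s = 0` for all `s ≥ N`, then all terms vanish. -/
theorem recurrence_family_classification {F : Type*} [Field F] [CharZero F]
    (N : ℕ) (d τ : ℕ → ℕ) (β : ℕ → ℕ → F)
    (hrec : ∀ n s m t : ℕ, N ≤ n → N ≤ s → τ n ≤ m → τ s ≤ t →
      β n m * β s t = β n m * β s (m + t + d n) + β s t * β n (m + t + d s)) :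
    ((∀ s t, N ≤ s → τ s ≤ t → β s t = 0) ∨
      ∃ (I : Set ℕ) (Δ : ℕ) (k : ℕ → ℕ),
        I ⊆ {s : ℕ | N ≤ s} ∧ 1 ≤ Δ ∧
        (∀ i ∈ I, β i (k i) ≠ 0 ∧ τ i ≤ k i ∧ k i - τ i < Δ ∧
          Δ ≤ k i + d i ∧ Δ ∣ (k i + d i)) ∧
        (∀ s, N ≤ s → ∀ t, τ s ≤ t →
          (s ∈ I → ∀ l : ℕ, t = k s + Δ * l →
            β s t = (((k s : F) + d s) * β s (k s)) / ((k s : F) + d s + Δ * l)) ∧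
          ((s ∉ I ∨ ∀ l : ℕ, t ≠ k s + Δ * l) → β s t = 0))) ∧
    ((∀ s, N ≤ s → d s = 0 ∧ τ s = 0) → ∀ s t, N ≤ s → τ s ≤ t → β s t = 0) := by
  classical
  have main : ((∀ s t, N ≤ s → τ s ≤ t → β s t = 0) ∨
      ∃ (I : Set ℕ) (Δ : ℕ) (k : ℕ → ℕ),
        I ⊆ {s : ℕ | N ≤ s} ∧ 1 ≤ Δ ∧
        (∀ i ∈ I, β i (k i) ≠ 0 ∧ τ i ≤ k i ∧ k i - τ i < Δ ∧
          Δ ≤ k i + d i ∧ Δ ∣ (k i + d i)) ∧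
        (∀ s, N ≤ s → ∀ t, τ s ≤ t →
          (s ∈ I → ∀ l : ℕ, t = k s + Δ * l →
            β s t = (((k s : F) + d s) * β s (k s)) / ((k s : F) + d s + Δ * l)) ∧
          ((s ∉ I ∨ ∀ l : ℕ, t ≠ k s + Δ * l) → β s t = 0))) := by
    by_cases hall : ∀ s t, N ≤ s → τ s ≤ t → β s t = 0
    · exact Or.inl hall
    push_neg at hall
    obtain ⟨s₀, t₀, hs₀, ht₀, hb₀⟩ := hall
    right
    have habs := rec_aux_absorb hrec
    set G : Set ℕ := {x : ℕ | ∃ n m : ℕ, N ≤ n ∧ τ n ≤ m ∧ β n m ≠ 0 ∧ x = m + d n} with hG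
    set I : Set ℕ := {s : ℕ | N ≤ s ∧ ∃ t, τ s ≤ t ∧ β s t ≠ 0} with hI
    set k : ℕ → ℕ := fun s => sInf {t : ℕ | τ s ≤ t ∧ β s t ≠ 0} with hk
    have hkmem : ∀ s, s ∈ I → τ s ≤ k s ∧ β s (k s) ≠ 0 := by
      intro s hs
      obtain ⟨t, ht1, ht2⟩ := hs.2
      exact Nat.sInf_mem (⟨t, ht1, ht2⟩ : {t : ℕ | τ s ≤ t ∧ β s t ≠ 0}.Nonempty)
    have hkmin : ∀ s t, τ s ≤ t → β s t ≠ 0 → k s ≤ t := by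
      intro s t h1 h2
      exact Nat.sInf_le ⟨h1, h2⟩
    have hs₀I : s₀ ∈ I := ⟨hs₀, t₀, ht₀, hb₀⟩
    obtain ⟨g, hg⟩ := Int.subgroup_cyclic (AddSubgroup.closure ((Nat.cast : ℕ → ℤ) '' G))
    set Δ : ℕ := g.natAbs with hΔ
    have hdvd : ∀ x ∈ G, Δ ∣ x := by
      intro x hx
      have hxm : (x : ℤ) ∈ AddSubgroup.closure ((Nat.cast : ℕ → ℤ) '' G) :=
        AddSubgroup.subset_closure ⟨x, hx, rfl⟩
      rw [hg] at hxm
      obtain ⟨n, hn⟩ := AddSubgroup.mem_closure_singleton.mp hxm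
      have hdg : g ∣ (x : ℤ) := ⟨n, by rw [← hn, smul_eq_mul, mul_comm]⟩
      have := Int.natAbs_dvd_natAbs.mpr hdg
      simpa using this
    have hggmem : g ∈ AddSubgroup.closure ((Nat.cast : ℕ → ℤ) '' G) := by
      rw [hg]; exact AddSubgroup.subset_closure rfl
    have hΔmem : ((Δ : ℕ) : ℤ) ∈ AddSubgroup.closure ((Nat.cast : ℕ → ℤ) '' G) := by
      rcases Int.natAbs_eq g with h | h
      · rw [hΔ, ← h]; exact hggmem
      · have : ((Δ : ℕ) : ℤ) = -g := by rw [hΔ]; omega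
        rw [this]; exact neg_mem hggmem
    obtain ⟨A, hA, B, hB, hAB⟩ := int_closure_diff G hΔmem
    have hABn : Δ + B = A := by omega
    have hmemG : ∀ s, s ∈ I → (k s + d s) ∈ G := by
      intro s hs
      exact ⟨s, k s, hs.1, (hkmem s hs).1, (hkmem s hs).2, rfl⟩
    have hP1 : ∀ s, s ∈ I → 1 ≤ k s + d s := by
      intro s hs
      exact rec_aux_pos hrec hs.1 (hkmem s hs).1 (hkmem s hs).2
    have hΔ1 : 1 ≤ Δ :=
      Nat.pos_of_dvd_of_pos (hdvd _ (hmemG s₀ hs₀I)) (hP1 s₀ hs₀I)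
    -- nonvanishing along the progression
    have hprog : ∀ s, s ∈ I → ∀ l : ℕ, β s (k s + Δ * l) ≠ 0 := by
      intro s hsI l
      obtain ⟨hτk, hβk⟩ := hkmem s hsI
      have hA' : l * A ∈ AddSubmonoid.closure G := by
        simpa [smul_eq_mul] using nsmul_mem hA l
      have hB' : l * B ∈ AddSubmonoid.closure G := by
        simpa [smul_eq_mul] using nsmul_mem hB l
      have h1 : β s (k s + l * A) ≠ 0 := (habs _ hA' s (k s) hsI.1 hτk).mp hβk
      have heq : k s + l * A = (k s + Δ * l) + l * B := by rw [← hABn]; ring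
      rw [heq] at h1
      exact (habs _ hB' s (k s + Δ * l) hsI.1 (by omega)).mpr h1
    refine ⟨I, Δ, k, fun s hs => hs.1, hΔ1, ?_, ?_⟩
    · -- properties of k i for i ∈ I
      intro i hi
      obtain ⟨hτk, hβk⟩ := hkmem i hi
      have hPdvd : Δ ∣ (k i + d i) := hdvd _ (hmemG i hi)
      refine ⟨hβk, hτk, ?_, Nat.le_of_dvd (hP1 i hi) hPdvd, hPdvd⟩
      by_contra hcon
      push_neg at hcon
      set t : ℕ := k i - Δ with htdef
      have hτt : τ i ≤ t := by omega
      have hβt0 : β i t = 0 := by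
        by_contra h
        have := hkmin i t hτt h
        omega
      have h6 : β i (k i + t + d i) = 0 :=
        rec_aux_cross0 hrec hi.1 hi.1 hτk hτt hβk hβt0
      obtain ⟨c, hc⟩ := hPdvd
      have hc1 : 1 ≤ c := by
        rcases Nat.eq_zero_or_pos c with h | h
        · exfalso
          have h2 := hP1 i hi
          rw [h, Nat.mul_zero] at hc
          omega
        · exact h
      obtain ⟨c', rfl⟩ : ∃ c', c = c' + 1 := ⟨c - 1, by omega⟩
      have hidx : k i + t + d i = k i + Δ * c' := by
        have hc' : k i + d i = Δ * c' + Δ := by rw [hc]; ring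
        have hΔk : Δ ≤ k i := by omega
        omega
      exact hprog i hi c' (by rwa [hidx] at h6)
    · -- the description of all values
      intro s hs t ht
      constructor
      · intro hsI l hl
        obtain ⟨hτk, hβk⟩ := hkmem s hsI
        have hβt : β s t ≠ 0 := by rw [hl]; exact hprog s hsI l
        have hprop := rec_aux_prop hrec hs hτk ht hβk hβt
        have hposden : 1 ≤ t + d s := rec_aux_pos hrec hs ht hβt
        have hden : ((k s : F) + d s + Δ * l) ≠ 0 := by
          have : ((k s : F) + d s + Δ * l) = ((k s + d s + Δ * l : ℕ) : F) := by push_cast; ring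
          rw [this, Ne, Nat.cast_eq_zero]
          have := hP1 s hsI
          omega
        rw [eq_div_iff hden]
        have hcast : ((t : ℕ) : F) + (d s : F) = (k s : F) + d s + Δ * l := by
          rw [hl]; push_cast; ring
        rw [← hcast]
        linear_combination -hprop
      · intro hor
        rcases hor with hsI | hne
        · by_contra hβt
          exact hsI ⟨hs, t, ht, hβt⟩
        · by_contra hβt
          have hsI : s ∈ I := ⟨hs, t, ht, hβt⟩
          obtain ⟨hτk, hβk⟩ := hkmem s hsI
          have hkt : k s ≤ t := hkmin s t ht hβt
          have h1 : Δ ∣ (t + d s) := hdvd _ ⟨s, t, hs, ht, hβt, rfl⟩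
          have h2 : Δ ∣ (k s + d s) := hdvd _ (hmemG s hsI)
          have h3 : Δ ∣ (t - k s) := by
            have := Nat.dvd_sub h1 h2
            rwa [show t + d s - (k s + d s) = t - k s from by omega] at this
          obtain ⟨l, hlv⟩ := h3
          exact hne l (by omega)
  refine ⟨main, ?_⟩
  intro h0 s t hs ht
  rcases main with hz | ⟨I, Δ, k, hIN, hΔ1, hprops, hdesc⟩
  · exact hz s t hs ht
  · obtain ⟨hform, hzero⟩ := hdesc s hs t ht
    by_cases hsI : s ∈ I
    · exfalso
      obtain ⟨hβk, hτk, hlt, hle, hdd⟩ := hprops s hsI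
      obtain ⟨hd0, hτ0⟩ := h0 s hs
      omega
    · exact hzero (Or.inl hsI)
end

section
/- Let p, Δ be positive natural numbers, and suppose ξ : ℕ × ℕ → ℕ and k : ℕ → ℕ satisfy k_{s+t} + Δ·ξ_{s,t} = k_s + k_t + p for all s, t ≥ 0. Then: (1) Δ·ξ_{s,0} = Δ·ξ_{0,s} = k_0 + p for all s ≥ 0; (2) for every n > 0, k_n + Δ·(Σ_{s=1}^{n−1} ξ_{1,s}) = n·k_1 + (n−1)·p; (3) for all u, v > 0, ξ_{u,v} + Σ_{s=1}^{min(u,v)−1} ξ_{1,s} = Σ_{s=max(u,v)}^{u+v−1} ξ_{1,s}. -/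
/-- For the recurrence `k_{s+t} + Δ ξ_{s,t} = k_s + k_t + p` (`p, Δ > 0`) one has
`Δ ξ_{s,0} = Δ ξ_{0,s} = k_0 + p`,
`k_n + Δ Σ_{s=1}^{n-1} ξ_{1,s} = n k_1 + (n-1) p` for `n > 0`, and
`ξ_{u,v} + Σ_{s=1}^{min(u,v)-1} ξ_{1,s} = Σ_{s=max(u,v)}^{u+v-1} ξ_{1,s}` for `u, v > 0`. -/
theorem k_recurrence_no_shift (p Δ : ℕ) (hp : 0 < p) (hΔ : 0 < Δ)
    (ξ : ℕ × ℕ → ℕ) (k : ℕ → ℕ)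
    (hrec : ∀ s t : ℕ, k (s + t) + Δ * ξ (s, t) = k s + k t + p) :
    (∀ s : ℕ, Δ * ξ (s, 0) = k 0 + p ∧ Δ * ξ (0, s) = k 0 + p) ∧
    (∀ n : ℕ, 0 < n →
      k n + Δ * (∑ s ∈ Finset.Icc 1 (n - 1), ξ (1, s)) = n * k 1 + (n - 1) * p) ∧
    (∀ u v : ℕ, 0 < u → 0 < v →
      ξ (u, v) + ∑ s ∈ Finset.Icc 1 (min u v - 1), ξ (1, s) =
        ∑ s ∈ Finset.Icc (max u v) (u + v - 1), ξ (1, s)) := by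
  set S : ℕ → ℕ := fun n => ∑ s ∈ Finset.Icc 1 n, ξ (1, s) with hS
  have hA : ∀ n, 0 < n → k n + Δ * S (n - 1) = n * k 1 + (n - 1) * p := by
    intro n hn
    induction n with
    | zero => omega
    | succ m ih =>
      rcases Nat.eq_zero_or_pos m with hm | hm
      · subst hm; simp [hS]
      · have ihm := ih hm
        obtain ⟨l, rfl⟩ : ∃ l, m = l + 1 := ⟨m - 1, by omega⟩
        have hrec1 := hrec 1 (l + 1)
        have hsum : S (l + 1) = S l + ξ (1, l + 1) :=
          Finset.sum_Icc_succ_top (by omega) _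
        have hadd : (1 : ℕ) + (l + 1) = l + 1 + 1 := by omega
        rw [hadd] at hrec1
        simp only [Nat.add_sub_cancel] at ihm ⊢
        rw [hsum, Nat.mul_add]
        have e1 : (l + 1 + 1) * k 1 = (l + 1) * k 1 + k 1 := by ring
        have e2 : (l + 1) * p = l * p + p := by ring
        omega
  have hB : ∀ u v, 0 < u → 0 < v →
      ξ (u, v) + S (u - 1) + S (v - 1) = S (u + v - 1) := by
    intro u v hu hv
    have h := hrec u v
    have hu' := hA u hu
    have hv' := hA v hv
    have huv := hA (u + v) (by omega)
    have e1 : (u + v) * k 1 = u * k 1 + v * k 1 := by ring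
    have e2 : (u + v - 1) * p = (u - 1) * p + (v - 1) * p + p := by
      have h3 : u + v - 1 = (u - 1) + (v - 1) + 1 := by omega
      rw [h3]; ring
    have key : Δ * (ξ (u, v) + S (u - 1) + S (v - 1)) = Δ * S (u + v - 1) := by
      rw [Nat.mul_add, Nat.mul_add]
      omega
    exact Nat.eq_of_mul_eq_mul_left hΔ key
  refine ⟨?_, ?_, ?_⟩
  · intro s
    constructor
    · have := hrec s 0
      have h0 := hrec 0 0
      simp at this
      omega
    · have := hrec 0 s
      simp at this
      omega
  · exact hA
  · intro u v hu hv
    have hB' := hB u v hu hv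
    have hsplit : S (max u v - 1) + ∑ s ∈ Finset.Icc (max u v) (u + v - 1), ξ (1, s)
        = S (u + v - 1) := by
      have h1 : Finset.Icc 1 (max u v - 1) = Finset.Ioc 0 (max u v - 1) := by
        ext x; simp; omega
      have h2 : Finset.Icc (max u v) (u + v - 1) = Finset.Ioc (max u v - 1) (u + v - 1) := by
        ext x; simp; omega
      have h3 : Finset.Icc 1 (u + v - 1) = Finset.Ioc 0 (u + v - 1) := by
        ext x; simp; omega
      simp only [hS, h1, h2, h3]
      exact Finset.sum_Ioc_consecutive _ (by omega) (by omega)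
    have hmm : S (min u v - 1) + S (max u v - 1) = S (u - 1) + S (v - 1) := by
      rcases le_total u v with h | h
      · rw [min_eq_left h, max_eq_right h]
      · rw [min_eq_right h, max_eq_left h]; omega
    simp only [hS] at hB' hsplit hmm ⊢
    omega
end

section
/- Let r, p, Δ be positive natural numbers, and suppose ξ : ℕ × ℕ → ℕ and k : ℕ → ℕ satisfy k_{s+t+r} + Δ·ξ_{s,t} = k_s + k_t + p for all s, t ≥ 0. Then ξ_{s,0} = ξ_{0,s} for all s ≥ 0, and, working in ℤ: (1) for all i ≥ 0 and 0 ≤ j < r, r·k_{i·r+j} = ((i+1)·r + j)·k_0 + (i·r + j)·p − Δ·(τ_j + r·Σ_{s=0}^{i−1} ξ_{0, s·r+j}), where τ_j := j·ξ_{0,0} + j·Σ_{s=1}^{r−1}(ξ_{0,s+1} − ξ_{1,s}) − r·Σ_{s=1}^{j−1}(ξ_{0,s+1} − ξ_{1,s}); (2) for all a, c ≥ 0 and 0 ≤ b, d < r with b + d < r: ξ_{a·r+b, c·r+d} = Σ_{s=1}^{b−1}(ξ_{0,s+1} − ξ_{1,s}) + Σ_{s=1}^{d−1}(ξ_{0,s+1}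 − ξ_{1,s}) − Σ_{s=1}^{b+d−1}(ξ_{0,s+1} − ξ_{1,s}) + Σ_{s=0}^{a+c} ξ_{0,s·r+b+d} − Σ_{s=0}^{a−1} ξ_{0,s·r+b} − Σ_{s=0}^{c−1} ξ_{0,s·r+d}; (3) for all a, c ≥ 0 and 0 ≤ b, d < r with b + d ≥ r: ξ_{a·r+b, c·r+d} = Σ_{s=1}^{b−1}(ξ_{0,s+1} − ξ_{1,s}) + Σ_{s=1}^{d−1}(ξ_{0,s+1} − ξ_{1,s}) − Σ_{s=1}^{b+d−r−1}(ξ_{0,s+1} − ξ_{1,s}) + Σ_{s=0}^{a+c+1} ξ_{0,s·r+b+d−r} − Σ_{s=0}^{a−1} ξ_{0,s·r+b} − Σ_{s=0}^{c−1} ξ_{0,s·r+d} − ξ_{0,0} − Σ_{s=1}^{r−1}(ξ_{0,s+1} − ξ_{1,s}). -/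
private lemma auxA (r p Δ : ℕ) (ξ : ℕ × ℕ → ℕ) (k : ℕ → ℕ)
    (hZ : ∀ s t : ℕ, (Δ : ℤ) * ξ (s, t) = (k s : ℤ) + k t + p - k (s + t + r)) :
    ∀ i j : ℕ, (k (i * r + j) : ℤ) =
      k j + i * ((k 0 : ℤ) + p) - Δ * ∑ s ∈ Finset.range i, (ξ (0, s * r + j) : ℤ) := by
  intro i j
  induction i with
  | zero => simp
  | succ n ih =>
    have h := hZ 0 (n * r + j)
    rw [show (0 : ℕ) + (n * r + j) + r = (n + 1) * r + j by ring] at h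
    rw [Finset.sum_range_succ]
    push_cast
    push_cast at ih h
    linear_combination ih + h

private lemma auxB (r p Δ : ℕ) (ξ : ℕ × ℕ → ℕ) (k : ℕ → ℕ)
    (hZ : ∀ s t : ℕ, (Δ : ℤ) * ξ (s, t) = (k s : ℤ) + k t + p - k (s + t + r)) :
    ∀ j : ℕ, (k j : ℤ) =
      Δ * ∑ s ∈ Finset.Icc 1 (j - 1), ((ξ (0, s + 1) : ℤ) - ξ (1, s)) +
      j * (k 1 : ℤ) - ((j : ℤ) - 1) * k 0 := by
  have hstep : ∀ j : ℕ, (k (j + 1) : ℤ) =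
      (k j : ℤ) + Δ * ((ξ (0, j + 1) : ℤ) - ξ (1, j)) - k 0 + k 1 := by
    intro j
    have h1 := hZ 0 (j + 1)
    have h2 := hZ 1 j
    rw [show (0 : ℕ) + (j + 1) + r = 1 + j + r by omega] at h1
    linear_combination h2 - h1
  intro j
  induction j with
  | zero => simp
  | succ n ih =>
    match n, ih with
    | 0, _ => simp
    | m + 1, ih =>
      simp only [Nat.add_sub_cancel] at ih ⊢
      rw [Finset.sum_Icc_succ_top (show (1:ℕ) ≤ m + 1 by omega)]
      push_cast
      push_cast at ih
      linear_combination ih + hstep (m + 1)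

/-- For the recurrence `k_{s+t+r} + Δ ξ_{s,t} = k_s + k_t + p` (`r, p, Δ > 0`) one has
`ξ_{s,0} = ξ_{0,s}`, and explicit formulas (computed in `ℤ`) for `r * k_{ir+j}`
and for `ξ_{ar+b, cr+d}` in the two cases `b + d < r` and `b + d ≥ r`. -/
theorem k_recurrence_with_shift (r p Δ : ℕ) (hr : 0 < r) (hp : 0 < p) (hΔ : 0 < Δ)
    (ξ : ℕ × ℕ → ℕ) (k : ℕ → ℕ)
    (hrec : ∀ s t : ℕ, k (s + t + r) + Δ * ξ (s, t) = k s + k t + p) :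
    (∀ s : ℕ, ξ (s, 0) = ξ (0, s)) ∧
    (∀ i j : ℕ, j < r →
      (r : ℤ) * k (i * r + j) =
        ((i + 1) * r + j : ℤ) * k 0 + (i * r + j : ℤ) * p -
          (Δ : ℤ) * ((j * ξ (0, 0) +
              (j : ℤ) * ∑ s ∈ Finset.Icc 1 (r - 1), ((ξ (0, s + 1) : ℤ) - ξ (1, s)) -
              (r : ℤ) * ∑ s ∈ Finset.Icc 1 (j - 1), ((ξ (0, s + 1) : ℤ) - ξ (1, s))) +
            (r : ℤ) * ∑ s ∈ Finset.range i, (ξ (0, s * r + j) : ℤ))) ∧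
    (∀ a b c d : ℕ, b < r → d < r → b + d < r →
      (ξ (a * r + b, c * r + d) : ℤ) =
        ∑ s ∈ Finset.Icc 1 (b - 1), ((ξ (0, s + 1) : ℤ) - ξ (1, s)) +
        ∑ s ∈ Finset.Icc 1 (d - 1), ((ξ (0, s + 1) : ℤ) - ξ (1, s)) -
        ∑ s ∈ Finset.Icc 1 (b + d - 1), ((ξ (0, s + 1) : ℤ) - ξ (1, s)) +
        ∑ s ∈ Finset.range (a + c + 1), (ξ (0, s * r + b + d) : ℤ) -
        ∑ s ∈ Finset.range a, (ξ (0, s * r + b) : ℤ) -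
        ∑ s ∈ Finset.range c, (ξ (0, s * r + d) : ℤ)) ∧
    (∀ a b c d : ℕ, b < r → d < r → r ≤ b + d →
      (ξ (a * r + b, c * r + d) : ℤ) =
        ∑ s ∈ Finset.Icc 1 (b - 1), ((ξ (0, s + 1) : ℤ) - ξ (1, s)) +
        ∑ s ∈ Finset.Icc 1 (d - 1), ((ξ (0, s + 1) : ℤ) - ξ (1, s)) -
        ∑ s ∈ Finset.Icc 1 (b + d - r - 1), ((ξ (0, s + 1) : ℤ) - ξ (1, s)) +
        ∑ s ∈ Finset.range (a + c + 2), (ξ (0, s * r + (b + d - r)) : ℤ) -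
        ∑ s ∈ Finset.range a, (ξ (0, s * r + b) : ℤ) -
        ∑ s ∈ Finset.range c, (ξ (0, s * r + d) : ℤ) -
        (ξ (0, 0) : ℤ) -
        ∑ s ∈ Finset.Icc 1 (r - 1), ((ξ (0, s + 1) : ℤ) - ξ (1, s))) := by
  have hΔ' : (Δ : ℤ) ≠ 0 := by exact_mod_cast hΔ.ne'
  have hZ : ∀ s t : ℕ, (Δ : ℤ) * ξ (s, t) = (k s : ℤ) + k t + p - k (s + t + r) := by
    intro s t
    have h' := congrArg (fun n : ℕ => (n : ℤ)) (hrec s t)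
    push_cast at h'
    linarith
  have hA := auxA r p Δ ξ k hZ
  have hB := auxB r p Δ ξ k hZ
  have hC : (r : ℤ) * k 1 = ((r : ℤ) + 1) * k 0 + p - Δ * ξ (0, 0) -
      Δ * ∑ s ∈ Finset.Icc 1 (r - 1), ((ξ (0, s + 1) : ℤ) - ξ (1, s)) := by
    have h0 := hZ 0 0
    rw [show (0 : ℕ) + 0 + r = r by omega] at h0
    linear_combination h0 - hB r
  refine ⟨?_, ?_, ?_, ?_⟩
  · intro s
    have h1 := hZ s 0
    have h2 := hZ 0 s
    rw [show s + 0 + r = 0 + s + r by omega] at h1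
    have hx : (ξ (s, 0) : ℤ) = ξ (0, s) := mul_left_cancel₀ hΔ' (by linarith)
    exact_mod_cast hx
  · intro i j hj
    have hAij := hA i j
    have hBj := hB j
    push_cast
    linear_combination (r : ℤ) * hAij + (r : ℤ) * hBj + (j : ℤ) * hC
  · intro a b c d hb hd hbd
    apply mul_left_cancel₀ hΔ'
    have h3 := hA (a + c + 1) (b + d)
    rw [show (a + c + 1) * r + (b + d) = a * r + b + (c * r + d) + r by ring] at h3
    have hsum : ∑ s ∈ Finset.range (a + c + 1), (ξ (0, s * r + (b + d)) : ℤ)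
        = ∑ s ∈ Finset.range (a + c + 1), (ξ (0, s * r + b + d) : ℤ) :=
      Finset.sum_congr rfl fun s _ => by rw [add_assoc]
    rw [hsum] at h3
    have hBb := hB b
    have hBd := hB d
    have hBbd := hB (b + d)
    push_cast at h3 hBb hBd hBbd ⊢
    linear_combination hZ (a * r + b) (c * r + d) + hA a b + hA c d - h3 + hBb + hBd - hBbd
  · intro a b c d hb hd hbd
    apply mul_left_cancel₀ hΔ'
    have h3 := hA (a + c + 2) (b + d - r)
    rw [show (a + c + 2) * r + (b + d - r) = a * r + b + (c * r + d) + r by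
      zify [hbd]; ring] at h3
    have hBb := hB b
    have hBd := hB d
    have hBe := hB (b + d - r)
    have hc : ((b + d - r : ℕ) : ℤ) = (b : ℤ) + d - r := by omega
    rw [hc] at hBe
    push_cast at h3 hBb hBd hBe ⊢
    linear_combination hZ (a * r + b) (c * r + d) + hA a b + hA c d - h3 + hBb + hBd - hBe + hC
end

section
/- Let F be a field of characteristic zero and let T be an averaging operator on the polynomial algebra F[x,y] which is monomial and linear-in-degree, i.e. there exist natural numbers a, b, g, p, q, c and scalars α_{n,m} ∈ F such that T(x^n y^m) = α_{n,m} · x^{a·n + b·m + g} · y^{p·n + q·m + c} for all n, m ≥ 0. Let ψ be the F-algebra automorphism of F[x,y] swapping x and y. Then there exist scalars β_{n,m} ∈ F such that the operator S, equal to T or to ψ⁻¹ ∘ T ∘ ψ, has one of the following forms for all n, m ≥ 0: (i) S(x^n y^m) = β_{n,m} · x^{r·(m+c')} · y^{m+c'} for some r, c' ∈ ℕ; (ii) S(x^n y^m) = β_{n,m} · y^{r·n + m + c'} for some r, c' ∈ ℕ; (iii) S(x^n y^m) = β_{n,m} · x^{n+γ} · y^{m+c'} for some γ, c' ∈ ℕ;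 (iv) S(x^n y^m) = β_{n,m} · 1. -/
open MvPolynomial

private lemma exp_eq {F : Type*} [Field F] {c c' : F} {i j i' j' : ℕ}
    (h : c • (X 0 ^ i * X 1 ^ j : MvPolynomial (Fin 2) F) = c' • (X 0 ^ i' * X 1 ^ j'))
    (hc : c ≠ 0) : i = i' ∧ j = j' := by
  rw [X_pow_eq_monomial, X_pow_eq_monomial, X_pow_eq_monomial, X_pow_eq_monomial,
    monomial_mul, monomial_mul, smul_monomial, smul_monomial,
    monomial_eq_monomial_iff] at h
  rcases h with ⟨hd, _⟩ | ⟨h0, _⟩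
  · have h0 := DFunLike.congr_fun hd 0
    have h1 := DFunLike.congr_fun hd 1
    simp [Finsupp.single_apply] at h0 h1
    exact ⟨h0, h1⟩
  · simp at h0; exact absurd h0 hc

private lemma key_rel {F : Type*} [Field F]
    (a b g p q c : ℕ) (α : ℕ → ℕ → F)
    (T : MvPolynomial (Fin 2) F →ₗ[F] MvPolynomial (Fin 2) F)
    (hav : ∀ u v : MvPolynomial (Fin 2) F,
      T u * T v = T (T u * v) ∧ T u * T v = T (u * T v))
    (hmono : ∀ n m : ℕ,
      T (X 0 ^ n * X 1 ^ m) =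
        α n m • (X 0 ^ (a * n + b * m + g) * X 1 ^ (p * n + q * m + c)))
    (n m : ℕ) (hα : α n m ≠ 0) :
    a * (a*n+b*m+g) + b * (p*n+q*m+c) = a*n+b*m+g ∧
    p * (a*n+b*m+g) + q * (p*n+q*m+c) = p*n+q*m+c := by
  set A := a*n+b*m+g with hA
  set B := p*n+q*m+c with hB
  have h1 := (hav (X 0 ^ n * X 1 ^ m) (X 0 ^ n * X 1 ^ m)).1
  rw [hmono n m] at h1
  have hmul : (α n m • (X 0 ^ A * X 1 ^ B : MvPolynomial (Fin 2) F)) * (X 0 ^ n * X 1 ^ m)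
      = α n m • (X 0 ^ (A + n) * X 1 ^ (B + m)) := by
    clear_value A B
    rw [smul_mul_assoc, pow_add, pow_add]; ring_nf
  rw [hmul, map_smul, hmono (A+n) (B+m)] at h1
  have hlhs : (α n m • (X 0 ^ A * X 1 ^ B : MvPolynomial (Fin 2) F)) *
      (α n m • (X 0 ^ A * X 1 ^ B)) = (α n m * α n m) • (X 0 ^ (A+A) * X 1 ^ (B+B)) := by
    clear_value A B
    rw [smul_mul_smul_comm, pow_add, pow_add]; ring_nf
  rw [hlhs, smul_smul] at h1
  obtain ⟨e1, e2⟩ := exp_eq h1 (mul_ne_zero hα hα)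
  constructor
  · have h' : a * (A + n) + b * (B + m) + g = (a * A + b * B) + A := by rw [hA]; ring
    rw [h'] at e1
    omega
  · have h' : p * (A + n) + q * (B + m) + c = (p * A + q * B) + B := by rw [hB]; ring
    rw [h'] at e2
    omega

private lemma buildT {F : Type*} [Field F]
    (a b g p q c : ℕ) (α : ℕ → ℕ → F)
    (T : MvPolynomial (Fin 2) F →ₗ[F] MvPolynomial (Fin 2) F)
    (hmono : ∀ n m : ℕ,
      T (X 0 ^ n * X 1 ^ m) =
        α n m • (X 0 ^ (a * n + b * m + g) * X 1 ^ (p * n + q * m + c)))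
    (e1 e2 : ℕ → ℕ → ℕ)
    (h : ∀ n m : ℕ, α n m ≠ 0 → a*n+b*m+g = e1 n m ∧ p*n+q*m+c = e2 n m) :
    ∀ n m : ℕ, T (X 0 ^ n * X 1 ^ m) = α n m • (X 0 ^ e1 n m * X 1 ^ e2 n m) := by
  intro n m
  by_cases hα : α n m = 0
  · rw [hmono n m, hα, zero_smul, zero_smul]
  · obtain ⟨h1, h2⟩ := h n m hα
    rw [hmono n m, h1, h2]

private lemma swap_apply {F : Type*} [Field F]
    (a b g p q c : ℕ) (α : ℕ → ℕ → F)
    (T : MvPolynomial (Fin 2) F →ₗ[F] MvPolynomial (Fin 2) F)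
    (hmono : ∀ n m : ℕ,
      T (X 0 ^ n * X 1 ^ m) =
        α n m • (X 0 ^ (a * n + b * m + g) * X 1 ^ (p * n + q * m + c)))
    (n m : ℕ) :
    (renameEquiv F (Equiv.swap (0 : Fin 2) 1)).symm
      (T (renameEquiv F (Equiv.swap (0 : Fin 2) 1) (X 0 ^ n * X 1 ^ m)))
    = α m n • (X 0 ^ (p*m+q*n+c) * X 1 ^ (a*m+b*n+g)) := by
  have h1 : renameEquiv F (Equiv.swap (0 : Fin 2) 1) (X 0 ^ n * X 1 ^ m)
      = (X 0 ^ m * X 1 ^ n : MvPolynomial (Fin 2) F) := by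
    simp [renameEquiv_apply, Equiv.swap_apply_left, Equiv.swap_apply_right, mul_comm]
  rw [h1, hmono m n, map_smul]
  congr 1
  simp [renameEquiv_apply, Equiv.swap_apply_left, Equiv.swap_apply_right, mul_comm]

private lemma buildS {F : Type*} [Field F]
    (a b g p q c : ℕ) (α : ℕ → ℕ → F)
    (T : MvPolynomial (Fin 2) F →ₗ[F] MvPolynomial (Fin 2) F)
    (hmono : ∀ n m : ℕ,
      T (X 0 ^ n * X 1 ^ m) =
        α n m • (X 0 ^ (a * n + b * m + g) * X 1 ^ (p * n + q * m + c)))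
    (e1 e2 : ℕ → ℕ → ℕ)
    (h : ∀ n m : ℕ, α m n ≠ 0 → p*m+q*n+c = e1 n m ∧ a*m+b*n+g = e2 n m) :
    ∀ n m : ℕ, (renameEquiv F (Equiv.swap (0 : Fin 2) 1)).symm
      (T (renameEquiv F (Equiv.swap (0 : Fin 2) 1) (X 0 ^ n * X 1 ^ m)))
      = α m n • (X 0 ^ e1 n m * X 1 ^ e2 n m) := by
  intro n m
  rw [swap_apply a b g p q c α T hmono n m]
  by_cases hα : α m n = 0
  · rw [hα, zero_smul, zero_smul]
  · obtain ⟨h1, h2⟩ := h n m hα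
    rw [h1, h2]

private lemma X1_pow (F : Type*) [Field F] (k : ℕ) :
    (X 0 ^ 0 * X 1 ^ k : MvPolynomial (Fin 2) F) = X 1 ^ k := by
  rw [pow_zero, one_mul]

/-- Classification of monomial linear-in-degree averaging operators on `F[x,y]`:
up to conjugation by the automorphism `ψ` swapping the variables, every such
operator has one of the four forms (i)–(iv). -/
theorem linear_in_degree_averaging_classification {F : Type*} [Field F] [CharZero F]
    (a b g p q c : ℕ) (α : ℕ → ℕ → F)
    (T : MvPolynomial (Fin 2) F →ₗ[F] MvPolynomial (Fin 2) F)
    (hav : ∀ u v : MvPolynomial (Fin 2) F,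
      T u * T v = T (T u * v) ∧ T u * T v = T (u * T v))
    (hmono : ∀ n m : ℕ,
      T (X 0 ^ n * X 1 ^ m) =
        α n m • (X 0 ^ (a * n + b * m + g) * X 1 ^ (p * n + q * m + c))) :
    ∃ (β : ℕ → ℕ → F) (S : MvPolynomial (Fin 2) F → MvPolynomial (Fin 2) F),
      ((S = fun z => T z) ∨
        (S = fun z => (renameEquiv F (Equiv.swap (0 : Fin 2) 1)).symm
          (T (renameEquiv F (Equiv.swap (0 : Fin 2) 1) z)))) ∧
      ((∃ r c' : ℕ, ∀ n m : ℕ,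
          S (X 0 ^ n * X 1 ^ m) = β n m • (X 0 ^ (r * (m + c')) * X 1 ^ (m + c'))) ∨
       (∃ r c' : ℕ, ∀ n m : ℕ,
          S (X 0 ^ n * X 1 ^ m) = β n m • (X 1 ^ (r * n + m + c') : MvPolynomial (Fin 2) F)) ∨
       (∃ γ c' : ℕ, ∀ n m : ℕ,
          S (X 0 ^ n * X 1 ^ m) = β n m • (X 0 ^ (n + γ) * X 1 ^ (m + c'))) ∨
       (∀ n m : ℕ, S (X 0 ^ n * X 1 ^ m) = β n m • (1 : MvPolynomial (Fin 2) F))) := by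
  have key := key_rel a b g p q c α T hav hmono
  by_cases hA0 : ∀ n m : ℕ, α n m ≠ 0 → a*n+b*m+g = 0
  · by_cases hB0 : ∀ n m : ℕ, α n m ≠ 0 → p*n+q*m+c = 0
    · -- form (iv)
      refine ⟨α, fun z => T z, Or.inl rfl, Or.inr (Or.inr (Or.inr ?_))⟩
      have hb := buildT a b g p q c α T hmono (fun _ _ => 0) (fun _ _ => 0)
        (fun n m h => ⟨hA0 n m h, hB0 n m h⟩)
      intro n m
      show T (X 0 ^ n * X 1 ^ m) = α n m • (1 : MvPolynomial (Fin 2) F)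
      rw [hb n m]
      congr 1
      rw [pow_zero, pow_zero, one_mul]
    · -- A ≡ 0 on support, some B ≠ 0 : q = 1, form (ii)
      push_neg at hB0
      obtain ⟨n₂, m₂, hα2, hB2⟩ := hB0
      have hq : q = 1 := by
        have hk := (key n₂ m₂ hα2).2
        rw [hA0 n₂ m₂ hα2, mul_zero, zero_add] at hk
        rcases Nat.eq_zero_or_pos q with h | h
        · exfalso; exact hB2 (by rw [← hk, h, zero_mul])
        · have h2 : (p*n₂+q*m₂+c) ≤ q * (p*n₂+q*m₂+c) := Nat.le_mul_of_pos_left _ h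
          have h3 : q * (p*n₂+q*m₂+c) = 1 * (p*n₂+q*m₂+c) := by
            rw [le_antisymm (le_of_eq hk) h2, one_mul]
          exact Nat.eq_of_mul_eq_mul_right (Nat.pos_of_ne_zero hB2) h3
      subst hq
      refine ⟨α, fun z => T z, Or.inl rfl, Or.inr (Or.inl ⟨p, c, ?_⟩)⟩
      have hb := buildT a b g p 1 c α T hmono (fun _ _ => 0) (fun n m => p*n+m+c)
        (fun n m h => ⟨hA0 n m h, by ring⟩)
      intro n m
      show T (X 0 ^ n * X 1 ^ m) = α n m • (X 1 ^ (p*n+m+c) : MvPolynomial (Fin 2) F)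
      rw [hb n m, X1_pow]
  · push_neg at hA0
    obtain ⟨n₁, m₁, hα1, hA1⟩ := hA0
    have ha1 : a = 1 ∨ a = 0 := by
      have hk := (key n₁ m₁ hα1).1
      have hle : a * (a*n₁+b*m₁+g) ≤ a*n₁+b*m₁+g :=
        le_trans (Nat.le_add_right _ _) (le_of_eq hk)
      rcases Nat.eq_zero_or_pos a with h | h
      · exact Or.inr h
      · left
        have h2 : (a*n₁+b*m₁+g) ≤ a * (a*n₁+b*m₁+g) := Nat.le_mul_of_pos_left _ h
        have h3 : a * (a*n₁+b*m₁+g) = 1 * (a*n₁+b*m₁+g) := by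
          rw [le_antisymm hle h2, one_mul]
        exact Nat.eq_of_mul_eq_mul_right (Nat.pos_of_ne_zero hA1) h3
    by_cases hB0 : ∀ n m : ℕ, α n m ≠ 0 → p*n+q*m+c = 0
    · -- B ≡ 0 on support, some A ≠ 0 : a = 1, swapped form (ii)
      have ha : a = 1 := by
        rcases ha1 with h | h
        · exact h
        · exfalso
          apply hA1
          calc a*n₁+b*m₁+g = a*(a*n₁+b*m₁+g) + b*(p*n₁+q*m₁+c) := (key n₁ m₁ hα1).1.symm
            _ = b*(p*n₁+q*m₁+c) := by rw [h]; ring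
            _ = 0 := by rw [hB0 n₁ m₁ hα1, mul_zero]
      subst ha
      refine ⟨fun n m => α m n, _, Or.inr rfl, Or.inr (Or.inl ⟨b, g, ?_⟩)⟩
      have hb := buildS 1 b g p q c α T hmono (fun _ _ => 0) (fun n m => b*n+m+g)
        (fun n m h => ⟨hB0 m n h, by ring⟩)
      intro n m
      show (renameEquiv F (Equiv.swap (0 : Fin 2) 1)).symm
          (T (renameEquiv F (Equiv.swap (0 : Fin 2) 1) (X 0 ^ n * X 1 ^ m)))
        = α m n • (X 1 ^ (b*n+m+g) : MvPolynomial (Fin 2) F)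
      rw [hb n m, X1_pow]
    · push_neg at hB0
      obtain ⟨n₂, m₂, hα2, hB2⟩ := hB0
      have hq1 : q = 1 ∨ q = 0 := by
        have hk := (key n₂ m₂ hα2).2
        have hle : q * (p*n₂+q*m₂+c) ≤ p*n₂+q*m₂+c :=
          le_trans (Nat.le_add_left _ _) (le_of_eq hk)
        rcases Nat.eq_zero_or_pos q with h | h
        · exact Or.inr h
        · left
          have h2 : (p*n₂+q*m₂+c) ≤ q * (p*n₂+q*m₂+c) := Nat.le_mul_of_pos_left _ h
          have h3 : q * (p*n₂+q*m₂+c) = 1 * (p*n₂+q*m₂+c) := by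
            rw [le_antisymm hle h2, one_mul]
          exact Nat.eq_of_mul_eq_mul_right (Nat.pos_of_ne_zero hB2) h3
      rcases hq1 with hq | hq
      · -- q = 1 : p = 0
        subst hq
        have hp : p = 0 := by
          have hk := (key n₁ m₁ hα1).2
          have h0 : p * (a*n₁+b*m₁+g) = 0 := by
            generalize p * (a*n₁+b*m₁+g) = t at hk ⊢
            generalize p * n₁ = u at hk
            generalize a * n₁ = v at hk
            generalize b * m₁ = w at hk
            omega
          rcases Nat.mul_eq_zero.1 h0 with h | h
          · exact h
          · exact absurd h hA1
        subst hp
        rcases ha1 with ha | ha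
        · -- a = 1 : b = 0, form (iii)
          subst ha
          have hbz : b = 0 := by
            have hk := (key n₂ m₂ hα2).1
            have h0 : b * (0*n₂+1*m₂+c) = 0 := by
              generalize b * (0*n₂+1*m₂+c) = t at hk ⊢
              generalize b * m₂ = w at hk
              omega
            rcases Nat.mul_eq_zero.1 h0 with h | h
            · exact h
            · exact absurd h hB2
          subst hbz
          refine ⟨α, fun z => T z, Or.inl rfl, Or.inr (Or.inr (Or.inl ⟨g, c, ?_⟩))⟩
          exact buildT 1 0 g 0 1 c α T hmono (fun n _ => n+g) (fun _ m => m+c)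
            (fun n m _ => ⟨by ring, by ring⟩)
        · -- a = 0 : form (i) with r = b, c' = c
          subst ha
          refine ⟨α, fun z => T z, Or.inl rfl, Or.inl ⟨b, c, ?_⟩⟩
          exact buildT 0 b g 0 1 c α T hmono (fun _ m => b*(m+c)) (fun _ m => m+c)
            (fun n m hα => by
              have hk := (key n m hα).1
              have hex : b*(0*n+1*m+c) = b*m + b*c := by ring
              rw [hex] at hk
              constructor
              · show 0*n+b*m+g = b*(m+c)
                have hex2 : b*(m+c) = b*m + b*c := by ring
                rw [hex2]
                generalize b*m = s at hk ⊢
                generalize b*c = t at hk ⊢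
                omega
              · ring)
      · -- q = 0
        subst hq
        rcases ha1 with ha | ha
        · -- a = 1 : b = 0, swapped form (i) with r = p, c' = g
          subst ha
          have hbz : b = 0 := by
            have hk := (key n₂ m₂ hα2).1
            have h0 : b * (p*n₂+0*m₂+c) = 0 := by
              generalize b * (p*n₂+0*m₂+c) = t at hk ⊢
              generalize b * m₂ = w at hk
              omega
            rcases Nat.mul_eq_zero.1 h0 with h | h
            · exact h
            · exact absurd h hB2
          subst hbz
          refine ⟨fun n m => α m n, _, Or.inr rfl, Or.inl ⟨p, g, ?_⟩⟩
          exact buildS 1 0 g p 0 c α T hmono (fun _ m => p*(m+g)) (fun _ m => m+g)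
            (fun n m hα => by
              have hk := (key m n hα).2
              constructor
              · rw [← hk]; ring
              · ring)
        · -- a = 0 : b = 1, p = 1, form (i) with r = 1, c' = g
          subst ha
          have hk1 := (key n₁ m₁ hα1).1
          have hk2 := (key n₁ m₁ hα1).2
          have hB1ne : p*n₁+0*m₁+c ≠ 0 := by
            intro h
            apply hA1
            rw [← hk1, h]
            ring
          have hpb : p * b = 1 := by
            have h3 : p*b*(p*n₁+0*m₁+c) = 1*(p*n₁+0*m₁+c) := by
              calc p*b*(p*n₁+0*m₁+c) = p*(0*(0*n₁+b*m₁+g) + b*(p*n₁+0*m₁+c)) := by ring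
                _ = p*(0*n₁+b*m₁+g) := by rw [hk1]
                _ = p*(0*n₁+b*m₁+g) + 0*(p*n₁+0*m₁+c) := by ring
                _ = p*n₁+0*m₁+c := hk2
                _ = 1*(p*n₁+0*m₁+c) := by ring
            exact Nat.eq_of_mul_eq_mul_right (Nat.pos_of_ne_zero hB1ne) h3
          have hpe : p = 1 := Nat.eq_one_of_mul_eq_one_right hpb
          have hbe : b = 1 := Nat.eq_one_of_mul_eq_one_left hpb
          subst hpe
          subst hbe
          refine ⟨α, fun z => T z, Or.inl rfl, Or.inl ⟨1, g, ?_⟩⟩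
          exact buildT 0 1 g 1 0 c α T hmono (fun _ m => 1*(m+g)) (fun _ m => m+g)
            (fun n m hα => by
              have hk := (key n m hα).1
              constructor
              · ring
              · show 1*n+0*m+c = m+g
                omega)
end

section
/- Let F be a field. For any natural numbers r, c, γ, each of the following F-linear operators on the polynomial algebra F[x,y], defined on the monomial basis, is an averaging operator: (1) T₁ with T₁(x^n y^m) = x^{r·(m+c)} y^{m+c}; (2) T₂ with T₂(x^n y^m) = y^{r·n + m + c}; (3) T₃ with T₃(x^n y^m) = x^{n+γ} y^{m+c}. -/
open MvPolynomial

private noncomputable def Tgen {F : Type*} [Field F] (g : MvPolynomial (Fin 2) F)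
    (φ : MvPolynomial (Fin 2) F →ₐ[F] MvPolynomial (Fin 2) F) :
    MvPolynomial (Fin 2) F →ₗ[F] MvPolynomial (Fin 2) F :=
  (LinearMap.mulLeft F g).comp φ.toLinearMap

private lemma Tgen_apply {F : Type*} [Field F] (g : MvPolynomial (Fin 2) F)
    (φ : MvPolynomial (Fin 2) F →ₐ[F] MvPolynomial (Fin 2) F)
    (u : MvPolynomial (Fin 2) F) : Tgen g φ u = g * φ u := rfl

private lemma Tgen_avg {F : Type*} [Field F] (g : MvPolynomial (Fin 2) F)
    (φ : MvPolynomial (Fin 2) F →ₐ[F] MvPolynomial (Fin 2) F)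
    (hg : φ g = g) (hφ : ∀ p, φ (φ p) = φ p) (u v : MvPolynomial (Fin 2) F) :
    Tgen g φ u * Tgen g φ v = Tgen g φ (Tgen g φ u * v) ∧
    Tgen g φ u * Tgen g φ v = Tgen g φ (u * Tgen g φ v) := by
  constructor <;> simp only [Tgen_apply, map_mul, hg, hφ] <;> ring

/-- For any `r, c, γ ∈ ℕ`, each of the three monomial operators
`T₁(xⁿyᵐ) = x^{r(m+c)} y^{m+c}`, `T₂(xⁿyᵐ) = y^{rn+m+c}`,
`T₃(xⁿyᵐ) = x^{n+γ} y^{m+c}` (defined `F`-linearly on the monomial basis)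
is an averaging operator on `F[x,y]`. -/
theorem monomial_averaging_examples {F : Type*} [Field F] (r c γ : ℕ) :
    (∃ T₁ : MvPolynomial (Fin 2) F →ₗ[F] MvPolynomial (Fin 2) F,
      (∀ n m : ℕ, T₁ (X 0 ^ n * X 1 ^ m) = X 0 ^ (r * (m + c)) * X 1 ^ (m + c)) ∧
      (∀ u v : MvPolynomial (Fin 2) F,
        T₁ u * T₁ v = T₁ (T₁ u * v) ∧ T₁ u * T₁ v = T₁ (u * T₁ v))) ∧
    (∃ T₂ : MvPolynomial (Fin 2) F →ₗ[F] MvPolynomial (Fin 2) F,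
      (∀ n m : ℕ, T₂ (X 0 ^ n * X 1 ^ m) = (X 1 ^ (r * n + m + c) : MvPolynomial (Fin 2) F)) ∧
      (∀ u v : MvPolynomial (Fin 2) F,
        T₂ u * T₂ v = T₂ (T₂ u * v) ∧ T₂ u * T₂ v = T₂ (u * T₂ v))) ∧
    (∃ T₃ : MvPolynomial (Fin 2) F →ₗ[F] MvPolynomial (Fin 2) F,
      (∀ n m : ℕ, T₃ (X 0 ^ n * X 1 ^ m) = X 0 ^ (n + γ) * X 1 ^ (m + c)) ∧
      (∀ u v : MvPolynomial (Fin 2) F,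
        T₃ u * T₃ v = T₃ (T₃ u * v) ∧ T₃ u * T₃ v = T₃ (u * T₃ v))) := by
  refine ⟨?_, ?_, ?_⟩
  · -- T₁
    set φ : MvPolynomial (Fin 2) F →ₐ[F] MvPolynomial (Fin 2) F :=
      aeval ![1, X 0 ^ r * X 1] with hφdef
    have hφX0 : φ (X 0) = 1 := by simp [hφdef]
    have hφX1 : φ (X 1) = X 0 ^ r * X 1 := by simp [hφdef]
    have hidem : ∀ p, φ (φ p) = φ p := by
      intro p
      have : φ.comp φ = φ := by
        apply MvPolynomial.algHom_ext
        intro i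
        fin_cases i <;> simp [hφX0, hφX1, map_mul, map_pow]
      exact DFunLike.congr_fun this p
    have hg : φ ((X 0 ^ r * X 1 : MvPolynomial (Fin 2) F) ^ c)
        = (X 0 ^ r * X 1) ^ c := by
      simp [map_pow, map_mul, hφX0, hφX1]
    refine ⟨Tgen ((X 0 ^ r * X 1) ^ c) φ, ?_, fun u v => Tgen_avg _ _ hg hidem u v⟩
    intro n m
    simp only [Tgen_apply, map_mul, map_pow, hφX0, hφX1]
    rw [mul_pow, one_pow, one_mul, mul_pow, ← pow_mul, ← pow_mul,
      mul_mul_mul_comm, ← pow_add, ← pow_add,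
      show r * c + r * m = r * (m + c) by ring, show c + m = m + c by ring]
  · -- T₂
    set φ : MvPolynomial (Fin 2) F →ₐ[F] MvPolynomial (Fin 2) F :=
      aeval ![X 1 ^ r, X 1] with hφdef
    have hφX0 : φ (X 0) = X 1 ^ r := by simp [hφdef]
    have hφX1 : φ (X 1) = X 1 := by simp [hφdef]
    have hidem : ∀ p, φ (φ p) = φ p := by
      intro p
      have : φ.comp φ = φ := by
        apply MvPolynomial.algHom_ext
        intro i
        fin_cases i <;> simp [hφX0, hφX1, map_pow]
      exact DFunLike.congr_fun this p
    have hg : φ ((X 1 : MvPolynomial (Fin 2) F) ^ c) = X 1 ^ c := by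
      simp [map_pow, hφX1]
    refine ⟨Tgen (X 1 ^ c) φ, ?_, fun u v => Tgen_avg _ _ hg hidem u v⟩
    intro n m
    simp only [Tgen_apply, map_mul, map_pow, hφX0, hφX1]
    rw [← pow_mul, ← pow_add, ← pow_add, show c + (r * n + m) = r * n + m + c by ring]
  · -- T₃
    refine ⟨Tgen (X 0 ^ γ * X 1 ^ c) (AlgHom.id F _), ?_,
      fun u v => Tgen_avg _ _ rfl (fun p => rfl) u v⟩
    intro n m
    simp only [Tgen_apply, AlgHom.coe_id, id_eq]
    rw [pow_add, pow_add]
    ring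
end

section
/- Let F be a field, let p_x > 0 and p_y ≥ 0 be natural numbers, and let T be an averaging operator on F[x,y] with T(x^n y^m) = α_{n,m} · x^{n+p_x} y^{m+p_y} for all n, m ≥ 0, where α_{n,m} ∈ F. Fix i ∈ ℕ such that α_{s,i} ≠ 0 for some s. Then there exist natural numbers k and Δ with Δ > k such that: α_{k,i} ≠ 0; every s with α_{s,i} ≠ 0 has the form s = k + Δ·t for some t ≥ 0; and the set {t ∈ ℕ : α_{k+Δ·t, i} ≠ 0} is downward closed (if α_{k+Δ·t, i} ≠ 0 and t' ≤ t then α_{k+Δ·t', i} ≠ 0). -/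
open MvPolynomial

/-- For an averaging operator `T(xⁿyᵐ) = α_{n,m} x^{n+pₓ} y^{m+p_y}` (`pₓ > 0`) and a
fixed `i` with some `α_{s,i} ≠ 0`, the set of `s` with `α_{s,i} ≠ 0` lies in an
arithmetic progression `k + Δ ℕ` with `Δ > k`, `α_{k,i} ≠ 0`, and the set of
progression-indices with nonzero coefficient is downward closed. -/
theorem averaging_column_structure {F : Type*} [Field F]
    (px py : ℕ) (hpx : 0 < px) (α : ℕ → ℕ → F)
    (T : MvPolynomial (Fin 2) F →ₗ[F] MvPolynomial (Fin 2) F)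
    (hav : ∀ u v : MvPolynomial (Fin 2) F,
      T u * T v = T (T u * v) ∧ T u * T v = T (u * T v))
    (hmono : ∀ n m : ℕ,
      T (X 0 ^ n * X 1 ^ m) = α n m • (X 0 ^ (n + px) * X 1 ^ (m + py)))
    (i : ℕ) (hi : ∃ s : ℕ, α s i ≠ 0) :
    ∃ k Δ : ℕ, k < Δ ∧ α k i ≠ 0 ∧
      (∀ s : ℕ, α s i ≠ 0 → ∃ t : ℕ, s = k + Δ * t) ∧
      (∀ t t' : ℕ, α (k + Δ * t) i ≠ 0 → t' ≤ t → α (k + Δ * t') i ≠ 0) := by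
  classical
  have hXne : ∀ a b : ℕ, (X 0 ^ a * X 1 ^ b : MvPolynomial (Fin 2) F) ≠ 0 :=
    fun a b => mul_ne_zero (pow_ne_zero _ (X_ne_zero _)) (pow_ne_zero _ (X_ne_zero _))
  -- key shift invariance
  have key : ∀ s, α s i ≠ 0 → ∀ c d, α c d = α (s + px + c) (i + py + d) := by
    intro s hs c d
    have h := (hav (X 0 ^ s * X 1 ^ i) (X 0 ^ c * X 1 ^ d)).1
    rw [hmono s i, hmono c d] at h
    have e1 : (α s i • (X 0 ^ (s + px) * X 1 ^ (i + py))) *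
        (α c d • (X 0 ^ (c + px) * X 1 ^ (d + py)))
        = (α s i * α c d) •
          (X 0 ^ (s + px + c + px) * X 1 ^ (i + py + d + py) : MvPolynomial (Fin 2) F) := by
      rw [smul_mul_smul_comm]
      congr 1
      ring
    have e2 : T ((α s i • (X 0 ^ (s + px) * X 1 ^ (i + py))) * (X 0 ^ c * X 1 ^ d))
        = (α s i * α (s + px + c) (i + py + d)) •
          (X 0 ^ (s + px + c + px) * X 1 ^ (i + py + d + py)) := by
      rw [smul_mul_assoc, map_smul,
        show (X 0 ^ (s + px) * X 1 ^ (i + py)) * (X 0 ^ c * X 1 ^ d)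
          = (X 0 ^ (s + px + c) * X 1 ^ (i + py + d) : MvPolynomial (Fin 2) F) from by ring,
        hmono, smul_smul]
    rw [e1, e2] at h
    have h4 : (α s i * α c d - α s i * α (s + px + c) (i + py + d)) •
        (X 0 ^ (s + px + c + px) * X 1 ^ (i + py + d + py) : MvPolynomial (Fin 2) F) = 0 := by
      rw [sub_smul, h, sub_self]
    rcases smul_eq_zero.mp h4 with h5 | h5
    · exact mul_left_cancel₀ hs (sub_eq_zero.mp h5)
    · exact absurd h5 (hXne _ _)
  -- periodicity of the row
  have per : ∀ s s', α s i ≠ 0 → α s' i ≠ 0 → s ≤ s' →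
      ∀ c, α c i = α (c + (s' - s)) i := by
    intro s s' hs hs' hle c
    have h1 := key s' hs' c i
    have h2 := key s hs (c + (s' - s)) i
    rw [show s + px + (c + (s' - s)) = s' + px + c from by omega] at h2
    exact h1.trans h2.symm
  have perN : ∀ p, (∀ c, α c i = α (c + p) i) → ∀ c t, α c i = α (c + p * t) i := by
    intro p hp c t
    induction t with
    | zero => simp
    | succ n ih =>
        rw [ih, hp (c + p * n), show c + p * n + p = c + p * (n + 1) from by ring]
  have k_spec : α (Nat.find hi) i ≠ 0 := Nat.find_spec hi
  set k := Nat.find hi with hkdef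
  by_cases hP : ∃ p, 0 < p ∧ ∀ c, α c i = α (c + p) i
  · set Δ := Nat.find hP with hΔdef
    obtain ⟨hΔpos, hΔper⟩ := Nat.find_spec hP
    have hkΔ : k < Δ := by
      by_contra hcon
      push_neg at hcon
      have h1 := hΔper (k - Δ)
      rw [show k - Δ + Δ = k from by omega] at h1
      exact Nat.find_min hi (show k - Δ < k from by omega) (h1.symm ▸ k_spec)
    refine ⟨k, Δ, hkΔ, k_spec, ?_, ?_⟩
    · intro s hs
      have hks : k ≤ s := Nat.find_min' hi hs
      set r := (s - k) % Δ with hr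
      set q := (s - k) / Δ with hq
      have hmd : r + Δ * q = s - k := Nat.mod_add_div (s - k) Δ
      have hrk : α (k + r) i ≠ 0 := by
        have h1 := perN Δ hΔper (k + r) q
        rw [show k + r + Δ * q = s from by omega] at h1
        exact h1 ▸ hs
      rcases Nat.eq_zero_or_pos r with h0 | hpos
      · exact ⟨q, by omega⟩
      · exfalso
        have hper' : ∀ c, α c i = α (c + r) i := by
          intro c
          have := per k (k + r) k_spec hrk (by omega) c
          rwa [show k + r - k = r from by omega] at this
        exact Nat.find_min hP (show r < Δ from Nat.mod_lt _ hΔpos) ⟨hpos, hper'⟩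
    · intro t t' hnz hle
      have h1 := perN Δ hΔper (k + Δ * t') (t - t')
      rw [show k + Δ * t' + Δ * (t - t') = k + Δ * t from by
        rw [add_assoc, ← Nat.mul_add, Nat.add_sub_cancel' hle]] at h1
      exact h1 ▸ hnz
  · -- no period: the only nonzero entry in the row is at k
    have huniq : ∀ s, α s i ≠ 0 → s = k := by
      intro s hs
      by_contra hne
      have hks : k ≤ s := Nat.find_min' hi hs
      exact hP ⟨s - k, by omega, per k s k_spec hs hks⟩
    refine ⟨k, k + 1, by omega, k_spec, ?_, ?_⟩
    · intro s hs
      exact ⟨0, by rw [huniq s hs]; ring⟩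
    · intro t t' hnz hle
      have := huniq _ hnz
      have h0 : (k + 1) * t = 0 := by omega
      have ht : t = 0 := by
        rcases Nat.mul_eq_zero.mp h0 with h | h
        · omega
        · exact h
      have ht' : t' = 0 := by omega
      rw [ht'] at *
      rw [ht] at hnz
      exact hnz
end

section
/- Let F be a field of characteristic zero and let R be a Rota–Baxter operator of weight zero on the polynomial algebra F[x,y] such that R(x^n y^m) = α_{n,m} · y^m for all n, m ≥ 0, where α_{n,m} ∈ F. Then R = 0. -/
open MvPolynomial

/-- A Rota–Baxter operator of weight zero on `F[x,y]` of the form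
`R(xⁿyᵐ) = α_{n,m} yᵐ` is zero. -/
theorem rb_weight_zero_case_ii_trivial {F : Type*} [Field F] [CharZero F]
    (α : ℕ → ℕ → F)
    (R : MvPolynomial (Fin 2) F →ₗ[F] MvPolynomial (Fin 2) F)
    (hRB : ∀ u v : MvPolynomial (Fin 2) F, R u * R v = R (R u * v + u * R v))
    (hmono : ∀ n m : ℕ,
      R (X 0 ^ n * X 1 ^ m) = α n m • (X 1 ^ m : MvPolynomial (Fin 2) F)) :
    R = 0 := by
  have key : ∀ n m p q : ℕ,
      α n m * α p q = α n m * α p (m + q) + α p q * α n (m + q) := by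
    intro n m p q
    have h := hRB (X 0 ^ n * X 1 ^ m) (X 0 ^ p * X 1 ^ q)
    rw [hmono, hmono] at h
    have e1 : (α n m • (X 1 : MvPolynomial (Fin 2) F) ^ m) * (X 0 ^ p * X 1 ^ q)
        = α n m • (X 0 ^ p * X 1 ^ (m + q)) := by
      rw [smul_mul_assoc]; congr 1; ring
    have e2 : (X 0 ^ n * X 1 ^ m) * (α p q • (X 1 : MvPolynomial (Fin 2) F) ^ q)
        = α p q • (X 0 ^ n * X 1 ^ (m + q)) := by
      rw [mul_smul_comm]; congr 1; ring
    have e3 : (α n m • (X 1 : MvPolynomial (Fin 2) F) ^ m) * (α p q • X 1 ^ q)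
        = (α n m * α p q) • X 1 ^ (m + q) := by
      rw [smul_mul_smul_comm]; congr 1; ring
    rw [e1, e2, e3, map_add, map_smul, map_smul, hmono, hmono] at h
    have h2 := congrArg (coeff (Finsupp.single 1 (m + q))) h
    simpa [coeff_X_pow, mul_assoc] using h2
  have h0 : ∀ n, α n 0 = 0 := by
    intro n
    have h := key n 0 n 0
    simp only [Nat.add_zero] at h
    have : α n 0 * α n 0 = 0 := by linear_combination -h
    exact mul_self_eq_zero.mp this
  have hall : ∀ n m, α n m = 0 := by
    intro n m
    have h := key n m n 0
    rw [h0 n] at h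
    simp only [mul_zero, zero_mul, add_zero, zero_add, Nat.add_zero] at h
    exact mul_self_eq_zero.mp h.symm
  apply LinearMap.ext
  intro p
  have hmon : ∀ (s : Fin 2 →₀ ℕ) (c : F), R (monomial s c) = 0 := by
    intro s c
    have hsum : (Finsupp.single (0 : Fin 2) (s 0) + Finsupp.single 1 (s 1)) = s := by
      ext i
      fin_cases i <;> simp [Finsupp.single_apply]
    have hs : (monomial s (1 : F)) = X 0 ^ s 0 * X 1 ^ s 1 := by
      rw [X_pow_eq_monomial, X_pow_eq_monomial, monomial_mul, mul_one, hsum]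
    have hc : (monomial s c) = c • (monomial s (1 : F)) := by
      rw [smul_monomial, smul_eq_mul, mul_one]
    rw [hc, map_smul, hs, hmono, hall, zero_smul, smul_zero]
  have hp : p = ∑ s ∈ p.support, monomial s (coeff s p) := p.as_sum
  rw [hp, map_sum]
  simp [hmon]
end

section
/- Let F be a field of characteristic zero, let r, c ∈ ℕ with r + c > 0, and let R be a Rota–Baxter operator of weight zero on F[x,y] with R(x^n y^m) = α_{n,m} · y^{m + r·n + c} for all n, m ≥ 0, where α_{n,m} ∈ F. Then there exist a set I ⊆ ℕ, a natural number Δ ≥ 1, and natural numbers k_i for i ∈ I such that for each i ∈ I: α_{i, k_i} ≠ 0, k_i < Δ ≤ k_i + r·i + c, and Δ ∣ k_i + r·i + c; and for all l, t ≥ 0: α_{l,t} = ((k_l + r·l + c)·α_{l, k_l})/(k_l + r·l + c + Δ·s) whenever l ∈ I and t = k_l + Δ·s for some s ≥ 0, and α_{l,t} = 0 otherwise (natural numbers cast into F). -/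
open MvPolynomial


lemma mul_mem_of_addclosed {T : Set ℕ} (hadd : ∀ a ∈ T, ∀ b ∈ T, a + b ∈ T)
    {a x : ℕ} (hx : 1 ≤ x) (ha : a ∈ T) : x * a ∈ T := by
  induction x, hx using Nat.le_induction with
  | base => simpa using ha
  | succ n hn ih => have := hadd _ ih _ ha; simpa [Nat.succ_mul] using this

lemma mul_mem_of_addclosed' {T : Set ℕ} (hadd : ∀ a ∈ T, ∀ b ∈ T, a + b ∈ T)
    {a : ℕ} (x : ℕ) (ha : a ∈ T ∨ a = 0) : x * a ∈ T ∨ x * a = 0 := by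
  rcases ha with ha | rfl
  · rcases Nat.eq_zero_or_pos x with rfl | hx
    · right; simp
    · left; exact mul_mem_of_addclosed hadd hx ha
  · right; simp

lemma semigroup_gcd (T : Set ℕ) (hadd : ∀ a ∈ T, ∀ b ∈ T, a + b ∈ T)
    (e : ℕ) (he : e ∈ T) (he0 : 0 < e) :
    ∃ Δ, 0 < Δ ∧ (∀ t ∈ T, Δ ∣ t) ∧ ∃ N, ∀ s, N ≤ s → Δ * s ∈ T := by
  classical
  set Tz : Set ℤ := (fun n : ℕ => (n : ℤ)) '' T with hTz
  have hdiff : ∀ z ∈ Ideal.span Tz, ∃ a b : ℕ,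
      (a ∈ T ∨ a = 0) ∧ (b ∈ T ∨ b = 0) ∧ z = (a : ℤ) - b := by
    intro z hz
    induction hz using Submodule.span_induction with
    | mem x hx =>
        obtain ⟨a, ha, rfl⟩ := hx
        exact ⟨a, 0, Or.inl ha, Or.inr rfl, by simp⟩
    | zero => exact ⟨0, 0, Or.inr rfl, Or.inr rfl, by simp⟩
    | add x y hx hy ihx ihy =>
        obtain ⟨a1, b1, ha1, hb1, rfl⟩ := ihx
        obtain ⟨a2, b2, ha2, hb2, rfl⟩ := ihy
        refine ⟨a1 + a2, b1 + b2, ?_, ?_, by push_cast; ring⟩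
        · rcases ha1 with h1 | rfl
          · rcases ha2 with h2 | rfl
            · exact Or.inl (hadd _ h1 _ h2)
            · simpa using Or.inl h1
          · simpa using ha2
        · rcases hb1 with h1 | rfl
          · rcases hb2 with h2 | rfl
            · exact Or.inl (hadd _ h1 _ h2)
            · simpa using Or.inl h1
          · simpa using hb2
    | smul c x hx ih =>
        obtain ⟨a, b, ha, hb, rfl⟩ := ih
        rcases le_or_gt 0 c with hc | hc
        · lift c to ℕ using hc
          refine ⟨c * a, c * b, mul_mem_of_addclosed' hadd c ha,
            mul_mem_of_addclosed' hadd c hb, by push_cast [smul_eq_mul]; ring⟩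
        · obtain ⟨n, rfl⟩ : ∃ n : ℕ, c = -(n : ℤ) := ⟨c.natAbs, by omega⟩
          refine ⟨n * b, n * a, mul_mem_of_addclosed' hadd n hb,
            mul_mem_of_addclosed' hadd n ha, by push_cast [smul_eq_mul]; ring⟩
  obtain ⟨g, hg⟩ := (IsPrincipalIdealRing.principal (Ideal.span Tz)).principal
  have hmemT : ∀ t ∈ T, (t : ℤ) ∈ Ideal.span Tz := fun t ht =>
    Ideal.subset_span ⟨t, ht, rfl⟩
  have hgdvd : ∀ t ∈ T, g.natAbs ∣ t := by
    intro t ht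
    have hmem : (t : ℤ) ∈ Submodule.span ℤ ({g} : Set ℤ) := by rw [← hg]; exact hmemT t ht
    obtain ⟨z, hz⟩ := Submodule.mem_span_singleton.mp hmem
    have : g ∣ (t : ℤ) := ⟨z, by rw [← hz]; rw [smul_eq_mul]; ring⟩
    exact Int.ofNat_dvd.mp (Int.natAbs_dvd.mpr this)
  set Δ := g.natAbs with hΔ
  have hΔ0 : 0 < Δ := by
    rcases Nat.eq_zero_or_pos Δ with h0 | h; swap
    · exact h
    · exfalso
      have := hgdvd e he
      rw [h0] at this
      omega
  refine ⟨Δ, hΔ0, hgdvd, ?_⟩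
  have hgmem : g ∈ Ideal.span Tz := by
    rw [hg]; exact Submodule.mem_span_singleton_self g
  obtain ⟨a, b, ha, hb, hab⟩ := hdiff g hgmem
  -- get a', b' with a' = b' + Δ
  have key : ∃ a' b' : ℕ, (a' ∈ T ∨ a' = 0) ∧ (b' ∈ T ∨ b' = 0) ∧ a' = b' + Δ := by
    rcases Int.natAbs_eq g with h | h
    · exact ⟨a, b, ha, hb, by omega⟩
    · exact ⟨b, a, hb, ha, by omega⟩
  obtain ⟨a', b', ha', hb', heq⟩ := key
  have hbz : b' = 0 ∨ (b' ∈ T ∧ 0 < b') := by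
    rcases hb' with h | h
    · rcases Nat.eq_zero_or_pos b' with h0 | h0
      · exact Or.inl h0
      · exact Or.inr ⟨h, h0⟩
    · exact Or.inl h
  rcases hbz with rfl | ⟨hbT, hb0⟩
  · -- Δ = a' ∈ T
    have haT : a' ∈ T := by
      rcases ha' with h | h
      · exact h
      · omega
    have hΔT : Δ ∈ T := by have h2 : a' = Δ := by omega
                           rwa [h2] at haT
    refine ⟨1, fun s hs => ?_⟩
    have := mul_mem_of_addclosed hadd hs hΔT
    simpa [Nat.mul_comm] using this
  · have haT : a' ∈ T := by
      rcases ha' with h | h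
      · exact h
      · omega
    obtain ⟨w, hw⟩ := hgdvd b' hbT
    have hw0 : 1 ≤ w := by
      rcases Nat.eq_zero_or_pos w with rfl | h
      · omega
      · exact h
    refine ⟨w * (w + 1), fun s hs => ?_⟩
    set y := s % w with hy
    have hylt : y < w := Nat.mod_lt _ (by omega)
    have hdm : w * (s / w) + y = s := Nat.div_add_mod s w
    have hdivge : w + 1 ≤ s / w := by
      rw [Nat.le_div_iff_mul_le (by omega)]
      calc (w + 1) * w = w * (w + 1) := by ring
        _ ≤ s := hs
    set x := s / w - y with hx
    have hxy : x + y = s / w := by omega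
    have hx1 : 1 ≤ x := by omega
    have hsum : x * w + y * (w + 1) = s := by
      have h2 : (x + y) * w + y = s := by rw [hxy, Nat.mul_comm]; omega
      calc x * w + y * (w + 1) = (x + y) * w + y := by ring
        _ = s := h2
    have hmain : Δ * s = x * b' + y * a' := by
      rw [heq, hw]
      calc Δ * s = Δ * (x * w + y * (w + 1)) := by rw [hsum]
        _ = x * (Δ * w) + y * (Δ * w + Δ) := by ring
    rw [hmain]
    have hxb : x * b' ∈ T := mul_mem_of_addclosed hadd hx1 hbT
    rcases Nat.eq_zero_or_pos y with hy0 | hy0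
    · simpa [hy0] using hxb
    · exact hadd _ hxb _ (mul_mem_of_addclosed hadd hy0 haT)

lemma row_structure {F : Type*} [Field F] [CharZero F] (r c : ℕ) (α : ℕ → ℕ → F)
    (hE : ∀ n m l t : ℕ, α n m * α l t
      = α n m * α l (t + (m + r * n + c)) + α l t * α n (m + (t + r * l + c)))
    (n : ℕ) (hn : ∃ m, α n m ≠ 0) :
    ∃ k Δ : ℕ, 0 < Δ ∧ α n k ≠ 0 ∧ k < Δ ∧ Δ ∣ (k + r * n + c) ∧ Δ ≤ k + r * n + c ∧
      (∀ t, α n t ≠ 0 ↔ ∃ s, t = k + Δ * s) ∧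
      (∀ s, α n (k + Δ * s)
        = ((k : F) + r * n + c) * α n k / ((k : F) + r * n + c + Δ * s)) := by
  classical
  set D := r * n + c with hD
  have RowEq : ∀ m t, α n m * α n t = (α n m + α n t) * α n (m + t + D) := by
    intro m t
    have h := hE n m n t
    have i1 : t + (m + r * n + c) = m + t + D := by omega
    have i2 : m + (t + r * n + c) = m + t + D := by omega
    rw [i1, i2] at h
    rw [h]; ring
  have hA : ∀ m t, α n m ≠ 0 → α n t ≠ 0 → α n (m + t + D) ≠ 0 := by
    intro m t hm ht hz
    have := RowEq m t
    rw [hz, mul_zero] at this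
    exact hm (by rcases mul_eq_zero.mp this with h | h; exacts [h, absurd h ht])
  have hB : ∀ m t, α n m ≠ 0 → α n t = 0 → α n (m + t + D) = 0 := by
    intro m t hm ht
    have h := RowEq m t
    rw [ht, mul_zero, add_zero] at h
    rcases mul_eq_zero.mp h.symm with h' | h'
    · exact absurd h' hm
    · exact h'
  have hAinv : ∀ m t, α n m ≠ 0 → α n t ≠ 0 →
      (α n (m + t + D))⁻¹ = (α n m)⁻¹ + (α n t)⁻¹ := by
    intro m t hm ht
    have h := RowEq m t
    have hz := hA m t hm ht
    have hsum : α n m + α n t ≠ 0 := by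
      intro h0; rw [h0, zero_mul] at h
      exact hm (by rcases mul_eq_zero.mp h with h' | h'; exacts [h', absurd h' ht])
    field_simp
    rw [mul_comm] at h
    linear_combination h
  -- least element of support
  have hk0 : α n (Nat.find hn) ≠ 0 := Nat.find_spec hn
  set k := Nat.find hn with hkdef
  have hmin : ∀ t, t < k → α n t = 0 := by
    intro t ht
    by_contra h
    have : k ≤ t := Nat.find_le h
    omega
  set e := k + D with he
  have he0 : 0 < e := by
    rcases Nat.eq_zero_or_pos e with h0 | h
    · exfalso
      have hk00 : k = 0 ∧ D = 0 := by omega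
      have := RowEq k k
      rw [hk00.1, hk00.2] at this
      simp only [Nat.add_zero] at this
      have hne := hk0
      rw [hk00.1] at hne
      apply hne
      have h2 : α n 0 * α n 0 = (α n 0 + α n 0) * α n 0 := this
      have : α n 0 * α n 0 = 0 := by linear_combination -h2
      exact (mul_self_eq_zero).mp this
    · exact h
  set T : Set ℕ := {x | ∃ a, α n (k + a) ≠ 0 ∧ x = a + e} with hT
  have hTadd : ∀ x ∈ T, ∀ y ∈ T, x + y ∈ T := by
    rintro x ⟨a, ha, rfl⟩ y ⟨b, hb, rfl⟩
    refine ⟨a + b + e, ?_, by omega⟩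
    have := hA (k + a) (k + b) ha hb
    have idx : k + a + (k + b) + D = k + (a + b + e) := by omega
    rwa [idx] at this
  have heT : e ∈ T := ⟨0, by simpa using hk0, by omega⟩
  obtain ⟨Δ, hΔ0, hdvdT, N, hbigT⟩ := semigroup_gcd T hTadd e heT he0
  have hΔe : Δ ∣ e := hdvdT e heT
  obtain ⟨w, hew⟩ := hdvdT e heT
  have hw1 : 1 ≤ w := by
    rcases Nat.eq_zero_or_pos w with rfl | h
    · omega
    · exact h
  have supfwd : ∀ a, α n (k + a) ≠ 0 → Δ ∣ a := by
    intro a ha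
    have hmem : a + e ∈ T := ⟨a, ha, rfl⟩
    have h1 := hdvdT _ hmem
    have := Nat.dvd_sub h1 hΔe
    simpa using this
  have bigP : ∀ s, N ≤ s + w → α n (k + Δ * s) ≠ 0 := by
    intro s hs
    have hmem : Δ * (s + w) ∈ T := hbigT _ hs
    obtain ⟨a, ha, hax⟩ := hmem
    have : a = Δ * s := by
      have h1 : Δ * (s + w) = Δ * s + Δ * w := by ring
      omega
    rwa [← this]
  have supbwd : ∀ s, α n (k + Δ * s) ≠ 0 := by
    intro s
    by_contra h0
    have hm1 : α n (k + Δ * N) ≠ 0 := bigP N (by omega)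
    have := hB (k + Δ * N) (k + Δ * s) hm1 h0
    have idx : k + Δ * N + (k + Δ * s) + D = k + Δ * (N + s + w) := by
      have h1 : Δ * (N + s + w) = Δ * N + Δ * s + Δ * w := by ring
      omega
    rw [idx] at this
    exact bigP (N + s + w) (by omega) this
  have hklt : k < Δ := by
    by_contra hge
    push_neg at hge
    have ht0 : α n (k - Δ) = 0 := hmin _ (by omega)
    have := hB k (k - Δ) hk0 ht0
    obtain ⟨w', hw'⟩ : ∃ w', w = w' + 1 := ⟨w - 1, by omega⟩
    have idx : k + (k - Δ) + D = k + Δ * w' := by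
      have h1 : Δ * w = Δ * w' + Δ := by rw [hw']; ring
      omega
    rw [idx] at this
    exact supbwd w' this
  -- values
  obtain ⟨ι, hιdef⟩ : ∃ ι : ℕ → F, ∀ s, ι s = (α n (k + Δ * s))⁻¹ :=
    ⟨fun s => (α n (k + Δ * s))⁻¹, fun s => rfl⟩
  have hιne : ∀ s, ι s ≠ 0 := fun s => by rw [hιdef]; exact inv_ne_zero (supbwd s)
  have hrel : ∀ a b, ι (a + b + w) = ι a + ι b := by
    intro a b
    have h := hAinv (k + Δ * a) (k + Δ * b) (supbwd a) (supbwd b)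
    have idx : k + Δ * a + (k + Δ * b) + D = k + Δ * (a + b + w) := by
      have h1 : Δ * (a + b + w) = Δ * a + Δ * b + Δ * w := by ring
      omega
    rw [idx] at h
    rw [hιdef, hιdef, hιdef]
    exact h
  have h2 : ∀ a b, ι (a + b) + ι 0 = ι a + ι b := by
    intro a b
    have u := hrel a b
    have v := hrel (a + b) 0
    rw [Nat.add_zero] at v
    rw [v] at u
    exact u
  have h3 : ∀ a, ι a = ι 0 + (a : F) * (ι 1 - ι 0) := by
    intro a
    induction a with
    | zero => simp
    | succ a ih =>
        have hstep : ι (a + 1) = ι a + ι 1 - ι 0 := by linear_combination h2 a 1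
        push_cast
        rw [hstep, ih]; ring
  have h4 : ι w = ι 0 + ι 0 := by
    have := hrel 0 0
    simpa using this
  have hslope : (w : F) * (ι 1 - ι 0) = ι 0 := by
    have hw3 := h3 w
    rw [h4] at hw3
    linear_combination -hw3
  have hwF : (w : F) ≠ 0 := Nat.cast_ne_zero.mpr (by omega)
  have hΔF : (Δ : F) ≠ 0 := Nat.cast_ne_zero.mpr (by omega)
  have hval : ∀ s, α n (k + Δ * s)
      = ((k : F) + r * n + c) * α n k / ((k : F) + r * n + c + Δ * s) := by
    intro s
    have hιs : ι s = ι 0 * ((w : F) + s) / w := by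
      rw [h3 s]
      field_simp
      linear_combination (s : F) * hslope
    have hα : α n (k + Δ * s) = (ι s)⁻¹ := by rw [hιdef, inv_inv]
    have hα0 : α n k = (ι 0)⁻¹ := by rw [hιdef]; simp
    have hEe : ((k : F) + r * n + c) = (Δ : F) * w := by
      have : ((e : ℕ) : F) = ((Δ * w : ℕ) : F) := by rw [← hew]
      push_cast at this
      have he2 : ((e : ℕ) : F) = (k : F) + r * n + c := by
        rw [he, hD]; push_cast; ring
      rw [← he2]; push_cast [← hew]; exact_mod_cast this
    have hws : ((w : F) + s) ≠ 0 := by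
      have : ((w + s : ℕ) : F) ≠ 0 := Nat.cast_ne_zero.mpr (by omega)
      push_cast at this; exact this
    rw [hα, hα0, hιs, hEe, inv_div]
    have hι0 := hιne 0
    have hprod : ι 0 * ((w : F) + s) ≠ 0 := mul_ne_zero hι0 hws
    have hd2 : (Δ : F) * w + Δ * s ≠ 0 := by
      have hne := mul_ne_zero hΔF hws
      intro h0; apply hne; linear_combination h0
    rw [div_eq_div_iff hprod hd2]
    field_simp
  refine ⟨k, Δ, hΔ0, hk0, hklt, ?_, ?_, ?_, hval⟩
  · have : k + r * n + c = e := by omega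
    rw [this, hew]; exact ⟨w, rfl⟩
  · have h1 : k + r * n + c = e := by omega
    have h2 : Δ ≤ e := Nat.le_of_dvd he0 hΔe
    omega
  · intro t
    constructor
    · intro ht
      have hkt : k ≤ t := by
        by_contra h
        exact ht (hmin t (by omega))
      have ha : α n (k + (t - k)) ≠ 0 := by
        have : k + (t - k) = t := by omega
        rwa [this]
      obtain ⟨s, hs⟩ := supfwd _ ha
      exact ⟨s, by omega⟩
    · rintro ⟨s, rfl⟩
      exact supbwd s

lemma cross_dvd {F : Type*} [Field F] [CharZero F] (r c : ℕ) (α : ℕ → ℕ → F)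
    (hE : ∀ n m l t : ℕ, α n m * α l t
      = α n m * α l (t + (m + r * n + c)) + α l t * α n (m + (t + r * l + c)))
    (n l : ℕ) (k1 Δ1 k2 Δ2 : ℕ)
    (hΔ1 : 0 < Δ1) (hA : α n k1 ≠ 0) (hd1 : Δ1 ∣ (k1 + r * n + c))
    (hle1 : Δ1 ≤ k1 + r * n + c)
    (hsupp1 : ∀ t, α n t ≠ 0 ↔ ∃ s, t = k1 + Δ1 * s)
    (hval1 : ∀ s, α n (k1 + Δ1 * s)
      = ((k1 : F) + r * n + c) * α n k1 / ((k1 : F) + r * n + c + Δ1 * s))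
    (hΔ2 : 0 < Δ2) (hB : α l k2 ≠ 0) (hd2 : Δ2 ∣ (k2 + r * l + c))
    (hle2 : Δ2 ≤ k2 + r * l + c)
    (hsupp2 : ∀ t, α l t ≠ 0 ↔ ∃ s, t = k2 + Δ2 * s) :
    Δ2 ∣ Δ1 := by
  set e1 := k1 + r * n + c with he1
  set e2 := k2 + r * l + c with he2
  have he1pos : 0 < e1 := by omega
  have he2pos : 0 < e2 := by omega
  have hE1 : ((k1 : F) + r * n + c) = ((e1 : ℕ) : F) := by push_cast [he1]; ring
  -- Step A : Δ2 ∣ e1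
  have stepA : Δ2 ∣ e1 := by
    by_contra hnd
    have hz : α l (k2 + (k1 + r * n + c)) = 0 := by
      by_contra hnz
      obtain ⟨s, hs⟩ := (hsupp2 _).mp hnz
      exact hnd ⟨s, by omega⟩
    have heq := hE n k1 l k2
    rw [hz, mul_zero, zero_add] at heq
    have hne : α n (k1 + (k2 + r * l + c)) ≠ 0 := by
      intro h0
      rw [h0, mul_zero] at heq
      exact (mul_ne_zero hA hB) heq
    obtain ⟨s, hs⟩ := (hsupp1 _).mp hne
    have hAeq : α n k1 = α n (k1 + Δ1 * s) := by
      rw [← hs]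
      refine mul_left_cancel₀ hB ?_
      rw [mul_comm (α l k2) (α n k1)]; exact heq
    rw [hval1 s, hE1] at hAeq
    have hden : ((e1 : ℕ) : F) + (Δ1 : F) * s ≠ 0 := by
      have : ((e1 + Δ1 * s : ℕ) : F) ≠ 0 := Nat.cast_ne_zero.mpr (by omega)
      push_cast at this
      intro h0; apply this; linear_combination h0
    field_simp at hAeq
    have hzero : α n k1 * ((Δ1 : F) * s) = 0 := by linear_combination (α n k1) * hAeq
    have hs2 : Δ1 * s = e2 := by omega
    have hcast : ((Δ1 * s : ℕ) : F) ≠ 0 := Nat.cast_ne_zero.mpr (by omega)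
    push_cast at hcast
    exact hcast (by rcases mul_eq_zero.mp hzero with h | h; exacts [absurd h hA, h])
  -- Step B : Δ2 ∣ Δ1
  by_contra hnd
  have hz : α l (k2 + (k1 + Δ1 + r * n + c)) = 0 := by
    by_contra hnz
    obtain ⟨s, hs⟩ := (hsupp2 _).mp hnz
    have : Δ2 ∣ e1 + Δ1 := ⟨s, by omega⟩
    exact hnd ((Nat.dvd_add_right stepA).mp this)
  have heq := hE n (k1 + Δ1) l k2
  rw [hz, mul_zero, zero_add] at heq
  have hm1 : α n (k1 + Δ1) ≠ 0 := by
    have := (hsupp1 (k1 + Δ1 * 1)).mpr ⟨1, rfl⟩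
    simpa using this
  have hne : α n (k1 + Δ1 + (k2 + r * l + c)) ≠ 0 := by
    intro h0
    rw [h0, mul_zero] at heq
    exact (mul_ne_zero hm1 hB) heq
  obtain ⟨s2, hs2⟩ := (hsupp1 _).mp hne
  have hAeq : α n (k1 + Δ1 * 1) = α n (k1 + Δ1 * s2) := by
    have h1 : k1 + Δ1 * 1 = k1 + Δ1 := by ring
    rw [h1, ← hs2]
    refine mul_left_cancel₀ hB ?_
    rw [mul_comm (α l k2) (α n (k1 + Δ1))]; exact heq
  rw [hval1 1, hval1 s2, hE1] at hAeq
  have hden1 : ((e1 : ℕ) : F) + (Δ1 : F) * (1 : ℕ) ≠ 0 := by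
    have : ((e1 + Δ1 * 1 : ℕ) : F) ≠ 0 := Nat.cast_ne_zero.mpr (by omega)
    push_cast at this ⊢
    intro h0; apply this; linear_combination h0
  have hden2 : ((e1 : ℕ) : F) + (Δ1 : F) * s2 ≠ 0 := by
    have : ((e1 + Δ1 * s2 : ℕ) : F) ≠ 0 := Nat.cast_ne_zero.mpr (by omega)
    push_cast at this
    intro h0; apply this; linear_combination h0
  have hnum : ((e1 : ℕ) : F) * α n k1 ≠ 0 :=
    mul_ne_zero (Nat.cast_ne_zero.mpr (by omega)) hA
  push_cast at hAeq hden1 hden2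
  rw [div_eq_div_iff hden1 hden2] at hAeq
  have hdeneq : ((e1 : ℕ) : F) + (Δ1 : F) * s2 = ((e1 : ℕ) : F) + (Δ1 : F) * 1 := by
    refine mul_left_cancel₀ hnum ?_
    push_cast
    linear_combination hAeq
  have hcast : ((Δ1 * s2 : ℕ) : F) = ((Δ1 * 1 : ℕ) : F) := by
    push_cast
    linear_combination hdeneq
  have hnat : Δ1 * s2 = Δ1 * 1 := Nat.cast_inj.mp hcast
  have : Δ1 + e2 = Δ1 * s2 := by omega
  omega

lemma classification_of_key {F : Type*} [Field F] [CharZero F] (r c : ℕ) (α : ℕ → ℕ → F)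
    (hE : ∀ n m l t : ℕ, α n m * α l t
      = α n m * α l (t + (m + r * n + c)) + α l t * α n (m + (t + r * l + c))) :
    ∃ (I : Set ℕ) (Δ : ℕ) (k : ℕ → ℕ), 1 ≤ Δ ∧
      (∀ i ∈ I, α i (k i) ≠ 0 ∧ k i < Δ ∧ Δ ≤ k i + r * i + c ∧ Δ ∣ (k i + r * i + c)) ∧
      (∀ l t : ℕ,
        (l ∈ I → ∀ s : ℕ, t = k l + Δ * s →
          α l t = (((k l : F) + r * l + c) * α l (k l)) / ((k l : F) + r * l + c + Δ * s)) ∧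
        ((l ∉ I ∨ ∀ s : ℕ, t ≠ k l + Δ * s) → α l t = 0)) := by
  classical
  by_cases h0 : ∃ n m, α n m ≠ 0
  · obtain ⟨n₀, m₀, hn₀⟩ := h0
    have H : ∀ n, ∃ kΔ : ℕ × ℕ, (∃ m, α n m ≠ 0) →
        (0 < kΔ.2 ∧ α n kΔ.1 ≠ 0 ∧ kΔ.1 < kΔ.2 ∧ kΔ.2 ∣ (kΔ.1 + r * n + c) ∧
          kΔ.2 ≤ kΔ.1 + r * n + c ∧
          (∀ t, α n t ≠ 0 ↔ ∃ s, t = kΔ.1 + kΔ.2 * s) ∧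
          (∀ s, α n (kΔ.1 + kΔ.2 * s)
            = ((kΔ.1 : F) + r * n + c) * α n kΔ.1 / ((kΔ.1 : F) + r * n + c + kΔ.2 * s))) := by
      intro n
      by_cases hn : ∃ m, α n m ≠ 0
      · obtain ⟨k, Δ, p1, p2, p3, p4, p5, p6, p7⟩ := row_structure r c α hE n hn
        exact ⟨(k, Δ), fun _ => ⟨p1, p2, p3, p4, p5, p6, p7⟩⟩
      · exact ⟨(0, 1), fun h => absurd h hn⟩
    choose kΔ hkΔ using H
    set I : Set ℕ := {n | ∃ m, α n m ≠ 0} with hI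
    have hn₀I : n₀ ∈ I := ⟨m₀, hn₀⟩
    set Δ : ℕ := (kΔ n₀).2 with hΔdef
    set k : ℕ → ℕ := fun n => (kΔ n).1 with hkdef
    have huniq : ∀ n, n ∈ I → (kΔ n).2 = Δ := by
      intro n hn
      obtain ⟨q1, q2, q3, q4, q5, q6, q7⟩ := hkΔ n hn
      obtain ⟨p1, p2, p3, p4, p5, p6, p7⟩ := hkΔ n₀ hn₀I
      exact Nat.dvd_antisymm
        (cross_dvd r c α hE n₀ n (kΔ n₀).1 (kΔ n₀).2 (kΔ n).1 (kΔ n).2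
          p1 p2 p4 p5 p6 p7 q1 q2 q4 q5 q6)
        (cross_dvd r c α hE n n₀ (kΔ n).1 (kΔ n).2 (kΔ n₀).1 (kΔ n₀).2
          q1 q2 q4 q5 q6 q7 p1 p2 p4 p5 p6)
    refine ⟨I, Δ, k, ?_, ?_, ?_⟩
    · exact (hkΔ n₀ hn₀I).1
    · intro i hi
      obtain ⟨q1, q2, q3, q4, q5, q6, q7⟩ := hkΔ i hi
      rw [huniq i hi] at q3 q4 q5
      exact ⟨q2, q3, q5, q4⟩
    · intro l t
      constructor
      · intro hl s hts
        obtain ⟨q1, q2, q3, q4, q5, q6, q7⟩ := hkΔ l hl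
        rw [huniq l hl] at q7
        rw [hts]
        exact q7 s
      · intro h
        rcases h with h | h
        · by_contra hne
          exact h ⟨t, hne⟩
        · by_cases hl : l ∈ I
          · by_contra hne
            obtain ⟨q1, q2, q3, q4, q5, q6, q7⟩ := hkΔ l hl
            obtain ⟨s, hs⟩ := (q6 t).mp hne
            rw [huniq l hl] at hs
            exact h s hs
          · by_contra hne
            exact hl ⟨t, hne⟩
  · push_neg at h0
    refine ⟨∅, 1, fun _ => 0, le_refl 1, by simp, ?_⟩
    intro l t
    refine ⟨by simp, fun _ => h0 l t⟩

/-- Classification of weight-zero Rota–Baxter operators on `F[x,y]` of the form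
`R(xⁿyᵐ) = α_{n,m} y^{m+rn+c}` with `r + c > 0`. -/
theorem rb_weight_zero_case_ii_classification {F : Type*} [Field F] [CharZero F]
    (r c : ℕ) (hrc : 0 < r + c) (α : ℕ → ℕ → F)
    (R : MvPolynomial (Fin 2) F →ₗ[F] MvPolynomial (Fin 2) F)
    (hRB : ∀ u v : MvPolynomial (Fin 2) F, R u * R v = R (R u * v + u * R v))
    (hmono : ∀ n m : ℕ,
      R (X 0 ^ n * X 1 ^ m) = α n m • (X 1 ^ (m + r * n + c) : MvPolynomial (Fin 2) F)) :
    ∃ (I : Set ℕ) (Δ : ℕ) (k : ℕ → ℕ), 1 ≤ Δ ∧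
      (∀ i ∈ I, α i (k i) ≠ 0 ∧ k i < Δ ∧ Δ ≤ k i + r * i + c ∧ Δ ∣ (k i + r * i + c)) ∧
      (∀ l t : ℕ,
        (l ∈ I → ∀ s : ℕ, t = k l + Δ * s →
          α l t = (((k l : F) + r * l + c) * α l (k l)) / ((k l : F) + r * l + c + Δ * s)) ∧
        ((l ∉ I ∨ ∀ s : ℕ, t ≠ k l + Δ * s) → α l t = 0)) := by
  have hE : ∀ n m l t : ℕ, α n m * α l t
      = α n m * α l (t + (m + r * n + c)) + α l t * α n (m + (t + r * l + c)) := by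
    intro n m l t
    have h := hRB (X 0 ^ n * X 1 ^ m) (X 0 ^ l * X 1 ^ t)
    rw [hmono, hmono] at h
    have e1 : (α n m • (X 1 ^ (m + r * n + c) : MvPolynomial (Fin 2) F)) * (X 0 ^ l * X 1 ^ t)
        = α n m • (X 0 ^ l * X 1 ^ (t + (m + r * n + c))) := by
      rw [smul_mul_assoc]; ring_nf
    have e2 : (X 0 ^ n * X 1 ^ m : MvPolynomial (Fin 2) F) * (α l t • (X 1 ^ (t + r * l + c)))
        = α l t • (X 0 ^ n * X 1 ^ (m + (t + r * l + c))) := by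
      rw [mul_smul_comm]; ring_nf
    rw [e1, e2, map_add, map_smul, map_smul, hmono, hmono] at h
    have hx : (X 1 : MvPolynomial (Fin 2) F) ^ (m + r * n + c + (t + r * l + c)) ≠ 0 :=
      pow_ne_zero _ (X_ne_zero _)
    have key : (α n m * α l t) • ((X 1 : MvPolynomial (Fin 2) F) ^ (m + r * n + c + (t + r * l + c)))
        = (α n m * α l (t + (m + r * n + c)) + α l t * α n (m + (t + r * l + c)))
          • ((X 1 : MvPolynomial (Fin 2) F) ^ (m + r * n + c + (t + r * l + c))) := by
      rw [add_smul]
      calc (α n m * α l t) • ((X 1 : MvPolynomial (Fin 2) F) ^ (m + r * n + c + (t + r * l + c)))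
          = (α n m • (X 1 ^ (m + r*n+c) : MvPolynomial (Fin 2) F)) * (α l t • X 1 ^ (t + r*l+c)) := by
            rw [smul_mul_smul_comm, pow_add]
        _ = _ := by
            rw [h, smul_smul, smul_smul]
            have d1 : t + (m + r * n + c) + r * l + c = m + r * n + c + (t + r * l + c) := by ring
            have d2 : m + (t + r * l + c) + r * n + c = m + r * n + c + (t + r * l + c) := by ring
            rw [d1, d2]
    exact smul_left_injective F hx key
  exact classification_of_key r c α hE
end

section
/- Let F be a field of characteristic zero, let r ≥ 1 and c ≥ 0 be natural numbers, and let R be a Rota–Baxter operator of weight zero on F[x,y] with R(x^n y^m) = α_{n,m} · x^{r·(m+c)} y^{m+c} for all n, m ≥ 0, where α_{n,m} ∈ F. Define ζ_r : ℤ → ℕ by ζ_r(i) = ⌈−i/r⌉ for i < 0 and ζ_r(i) = 0 for i ≥ 0. Then there exist a set I ⊆ ℤ, a natural number Δ ≥ 1, and natural numbers k_i for i ∈ I such that for each i ∈ I: r·k_i + i ≥ 0, α_{r·k_i + i, k_i} ≠ 0, 0 ≤ k_i − ζ_r(i) < Δ ≤ k_i + c, and Δ ∣ k_i + c; and for every l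 ∈ ℕ and t ∈ ℤ with r·l + t ≥ 0: α_{r·l+t, l} = ((k_t + c)·α_{r·k_t + t, k_t})/(k_t + c + Δ·s) whenever t ∈ I and l = k_t + Δ·s for some s ≥ 0, and α_{r·l+t, l} = 0 otherwise (natural numbers cast into F). -/
open MvPolynomial

/-- `ζ_r(i) = ⌈-i/r⌉` for `i < 0` and `ζ_r(i) = 0` for `i ≥ 0`. -/
noncomputable def zetaFn (r : ℕ) (i : ℤ) : ℕ :=
  if i < 0 then (⌈(-i : ℚ) / (r : ℚ)⌉).toNat else 0

lemma zeta_le (r : ℕ) (hr : 1 ≤ r) (t : ℤ) (l : ℕ) :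
    0 ≤ (r:ℤ)*l + t ↔ zetaFn r t ≤ l := by
  have hrQ : (0:ℚ) < r := by exact_mod_cast hr
  unfold zetaFn
  split_ifs with h
  · rw [Int.toNat_le, Int.ceil_le, div_le_iff₀ hrQ]
    constructor
    · intro h1
      have h2 : (0:ℚ) ≤ (r:ℚ)*l + t := by exact_mod_cast h1
      push_cast
      linarith [h2, mul_comm (r:ℚ) (l:ℚ)]
    · intro h1
      push_cast at h1
      have h2 : (0:ℚ) ≤ (r:ℚ)*l + t := by linarith [h1, mul_comm (r:ℚ) (l:ℚ)]
      exact_mod_cast h2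
  · push_neg at h
    constructor
    · intro _; exact Nat.zero_le l
    · intro _
      have : (0:ℤ) ≤ (r:ℤ)*l := by positivity
      linarith


theorem polyKey {F : Type*} [Field F] (r c : ℕ) (α : ℕ → ℕ → F)
    (R : MvPolynomial (Fin 2) F →ₗ[F] MvPolynomial (Fin 2) F)
    (hRB : ∀ u v : MvPolynomial (Fin 2) F, R u * R v = R (R u * v + u * R v))
    (hmono : ∀ n m : ℕ,
      R (X 0 ^ n * X 1 ^ m) = α n m • (X 0 ^ (r * (m + c)) * X 1 ^ (m + c))) :
    ∀ n m p q : ℕ, α n m * α p q =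
      α n m * α (r*(m+c)+p) (m+q+c) + α p q * α (r*(q+c)+n) (m+q+c) := by
  intro n m p q
  have h := hRB (X 0 ^ n * X 1 ^ m) (X 0 ^ p * X 1 ^ q)
  rw [hmono n m, hmono p q] at h
  simp only [smul_mul_assoc, mul_smul_comm, map_add, map_smul, smul_smul] at h
  rw [show (X (0:Fin 2) ^ (r*(m+c)) * X 1 ^ (m+c)) * (X 0 ^ p * X 1 ^ q)
        = (X 0 ^ (r*(m+c)+p) * X 1 ^ (m+c+q) : MvPolynomial (Fin 2) F) from by ring,
      show (X (0:Fin 2) ^ n * X 1 ^ m) * (X 0 ^ (r*(q+c)) * X 1 ^ (q+c))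
        = (X 0 ^ (r*(q+c)+n) * X 1 ^ (q+c+m) : MvPolynomial (Fin 2) F) from by ring,
      hmono, hmono] at h
  rw [show m+c+q = m+q+c from by omega, show q+c+m = m+q+c from by omega] at h
  simp only [smul_smul, smul_eq_C_mul, map_mul] at h
  set P : MvPolynomial (Fin 2) F := X 0 ^ (r*(m+q+2*c)) * X 1 ^ (m+q+2*c) with hPdef
  have hP : P ≠ 0 := by
    apply mul_ne_zero <;> exact pow_ne_zero _ (X_ne_zero _)
  have h2 : C (α n m * α p q
      - (α n m * α (r*(m+c)+p) (m+q+c) + α p q * α (r*(q+c)+n) (m+q+c))) * P = 0 := by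
    rw [hPdef]
    simp only [map_sub, map_add, map_mul]
    linear_combination h
  rcases mul_eq_zero.1 h2 with h3 | h3
  · have h4 := (MvPolynomial.C_eq_zero.1 h3)
    linear_combination h4
  · exact absurd h3 hP

theorem classify_aux {F : Type*} [Field F] [CharZero F] (r c : ℕ) (hr : 1 ≤ r)
    (A : ℤ → ℕ → F)
    (hval : ∀ t (l : ℕ), A t l ≠ 0 → 0 ≤ (r:ℤ)*l + t)
    (key : ∀ (s t : ℤ) (m q : ℕ), 0 ≤ (r:ℤ)*m + s → 0 ≤ (r:ℤ)*q + t →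
      A s m * A t q = A s m * A t (m+q+c) + A t q * A s (m+q+c)) :
    ∃ (I : Set ℤ) (Δ : ℕ) (k : ℤ → ℕ), 1 ≤ Δ ∧
      (∀ i ∈ I, 0 ≤ (r:ℤ)*(k i) + i ∧ A i (k i) ≠ 0 ∧ zetaFn r i ≤ k i ∧
        k i - zetaFn r i < Δ ∧ Δ ≤ k i + c ∧ Δ ∣ (k i + c)) ∧
      (∀ (l : ℕ) (t : ℤ), 0 ≤ (r:ℤ)*l + t →
        (t ∈ I → ∀ s : ℕ, l = k t + Δ * s →
          A t l = (((k t : F) + c) * A t (k t)) / ((k t : F) + c + Δ * s)) ∧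
        ((t ∉ I ∨ ∀ s : ℕ, l ≠ k t + Δ * s) → A t l = 0)) := by
  -- positivity of m + c on the support
  have pos : ∀ t (m : ℕ), A t m ≠ 0 → 1 ≤ m + c := by
    intro t m hm
    by_contra hmc
    have hm0 : m = 0 := by omega
    have hc0 : c = 0 := by omega
    have h := key t t m m (hval t m hm) (hval t m hm)
    rw [hm0] at h hm
    rw [hc0] at h
    norm_num at h
    have h2 : A t 0 * A t 0 = 0 := by linear_combination (A t 0) * h
    exact hm (by rcases mul_eq_zero.1 h2 with h' | h' <;> exact h')
  -- the chain lemma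
  have chain : ∀ t (m : ℕ), A t m ≠ 0 → ∀ j : ℕ,
      ((j:F)+1) * A t (m + j*(m+c)) = A t m ∧ A t (m + j*(m+c)) ≠ 0 := by
    intro t m hm j
    induction j with
    | zero => simpa using hm
    | succ j ih =>
      obtain ⟨ihe, ihn⟩ := ih
      set x := m + j*(m+c) with hx
      have hxv := hval t x ihn
      have hmv := hval t m hm
      have h := key t t x m hxv hmv
      have hidx : x + m + c = m + (j+1)*(m+c) := by rw [hx]; ring
      rw [hidx] at h
      have hj2 : ((j:F)+2) ≠ 0 := by
        have : ((j:F)+2) = ((j+2 : ℕ) : F) := by push_cast; ring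
        rw [this]
        exact Nat.cast_ne_zero.2 (by omega)
      have hj1 : ((j:F)+1) ≠ 0 := by
        have : ((j:F)+1) = ((j+1 : ℕ) : F) := by push_cast; ring
        rw [this]
        exact Nat.cast_ne_zero.2 (by omega)
      -- h : A t x * A t m = A t x * A t next + A t m * A t next
      -- with ihe : (j+1) * A t x = A t m
      have hmul : A t m * (A t m - (((j:F))+2) * A t (m + (j+1)*(m+c))) = 0 := by
        linear_combination ((j:F)+1) * h + (A t (m + (j+1)*(m+c)) - A t m) * ihe
      have hfac : A t m - (((j:F))+2) * A t (m + (j+1)*(m+c)) = 0 := by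
        rcases mul_eq_zero.1 hmul with h' | h'
        · exact absurd h' hm
        · exact h'
      have he : (((j+1 : ℕ) : F)+1) * A t (m + (j+1)*(m+c)) = A t m := by
        push_cast
        linear_combination -hfac
      refine ⟨he, ?_⟩
      intro h0
      rw [h0, mul_zero] at he
      exact hm he.symm
  -- constancy of (m+c) * A t m on the support
  have const : ∀ t (m q : ℕ), A t m ≠ 0 → A t q ≠ 0 →
      ((m:F)+c) * A t m = ((q:F)+c) * A t q := by
    intro t m q hm hq
    obtain ⟨M', hM⟩ : ∃ M', m + c = M' + 1 := ⟨m+c-1, by have := pos t m hm; omega⟩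
    obtain ⟨Q', hQ⟩ : ∃ Q', q + c = Q' + 1 := ⟨q+c-1, by have := pos t q hq; omega⟩
    have hidx : m + Q'*(m+c) = q + M'*(q+c) := by
      rw [hQ, hM]
      have h1 : m + Q' * (M' + 1) = Q'*M' + (m + Q') := by ring
      have h2 : q + M' * (Q' + 1) = Q'*M' + (q + M') := by ring
      rw [h1, h2, add_right_inj]
      omega
    obtain ⟨e1, n1⟩ := chain t m hm Q'
    obtain ⟨e2, _⟩ := chain t q hq M'
    rw [hidx] at e1
    -- e1 : (Q'+1) * A t idx = A t m, e2 : (M'+1) * A t idx = A t q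
    have cm : ((m:F)+c) = ((M'+1 : ℕ) : F) := by rw [← hM]; push_cast; ring
    have cq : ((q:F)+c) = ((Q'+1 : ℕ) : F) := by rw [← hQ]; push_cast; ring
    rw [cm, cq]
    push_cast
    linear_combination ((Q':F)+1) * e2 - ((M':F)+1) * e1
  -- upward closure across indices
  have up : ∀ (s t : ℤ) (m q : ℕ), A s m ≠ 0 → A t q ≠ 0 → A t (m+q+c) ≠ 0 := by
    intro s t m q hm hq h0
    have h := key s t m q (hval s m hm) (hval t q hq)
    rw [h0, mul_zero, zero_add] at h
    -- h : A s m * A t q = A t q * A s (m+q+c)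
    have hsm : A s m = A s (m+q+c) := by
      apply mul_right_cancel₀ hq
      linear_combination h
    have hne : A s (m+q+c) ≠ 0 := hsm ▸ hm
    have hc := const s m (m+q+c) hm hne
    rw [← hsm] at hc
    have hms : A s m ≠ 0 := hm
    have hcc : ((m:F)+c) = (((m+q+c : ℕ)):F)+c := mul_right_cancel₀ hms hc
    have hqc : ((q+c : ℕ) : F) = 0 := by push_cast at hcc ⊢; linear_combination (-1 : F) * hcc
    have := Nat.cast_eq_zero.1 hqc
    have := pos t q hq
    omega
  -- downward closure
  have down : ∀ (s t : ℤ) (m q : ℕ), A s m ≠ 0 → 0 ≤ (r:ℤ)*q + t →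
      A t (m+q+c) ≠ 0 → A t q ≠ 0 := by
    intro s t m q hm hqv hne h0
    have h := key s t m q (hval s m hm) hqv
    rw [h0, mul_zero, zero_mul, add_zero] at h
    -- h : 0 = A s m * A t (m+q+c)
    rcases mul_eq_zero.1 h.symm with h' | h'
    · exact hm h'
    · exact hne h'
  have validmono : ∀ (t:ℤ) (q q' : ℕ), q ≤ q' → 0 ≤ (r:ℤ)*q + t → 0 ≤ (r:ℤ)*q' + t := by
    intro t q q' hle hv
    have h1 : (r:ℤ)*q ≤ (r:ℤ)*q' :=
      mul_le_mul_of_nonneg_left (by exact_mod_cast hle) (by positivity)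
    linarith
  -- trivial case
  by_cases hI : ∃ (t : ℤ) (m : ℕ), A t m ≠ 0
  swap
  · push_neg at hI
    refine ⟨∅, 1, fun _ => 0, le_refl 1, by simp, ?_⟩
    intro l t hv
    exact ⟨fun h => absurd h (Set.notMem_empty t), fun _ => hI t l⟩
  obtain ⟨t₀, m₀, h₀⟩ := hI
  set X : Set ℕ := {n | ∃ (t : ℤ) (m : ℕ), A t m ≠ 0 ∧ n = m + c} with hXdef
  set M : AddSubmonoid ℕ := AddSubmonoid.closure X with hMdef
  have upM : ∀ a ∈ M, ∀ (t : ℤ) (q : ℕ), A t q ≠ 0 → A t (q + a) ≠ 0 := by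
    intro a haM
    induction haM using AddSubmonoid.closure_induction with
    | mem x hx =>
      obtain ⟨s, m, hsm, rfl⟩ := hx
      intro t q hq
      have := up s t m q hsm hq
      rwa [show q + (m + c) = m + q + c from by omega]
    | zero => intro t q hq; simpa using hq
    | add x y hx hy ihx ihy =>
      intro t q hq
      rw [show q + (x + y) = (q + x) + y from by omega]
      exact ihy t (q+x) (ihx t q hq)
  have downM : ∀ b ∈ M, ∀ (t : ℤ) (q : ℕ), 0 ≤ (r:ℤ)*q + t → A t (q + b) ≠ 0 → A t q ≠ 0 := by
    intro b hbM
    induction hbM using AddSubmonoid.closure_induction with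
    | mem x hx =>
      obtain ⟨s, m, hsm, rfl⟩ := hx
      intro t q hv hne
      rw [show q + (m + c) = m + q + c from by omega] at hne
      exact down s t m q hsm hv hne
    | zero => intro t q _ hq; simpa using hq
    | add x y hx hy ihx ihy =>
      intro t q hv hne
      rw [show q + (x + y) = (q + x) + y from by omega] at hne
      exact ihx t q hv (ihy t (q+x) (validmono t q (q+x) (by omega) hv) hne)
  -- the subgroup and its generator
  set G : AddSubgroup ℤ := AddSubgroup.closure ((fun n : ℕ => (n:ℤ)) '' X) with hGdef
  have hgen : ∀ (t : ℤ) (m : ℕ), A t m ≠ 0 → ((m:ℤ)+c) ∈ G := by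
    intro t m hm
    apply AddSubgroup.subset_closure
    exact ⟨m+c, ⟨t, m, hm, rfl⟩, by push_cast; ring⟩
  obtain ⟨g, hG⟩ := Int.subgroup_cyclic G
  set Δ : ℕ := g.natAbs with hΔdef
  have hdvd : ∀ (t : ℤ) (m : ℕ), A t m ≠ 0 → (Δ:ℤ) ∣ ((m:ℤ)+c) := by
    intro t m hm
    have := hgen t m hm
    rw [hG, AddSubgroup.mem_closure_singleton] at this
    obtain ⟨n, hn⟩ := this
    exact Int.natAbs_dvd.2 ⟨n, by rw [← hn, smul_eq_mul]; ring⟩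
  have hΔ1 : 1 ≤ Δ := by
    rcases Nat.eq_zero_or_pos Δ with h | h
    · exfalso
      have hg0 : g = 0 := by omega
      have := hgen t₀ m₀ h₀
      rw [hG, AddSubgroup.mem_closure_singleton] at this
      obtain ⟨n, hn⟩ := this
      rw [hg0, smul_zero] at hn
      have := pos t₀ m₀ h₀
      omega
    · exact h
  have hΔG : (Δ:ℤ) ∈ G := by
    have hgG : g ∈ G := by rw [hG]; exact AddSubgroup.subset_closure rfl
    rcases Int.natAbs_eq g with h | h
    · rw [← hΔdef] at h; rwa [← h]
    · rw [← hΔdef] at h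
      have := G.neg_mem hgG
      rw [h] at this; simpa using this
  -- decompose Δ as a difference of submonoid elements
  have hdiff : ∀ x ∈ G, ∃ a ∈ M, ∃ b ∈ M, x = (a:ℤ) - (b:ℤ) := by
    intro x hx
    rw [hGdef] at hx
    induction hx using AddSubgroup.closure_induction with
    | mem y hy =>
      obtain ⟨n, hn, rfl⟩ := hy
      exact ⟨n, AddSubmonoid.subset_closure hn, 0, zero_mem M, by simp⟩
    | zero => exact ⟨0, zero_mem M, 0, zero_mem M, by simp⟩
    | add x y hx hy ihx ihy =>
      obtain ⟨a, ha, b, hb, rfl⟩ := ihx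
      obtain ⟨a', ha', b', hb', rfl⟩ := ihy
      exact ⟨a+a', add_mem ha ha', b+b', add_mem hb hb', by push_cast; ring⟩
    | neg x hx ihx =>
      obtain ⟨a, ha, b, hb, rfl⟩ := ihx
      exact ⟨b, hb, a, ha, by ring⟩
  obtain ⟨a, haM, b, hbM, hab⟩ := hdiff (Δ:ℤ) hΔG
  have hab' : a = b + Δ := by omega
  have shift_up : ∀ (t : ℤ) (q : ℕ), A t q ≠ 0 → A t (q + Δ) ≠ 0 := by
    intro t q hq
    have h1 : A t (q + a) ≠ 0 := upM a haM t q hq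
    rw [show q + a = (q + Δ) + b from by omega] at h1
    exact downM b hbM t (q+Δ) (validmono t q (q+Δ) (by omega) (hval t q hq)) h1
  have shift_upN : ∀ (t : ℤ) (q : ℕ) (s : ℕ), A t q ≠ 0 → A t (q + Δ*s) ≠ 0 := by
    intro t q s hq
    induction s with
    | zero => simpa using hq
    | succ s ih =>
      have := shift_up t (q + Δ*s) ih
      rwa [show q + Δ*s + Δ = q + Δ*(s+1) from by ring] at this
  have shift_down : ∀ (t : ℤ) (q : ℕ), 0 ≤ (r:ℤ)*q + t → A t (q + Δ) ≠ 0 → A t q ≠ 0 := by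
    intro t q hv hq
    have h1 : A t (q + Δ + b) ≠ 0 := upM b hbM t (q+Δ) hq
    rw [show q + Δ + b = q + a from by omega] at h1
    exact downM a haM t q hv h1
  classical
  set k : ℤ → ℕ := fun t => if h : ∃ m : ℕ, A t m ≠ 0 then Nat.find h else 0 with hkdef
  refine ⟨{t | ∃ m : ℕ, A t m ≠ 0}, Δ, k, hΔ1, ?_, ?_⟩
  · rintro i hi
    have hi' : ∃ m : ℕ, A i m ≠ 0 := hi
    have hki : k i = Nat.find hi' := by rw [hkdef]; simp only [dif_pos hi']
    have hAk : A i (k i) ≠ 0 := by rw [hki]; exact Nat.find_spec hi'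
    have hvk : 0 ≤ (r:ℤ)*(k i) + i := hval i (k i) hAk
    have hz : zetaFn r i ≤ k i := (zeta_le r hr i (k i)).1 hvk
    have hdv : (Δ:ℤ) ∣ ((k i : ℤ)+c) := hdvd i (k i) hAk
    have hdvn : Δ ∣ (k i + c) := by
      have h2 : (Δ:ℤ) ∣ ((k i + c : ℕ) : ℤ) := by push_cast; exact hdv
      exact_mod_cast h2
    have hposk : 1 ≤ k i + c := pos i (k i) hAk
    refine ⟨hvk, hAk, hz, ?_, Nat.le_of_dvd (by omega) hdvn, hdvn⟩
    by_contra hcon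
    push_neg at hcon
    have h1 : zetaFn r i ≤ k i - Δ := by omega
    have h2 : 0 ≤ (r:ℤ)*((k i - Δ : ℕ):ℕ) + i := (zeta_le r hr i _).2 h1
    have h3 : A i ((k i - Δ) + Δ) ≠ 0 := by
      rw [show (k i - Δ) + Δ = k i from by omega]; exact hAk
    have h4 : A i (k i - Δ) ≠ 0 := shift_down i (k i - Δ) h2 h3
    have h5 : Nat.find hi' ≤ k i - Δ := Nat.find_min' hi' h4
    omega
  · intro l t hvl
    constructor
    · intro ht s hls
      have ht' : ∃ m : ℕ, A t m ≠ 0 := ht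
      have hkt : k t = Nat.find ht' := by rw [hkdef]; simp only [dif_pos ht']
      have hAk : A t (k t) ≠ 0 := by rw [hkt]; exact Nat.find_spec ht'
      have hAl : A t l ≠ 0 := by rw [hls]; exact shift_upN t (k t) s hAk
      have hc := const t (k t) l hAk hAl
      have hposl : 1 ≤ l + c := pos t l hAl
      have hlc : ((l:F)+c) ≠ 0 := by
        have : ((l:F)+c) = ((l+c : ℕ):F) := by push_cast; ring
        rw [this]
        exact Nat.cast_ne_zero.2 (by omega)
      have hcast : ((k t : F) + c + Δ * s) = ((l:F)+c) := by rw [hls]; push_cast; ring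
      rw [hcast, eq_div_iff hlc]
      linear_combination (-1 : F) * hc
    · intro hcase
      by_contra hAl
      rcases hcase with hni | hns
      · exact hni ⟨l, hAl⟩
      · have ht' : ∃ m : ℕ, A t m ≠ 0 := ⟨l, hAl⟩
        have hkt : k t = Nat.find ht' := by rw [hkdef]; simp only [dif_pos ht']
        have hAk : A t (k t) ≠ 0 := by rw [hkt]; exact Nat.find_spec ht'
        have hlk' : Nat.find ht' ≤ l := Nat.find_min' ht' hAl
        have hlk : k t ≤ l := by omega
        have d1 : Δ ∣ l + c := by
          have := hdvd t l hAl
          have h2 : (Δ:ℤ) ∣ ((l + c : ℕ) : ℤ) := by push_cast; exact this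
          exact_mod_cast h2
        have d2 : Δ ∣ k t + c := by
          have := hdvd t (k t) hAk
          have h2 : (Δ:ℤ) ∣ ((k t + c : ℕ) : ℤ) := by push_cast; exact this
          exact_mod_cast h2
        have d3 : Δ ∣ l - k t := by
          have := Nat.dvd_sub d1 d2
          rwa [show (l+c) - (k t + c) = l - k t from by omega] at this
        obtain ⟨s, hs⟩ := d3
        exact hns s (by omega)

/-- Classification of weight-zero Rota–Baxter operators on `F[x,y]` of the form
`R(xⁿyᵐ) = α_{n,m} x^{r(m+c)} y^{m+c}` with `r ≥ 1`. -/
theorem rb_weight_zero_case_i_classification {F : Type*} [Field F] [CharZero F]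
    (r c : ℕ) (hr : 1 ≤ r) (α : ℕ → ℕ → F)
    (R : MvPolynomial (Fin 2) F →ₗ[F] MvPolynomial (Fin 2) F)
    (hRB : ∀ u v : MvPolynomial (Fin 2) F, R u * R v = R (R u * v + u * R v))
    (hmono : ∀ n m : ℕ,
      R (X 0 ^ n * X 1 ^ m) = α n m • (X 0 ^ (r * (m + c)) * X 1 ^ (m + c))) :
    ∃ (I : Set ℤ) (Δ : ℕ) (k : ℤ → ℕ), 1 ≤ Δ ∧
      (∀ i ∈ I, 0 ≤ (r : ℤ) * k i + i ∧
        α ((r : ℤ) * k i + i).toNat (k i) ≠ 0 ∧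
        zetaFn r i ≤ k i ∧ k i - zetaFn r i < Δ ∧ Δ ≤ k i + c ∧ Δ ∣ (k i + c)) ∧
      (∀ (l : ℕ) (t : ℤ), 0 ≤ (r : ℤ) * l + t →
        (t ∈ I → ∀ s : ℕ, l = k t + Δ * s →
          α ((r : ℤ) * l + t).toNat l =
            (((k t : F) + c) * α ((r : ℤ) * k t + t).toNat (k t)) /
              ((k t : F) + c + Δ * s)) ∧
        ((t ∉ I ∨ ∀ s : ℕ, l ≠ k t + Δ * s) → α ((r : ℤ) * l + t).toNat l = 0)) := by
  classical
  have pk := polyKey r c α R hRB hmono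
  set A : ℤ → ℕ → F := fun t l =>
    if 0 ≤ (r:ℤ)*l + t then α ((r:ℤ)*l + t).toNat l else 0 with hAdef
  have hval : ∀ (t : ℤ) (l : ℕ), A t l ≠ 0 → 0 ≤ (r:ℤ)*l + t := by
    intro t l h
    by_contra hv
    rw [hAdef] at h
    simp only [if_neg hv] at h
    exact h rfl
  have hAeq : ∀ (t : ℤ) (l : ℕ), 0 ≤ (r:ℤ)*l + t → A t l = α ((r:ℤ)*l + t).toNat l := by
    intro t l hv
    rw [hAdef]
    simp only [if_pos hv]
  have keyA : ∀ (s t : ℤ) (m q : ℕ), 0 ≤ (r:ℤ)*m + s → 0 ≤ (r:ℤ)*q + t →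
      A s m * A t q = A s m * A t (m+q+c) + A t q * A s (m+q+c) := by
    intro s t m q hm hq
    have hmono' : ∀ (u : ℤ) (x y : ℕ), x ≤ y → 0 ≤ (r:ℤ)*x + u → 0 ≤ (r:ℤ)*y + u := by
      intro u x y hxy hv
      have h1 : (r:ℤ)*x ≤ (r:ℤ)*y :=
        mul_le_mul_of_nonneg_left (by exact_mod_cast hxy) (by positivity)
      linarith
    have hmq_t : 0 ≤ (r:ℤ)*((m+q+c : ℕ):ℕ) + t := hmono' t q (m+q+c) (by omega) hq
    have hmq_s : 0 ≤ (r:ℤ)*((m+q+c : ℕ):ℕ) + s := hmono' s m (m+q+c) (by omega) hm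
    rw [hAeq s m hm, hAeq t q hq, hAeq t _ hmq_t, hAeq s _ hmq_s]
    have e1 : ((r:ℤ)*((m+q+c:ℕ):ℕ) + t).toNat
        = r*(m+c) + ((r:ℤ)*q + t).toNat := by
      have h2 : (((r*(m+c) + ((r:ℤ)*q + t).toNat : ℕ)) : ℤ) = (r:ℤ)*((m+q+c:ℕ):ℕ) + t := by
        push_cast [Int.toNat_of_nonneg hq]
        ring
      rw [← h2, Int.toNat_natCast]
    have e2 : ((r:ℤ)*((m+q+c:ℕ):ℕ) + s).toNat
        = r*(q+c) + ((r:ℤ)*m + s).toNat := by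
      have h2 : (((r*(q+c) + ((r:ℤ)*m + s).toNat : ℕ)) : ℤ) = (r:ℤ)*((m+q+c:ℕ):ℕ) + s := by
        push_cast [Int.toNat_of_nonneg hm]
        ring
      rw [← h2, Int.toNat_natCast]
    rw [e1, e2]
    exact pk (((r:ℤ)*m + s).toNat) m (((r:ℤ)*q + t).toNat) q
  obtain ⟨I, Δ, k, hΔ, hmem, hform⟩ := classify_aux r c hr A hval keyA
  refine ⟨I, Δ, k, hΔ, ?_, ?_⟩
  · intro i hi
    obtain ⟨hv, hne, h3, h4, h5, h6⟩ := hmem i hi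
    exact ⟨hv, by rwa [hAeq i (k i) hv] at hne, h3, h4, h5, h6⟩
  · intro l t hvl
    obtain ⟨hf1, hf2⟩ := hform l t hvl
    constructor
    · intro ht s hls
      have hv2 : 0 ≤ (r:ℤ)*(k t) + t := (hmem t ht).1
      have := hf1 ht s hls
      rwa [hAeq t l hvl, hAeq t (k t) hv2] at this
    · intro hcase
      have := hf2 hcase
      rwa [hAeq t l hvl] at this
end

section
/- Let F be a field of characteristic zero and let R be a Rota–Baxter operator of weight zero on the polynomial algebra F[x,y] such that R(x^n y^m) = α_{n,m} · x^n y^m for all n, m ≥ 0, where α_{n,m} ∈ F. Then R = 0. -/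
open MvPolynomial

/-- A Rota–Baxter operator of weight zero on `F[x,y]` of the form
`R(xⁿyᵐ) = α_{n,m} xⁿyᵐ` is zero. -/
theorem rb_weight_zero_diagonal_trivial {F : Type*} [Field F] [CharZero F]
    (α : ℕ → ℕ → F)
    (R : MvPolynomial (Fin 2) F →ₗ[F] MvPolynomial (Fin 2) F)
    (hRB : ∀ u v : MvPolynomial (Fin 2) F, R u * R v = R (R u * v + u * R v))
    (hmono : ∀ n m : ℕ,
      R (X 0 ^ n * X 1 ^ m) = α n m • (X 0 ^ n * X 1 ^ m)) :
    R = 0 := by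
  have hmononz : ∀ n m : ℕ, (X 0 ^ n * X 1 ^ m : MvPolynomial (Fin 2) F) ≠ 0 := by
    intro n m
    have : (X 0 ^ n * X 1 ^ m : MvPolynomial (Fin 2) F) =
        monomial (Finsupp.single 0 n + Finsupp.single 1 m) 1 := by
      rw [X_pow_eq_monomial, X_pow_eq_monomial, monomial_mul, one_mul]
    rw [this]
    simp [monomial_eq_zero]
  have key : ∀ n m p q : ℕ,
      α n m * α p q = (α n m + α p q) * α (n + p) (m + q) := by
    intro n m p q
    have h := hRB (X 0 ^ n * X 1 ^ m) (X 0 ^ p * X 1 ^ q)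
    rw [hmono, hmono] at h
    have hcomb : (X 0 ^ n * X 1 ^ m : MvPolynomial (Fin 2) F) * (X 0 ^ p * X 1 ^ q)
        = X 0 ^ (n + p) * X 1 ^ (m + q) := by ring
    have hL : (α n m • (X 0 ^ n * X 1 ^ m : MvPolynomial (Fin 2) F)) *
        (α p q • (X 0 ^ p * X 1 ^ q)) =
        (α n m * α p q) • (X 0 ^ (n + p) * X 1 ^ (m + q)) := by
      rw [smul_mul_smul_comm, hcomb]
    have hR : (α n m • (X 0 ^ n * X 1 ^ m : MvPolynomial (Fin 2) F)) * (X 0 ^ p * X 1 ^ q)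
        + (X 0 ^ n * X 1 ^ m) * (α p q • (X 0 ^ p * X 1 ^ q)) =
        (α n m + α p q) • (X 0 ^ (n + p) * X 1 ^ (m + q)) := by
      rw [smul_mul_assoc, mul_smul_comm, hcomb, ← add_smul]
    rw [hL, hR, map_smul, hmono] at h
    rw [smul_smul] at h
    exact smul_left_injective F (hmononz (n + p) (m + q)) h
  have h00 : α 0 0 = 0 := by
    have h := key 0 0 0 0
    simp only [Nat.add_zero] at h
    exact mul_self_eq_zero.mp (by linear_combination -h)
  have hall : ∀ n m : ℕ, α n m = 0 := by
    intro n m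
    have h := key n m 0 0
    rw [h00, mul_zero, add_zero, Nat.add_zero, Nat.add_zero] at h
    exact mul_self_eq_zero.mp (by linear_combination -h)
  apply (MvPolynomial.basisMonomials (Fin 2) F).ext
  intro d
  have hsd : Finsupp.single (0 : Fin 2) (d 0) + Finsupp.single 1 (d 1) = d := by
    ext i
    fin_cases i <;> simp
  have hd : (monomial d (1 : F)) = X 0 ^ d 0 * X 1 ^ (d 1) := by
    rw [X_pow_eq_monomial, X_pow_eq_monomial, monomial_mul, one_mul, hsd]
  show R (monomial d 1) = (0 : MvPolynomial (Fin 2) F →ₗ[F] MvPolynomial (Fin 2) F) (monomial d 1)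
  rw [hd, hmono, hall, zero_smul, LinearMap.zero_apply]
end

section
/- Let F be a field of characteristic zero and let F₀[x,y] be the ideal of F[x,y] generated by x and y (the polynomials with zero constant term), regarded as a non-unital F-algebra. Let R : F₀[x,y] → F₀[x,y] be an F-linear map satisfying R(a)·R(b) = R(R(a)·b + a·R(b)) for all a, b ∈ F₀[x,y], and suppose R(x^n y^m) = α_{n,m} · x^n y^m for all n, m ≥ 0 with n + m > 0, where α_{n,m} ∈ F. Then at least one of the following holds: (1) there exist l, r ∈ ℕ not both zero and γ ∈ F such that for all s, t with s + t > 0: α_{s,t} = γ/a whenever (s,t) = (a·l, a·r) for some integer a > 0, and α_{s,t} = 0 otherwise; (2) there exist natural numbers k₁, k₂ > 0, nonzero α₁, α₂ ∈ F, and natural numbers a, b, d with d = gcd(k₁, k₂), a < d, b ∣ d, and (d/b) ∣ gcd(a, d), such that for all s, t with s + t > 0: α_{s,t} = (k₁·k₂·α₁·α₂)/(t·k₁·α₁ + s·k₂·α₂) whenever there exists 0 ≤ l < b with s ≡ (k₁/b)·l (mod k₁) and t ≡ (k₂·a/d)·l (mod k₂), and α_{s,t} = 0 otherwise (natural numbers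 cast into F). -/
open MvPolynomial

set_option linter.unusedSectionVars false
set_option maxHeartbeats 1000000


section RBaux
variable {F : Type*} [Field F] [CharZero F] (α : ℕ → ℕ → F)

/-- key relation -/
def RBkey : Prop :=
  ∀ n m p q : ℕ, 0 < n + m → 0 < p + q →
    α n m * α p q = (α n m + α p q) * α (n+p) (m+q)

variable {α}

lemma rb1 (key : RBkey α) {n m p q : ℕ} (h1 : 0 < n + m) (h2 : 0 < p + q)
    (a1 : α n m ≠ 0) (a2 : α p q ≠ 0) :
    α (n+p) (m+q) ≠ 0 ∧ (α (n+p) (m+q))⁻¹ = (α n m)⁻¹ + (α p q)⁻¹ := by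
  have k := key n m p q h1 h2
  have hs : α n m + α p q ≠ 0 := by
    intro h; rw [h, zero_mul] at k; exact (mul_ne_zero a1 a2) k
  have h0 : α (n+p) (m+q) ≠ 0 := by
    intro h; rw [h, mul_zero] at k; exact (mul_ne_zero a1 a2) k
  refine ⟨h0, ?_⟩
  have : (α (n+p) (m+q))⁻¹ * (α n m * α p q) =
      ((α n m)⁻¹ + (α p q)⁻¹) * (α n m * α p q) := by
    have hA : (α (n+p) (m+q))⁻¹ * α (n+p) (m+q) = 1 := inv_mul_cancel₀ h0
    have ha : (α n m)⁻¹ * α n m = 1 := inv_mul_cancel₀ a1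
    have hb : (α p q)⁻¹ * α p q = 1 := inv_mul_cancel₀ a2
    linear_combination (α (n+p) (m+q))⁻¹ * k + (α n m + α p q) * hA - α p q * ha - α n m * hb
  exact mul_right_cancel₀ (mul_ne_zero a1 a2) this

lemma rb2 (key : RBkey α) {n m p q : ℕ} (h1 : 0 < n + m) (h2 : 0 < p + q)
    (a1 : α n m ≠ 0) (a3 : α (n+p) (m+q) ≠ 0) : α p q ≠ 0 := by
  intro h0
  have k := key n m p q h1 h2
  rw [h0, mul_zero, add_zero] at k
  exact (mul_ne_zero a1 a3) k.symm

lemma rb3 (key : RBkey α) {n m : ℕ} (h : 0 < n + m) (a : α n m ≠ 0) :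
    ∀ k : ℕ, 0 < k →
      α (k*n) (k*m) ≠ 0 ∧ (α (k*n) (k*m))⁻¹ = (k : F) * (α n m)⁻¹ := by
  intro k hk
  induction k with
  | zero => omega
  | succ k ih =>
    rcases Nat.eq_zero_or_pos k with rfl | hk'
    · constructor
      · simpa using a
      · simp
    · obtain ⟨h1, h2⟩ := ih hk'
      have hpos : 0 < k*n + k*m := by
        have := Nat.mul_pos hk' h
        rw [Nat.mul_add] at this; exact this
      obtain ⟨g1, g2⟩ := rb1 key hpos h h1 a
      have e1 : (k+1)*n = k*n + n := by ring
      have e2 : (k+1)*m = k*m + m := by ring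
      constructor
      · rw [e1, e2]; exact g1
      · rw [e1, e2, g2, h2]; push_cast; ring

lemma rb3v (key : RBkey α) {n m : ℕ} (h : 0 < n + m) (a : α n m ≠ 0)
    {k : ℕ} (hk : 0 < k) : α (k*n) (k*m) = α n m / (k : F) := by
  obtain ⟨h1, h2⟩ := rb3 key h a k hk
  have hkF : (k : F) ≠ 0 := Nat.cast_ne_zero.mpr (by omega)
  rw [← inv_inv (α (k*n) (k*m)), h2, mul_inv, inv_inv, div_eq_mul_inv, mul_comm]

lemma rb4 (key : RBkey α) (p₁ p₂ : ℕ) (hp : 0 < p₁ + p₂)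
    (hex : ∃ c, 0 < c ∧ α (c*p₁) (c*p₂) ≠ 0) :
    ∃ d, 0 < d ∧ α (d*p₁) (d*p₂) ≠ 0 ∧
      ∀ c, 0 < c → (α (c*p₁) (c*p₂) ≠ 0 ↔ d ∣ c) := by
  classical
  obtain ⟨hd, hda⟩ := Nat.find_spec hex
  set d := Nat.find hex with hdef
  have hdpos : 0 < d*p₁ + d*p₂ := by
    rw [← Nat.mul_add]; exact Nat.mul_pos hd hp
  refine ⟨d, hd, hda, fun c hc => ⟨?_, ?_⟩⟩
  · intro hca
    by_contra hnd
    have hr : c % d ≠ 0 := fun h => hnd (Nat.dvd_of_mod_eq_zero h)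
    have hrd : c % d < d := Nat.mod_lt _ hd
    have hcq : c = d * (c / d) + c % d := (Nat.div_add_mod c d).symm
    have hdc : d ≤ c := Nat.find_min' hex ⟨hc, hca⟩
    have hq : 0 < c / d := Nat.div_pos hdc hd
    have hbase := (rb3 key hdpos hda (c/d) hq).1
    have hqpos : 0 < (c/d)*(d*p₁) + (c/d)*(d*p₂) := by
      rw [← Nat.mul_add]; exact Nat.mul_pos hq hdpos
    have hrpos : 0 < (c % d)*p₁ + (c % d)*p₂ := by
      rw [← Nat.mul_add]; exact Nat.mul_pos (by omega) hp
    have e1 : (c/d)*(d*p₁) + (c % d)*p₁ = c*p₁ := by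
      conv_rhs => rw [hcq]
      ring
    have e2 : (c/d)*(d*p₂) + (c % d)*p₂ = c*p₂ := by
      conv_rhs => rw [hcq]
      ring
    have hsum : α ((c/d)*(d*p₁) + (c % d)*p₁) ((c/d)*(d*p₂) + (c % d)*p₂) ≠ 0 := by
      rw [e1, e2]; exact hca
    have := rb2 key hqpos hrpos hbase hsum
    exact absurd (⟨by omega, this⟩ : 0 < c % d ∧ α ((c % d)*p₁) ((c % d)*p₂) ≠ 0)
      (Nat.find_min hex hrd)
  · rintro ⟨k, rfl⟩
    rename_i hkc0
    have hkc : 0 < d * k := hc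
    have hkpos : 0 < k := by
      rcases Nat.eq_zero_or_pos k with rfl | h
      · simp at hkc
      · exact h
    have := (rb3 key hdpos hda k hkpos).1
    have e1 : k*(d*p₁) = d*k*p₁ := by ring
    have e2 : k*(d*p₂) = d*k*p₂ := by ring
    rwa [e1, e2] at this

lemma rb_axes (key : RBkey α) {n m p q : ℕ} (h1 : 0 < n + m) (h2 : 0 < p + q)
    (a1 : α n m ≠ 0) (a2 : α p q ≠ 0) (hlt : m*p < n*q) :
    α (n*q - m*p) 0 ≠ 0 ∧ α 0 (n*q - m*p) ≠ 0 := by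
  have hq : 0 < q := by
    rcases Nat.eq_zero_or_pos q with rfl | h; · simp at hlt
    · exact h
  have hn : 0 < n := by
    rcases Nat.eq_zero_or_pos n with rfl | h; · simp at hlt
    · exact h
  constructor
  · rcases Nat.eq_zero_or_pos m with rfl | hm
    · have := (rb3 key h1 a1 q hq).1
      have e : n*q - 0*p = q*n := by
        rw [Nat.zero_mul, Nat.sub_zero, Nat.mul_comm]
      rw [e]
      simpa using this
    · have hbase := (rb3 key h2 a2 m hm).1
      have hsum := (rb3 key h1 a1 q hq).1
      have hbpos : 0 < m*p + m*q := by
        rw [← Nat.mul_add]; exact Nat.mul_pos hm h2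
      have hspos : 0 < (n*q - m*p) + 0 := by omega
      have hsum' : α (m*p + (n*q - m*p)) (m*q + 0) ≠ 0 := by
        have e1 : m*p + (n*q - m*p) = q*n := by
          rw [Nat.add_sub_cancel' hlt.le, Nat.mul_comm]
        have e2 : m*q + 0 = q*m := by ring
        rw [e1, e2]; exact hsum
      exact rb2 key hbpos hspos hbase hsum'
  · rcases Nat.eq_zero_or_pos p with rfl | hp
    · have := (rb3 key h2 a2 n hn).1
      have e : n*q - m*0 = n*q := by simp
      rw [e]
      simpa using this
    · have hbase := (rb3 key h1 a1 p hp).1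
      have hsum := (rb3 key h2 a2 n hn).1
      have hbpos : 0 < p*n + p*m := by
        rw [← Nat.mul_add]; exact Nat.mul_pos hp h1
      have hspos : 0 < 0 + (n*q - m*p) := by omega
      have hsum' : α (p*n + 0) (p*m + (n*q - m*p)) ≠ 0 := by
        have e1 : p*n + 0 = n*p := by ring
        have e2 : p*m + (n*q - m*p) = n*q := by
          rw [Nat.mul_comm p m, Nat.add_sub_cancel' hlt.le]
        rw [e1, e2]; exact hsum
      exact rb2 key hbpos hspos hbase hsum'

lemma rbcaseA (key : RBkey α)
    (hne : ∃ n m, 0 < n + m ∧ α n m ≠ 0)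
    (hdep : ∀ n m p q : ℕ, 0 < n + m → 0 < p + q → α n m ≠ 0 → α p q ≠ 0 → n*q = m*p) :
    ∃ l r : ℕ, ¬(l = 0 ∧ r = 0) ∧ ∃ γ : F, ∀ s t : ℕ, 0 < s + t →
      (∀ a : ℕ, 0 < a → s = a * l → t = a * r → α s t = γ / (a : F)) ∧
      ((∀ a : ℕ, 0 < a → ¬(s = a * l ∧ t = a * r)) → α s t = 0) := by
  obtain ⟨n₀, m₀, h₀, a₀⟩ := hne
  set g := Nat.gcd n₀ m₀ with hg
  have hgpos : 0 < g := by
    rcases Nat.eq_zero_or_pos n₀ with rfl | h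
    · exact Nat.gcd_pos_of_pos_right _ (by omega)
    · exact Nat.gcd_pos_of_pos_left _ h
  set p₁ := n₀ / g with hp₁
  set p₂ := m₀ / g with hp₂
  have hn₀ : n₀ = g * p₁ := (Nat.mul_div_cancel' (Nat.gcd_dvd_left _ _)).symm
  have hm₀ : m₀ = g * p₂ := (Nat.mul_div_cancel' (Nat.gcd_dvd_right _ _)).symm
  have hcop : Nat.Coprime p₁ p₂ := Nat.coprime_div_gcd_div_gcd hgpos
  have hppos : 0 < p₁ + p₂ := by
    rcases Nat.eq_zero_or_pos (p₁ + p₂) with h | h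
    · obtain ⟨h1, h2⟩ := Nat.add_eq_zero.mp h
      rw [h1, Nat.mul_zero] at hn₀
      rw [h2, Nat.mul_zero] at hm₀
      omega
    · exact h
  have hparam : ∀ s t, 0 < s + t → α s t ≠ 0 → ∃ c, 0 < c ∧ s = c*p₁ ∧ t = c*p₂ := by
    intro s t hst ha
    have hrel : s * m₀ = t * n₀ := hdep s t n₀ m₀ hst h₀ ha a₀
    have hrel2 : s * p₂ = t * p₁ := by
      have h' : g*(s*p₂) = g*(t*p₁) := by
        calc g*(s*p₂) = s*(g*p₂) := by ring
          _ = s * m₀ := by rw [← hm₀]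
          _ = t * n₀ := hrel
          _ = g*(t*p₁) := by rw [hn₀]; ring
      exact Nat.eq_of_mul_eq_mul_left hgpos h'
    rcases Nat.eq_zero_or_pos p₁ with hp1 | hp1
    · have hp2 : p₂ = 1 := by
        have h2 := hcop
        rw [hp1] at h2
        simpa [Nat.coprime_zero_left] using h2
      have hs0 : s = 0 := by
        rw [hp1, hp2] at hrel2
        simpa using hrel2
      exact ⟨t, by omega, by rw [hs0, hp1, Nat.mul_zero], by rw [hp2, Nat.mul_one]⟩
    · have hdvd : p₁ ∣ s := by
        have hd1 : p₁ ∣ s * p₂ := ⟨t, by rw [hrel2]; ring⟩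
        exact Nat.Coprime.dvd_of_dvd_mul_right hcop hd1
      obtain ⟨c, hc⟩ := hdvd
      have ht : t = c * p₂ := by
        have h' : p₁ * (c * p₂) = p₁ * t := by
          calc p₁ * (c * p₂) = (p₁ * c) * p₂ := by ring
            _ = s * p₂ := by rw [← hc]
            _ = t * p₁ := hrel2
            _ = p₁ * t := by ring
        exact (Nat.eq_of_mul_eq_mul_left hp1 h').symm
      have hcpos : 0 < c := by
        rcases Nat.eq_zero_or_pos c with rfl | h
        · rw [Nat.mul_zero] at hc
          rw [Nat.zero_mul] at ht
          omega
        · exact h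
      exact ⟨c, hcpos, by rw [hc]; ring, ht⟩
  have hex : ∃ c, 0 < c ∧ α (c*p₁) (c*p₂) ≠ 0 := ⟨g, hgpos, by rw [← hn₀, ← hm₀]; exact a₀⟩
  obtain ⟨d, hd, hda, hiff⟩ := rb4 key p₁ p₂ hppos hex
  refine ⟨d*p₁, d*p₂, ?_, α (d*p₁) (d*p₂), ?_⟩
  · rintro ⟨h1, h2⟩
    rcases Nat.mul_eq_zero.1 h1 with h | h
    · omega
    · rcases Nat.mul_eq_zero.1 h2 with h' | h'
      · omega
      · omega
  · intro s t hst
    have hlr : 0 < d*p₁ + d*p₂ := by rw [← Nat.mul_add]; exact Nat.mul_pos hd hppos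
    constructor
    · rintro a ha rfl rfl
      exact rb3v key hlr hda ha
    · intro hno
      by_contra ha
      obtain ⟨c, hc, rfl, rfl⟩ := hparam _ _ hst ha
      have hdc : d ∣ c := (hiff c hc).1 ha
      obtain ⟨a, rfl⟩ := hdc
      have hapos : 0 < a := by
        rcases Nat.eq_zero_or_pos a with rfl | h
        · simp at hc
        · exact h
      exact hno a hapos ⟨by ring, by ring⟩

lemma rbcaseB (key : RBkey α)
    (hind : ∃ n m p q : ℕ, 0 < n + m ∧ 0 < p + q ∧ α n m ≠ 0 ∧ α p q ≠ 0 ∧ n*q ≠ m*p) :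
    (∃ k₁ k₂ : ℕ, 0 < k₁ ∧ 0 < k₂ ∧ ∃ α₁ α₂ : F, α₁ ≠ 0 ∧ α₂ ≠ 0 ∧
      ∃ a b d : ℕ, d = Nat.gcd k₁ k₂ ∧ a < d ∧ b ∣ d ∧ (d / b) ∣ Nat.gcd a d ∧
      ∀ s t : ℕ, 0 < s + t →
        ((∃ l : ℕ, l < b ∧ s ≡ (k₁ / b) * l [MOD k₁] ∧ t ≡ (k₂ * a / d) * l [MOD k₂]) →
          α s t = ((k₁ : F) * k₂ * α₁ * α₂) /
            ((t : F) * k₁ * α₁ + (s : F) * k₂ * α₂)) ∧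
        ((¬ ∃ l : ℕ, l < b ∧ s ≡ (k₁ / b) * l [MOD k₁] ∧ t ≡ (k₂ * a / d) * l [MOD k₂]) →
          α s t = 0)) := by
  classical
  obtain ⟨n, m, p, q, h1, h2, a1, a2, hnedep⟩ := hind
  -- Step B1 : axis points
  have haxes : (∃ c, 0 < c ∧ α c 0 ≠ 0) ∧ (∃ c, 0 < c ∧ α 0 c ≠ 0) := by
    rcases Nat.lt_or_ge (m*p) (n*q) with h | h
    · obtain ⟨hx, hy⟩ := rb_axes key h1 h2 a1 a2 h
      exact ⟨⟨n*q - m*p, by omega, hx⟩, ⟨n*q - m*p, by omega, hy⟩⟩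
    · have hlt : q*n < p*m := by
        rw [Nat.mul_comm q n, Nat.mul_comm p m]; omega
      obtain ⟨hx, hy⟩ := rb_axes key h2 h1 a2 a1 hlt
      exact ⟨⟨p*m - q*n, by omega, hx⟩, ⟨p*m - q*n, by omega, hy⟩⟩
  obtain ⟨⟨c₁, hc₁, hac₁⟩, ⟨c₂, hc₂, hac₂⟩⟩ := haxes
  -- Step B2 : k₁, k₂
  have hex1 : ∃ c, 0 < c ∧ α (c*1) (c*0) ≠ 0 := ⟨c₁, hc₁, by simpa using hac₁⟩
  obtain ⟨k₁, hk₁, hak₁', hiff₁'⟩ := rb4 key 1 0 (by omega) hex1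
  have hak₁ : α k₁ 0 ≠ 0 := by simpa using hak₁'
  have hiff₁ : ∀ c, 0 < c → (α c 0 ≠ 0 ↔ k₁ ∣ c) := by
    intro c hc
    have := hiff₁' c hc
    simpa using this
  have hex2 : ∃ c, 0 < c ∧ α (c*0) (c*1) ≠ 0 := ⟨c₂, hc₂, by simpa using hac₂⟩
  obtain ⟨k₂, hk₂, hak₂', hiff₂'⟩ := rb4 key 0 1 (by omega) hex2
  have hak₂ : α 0 k₂ ≠ 0 := by simpa using hak₂'
  have hiff₂ : ∀ c, 0 < c → (α 0 c ≠ 0 ↔ k₂ ∣ c) := by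
    intro c hc
    have := hiff₂' c hc
    simpa using this
  -- Step B3 : e, t₀
  have hexe : ∃ s, 0 < s ∧ ∃ t, α s t ≠ 0 := ⟨k₁, hk₁, 0, hak₁⟩
  obtain ⟨hepos, t₀, hat₀⟩ := Nat.find_spec hexe
  set e := Nat.find hexe with hedef
  have hept : 0 < e + t₀ := by omega
  -- Step B4 : e divides first coordinates of support
  have hediv : ∀ s t : ℕ, α s t ≠ 0 → e ∣ s := by
    intro s t hst
    rcases Nat.eq_zero_or_pos s with rfl | hs
    · exact dvd_zero e
    by_contra hnd
    have hr : s % e ≠ 0 := fun h => hnd (Nat.dvd_of_mod_eq_zero h)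
    have hre : s % e < e := Nat.mod_lt _ hepos
    have hq : 0 < s / e := Nat.div_pos (Nat.find_min' hexe ⟨hs, t, hst⟩) hepos
    have hMk : (s/e)*t₀ < ((s/e)*t₀+1)*k₂ := by
      have := Nat.le_mul_of_pos_right ((s/e)*t₀+1) hk₂
      omega
    have hyM : α 0 (((s/e)*t₀+1)*k₂) ≠ 0 := by
      have := (rb3 key (show 0 < 0 + k₂ by omega) hak₂ ((s/e)*t₀+1) (by omega)).1
      simpa using this
    have hsM : α s (t + ((s/e)*t₀+1)*k₂) ≠ 0 := by
      have := (rb1 key (show 0 < s + t by omega)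
        (show 0 < 0 + ((s/e)*t₀+1)*k₂ by omega) hst hyM).1
      simpa using this
    have hbase := (rb3 key hept hat₀ (s/e) hq).1
    have hsum' : α ((s/e)*e + s % e) ((s/e)*t₀ + (t + ((s/e)*t₀+1)*k₂ - (s/e)*t₀)) ≠ 0 := by
      have e1 : (s/e)*e + s % e = s := by
        rw [Nat.mul_comm]; exact Nat.div_add_mod s e
      have e2 : (s/e)*t₀ + (t + ((s/e)*t₀+1)*k₂ - (s/e)*t₀) = t + ((s/e)*t₀+1)*k₂ := by
        omega
      rw [e1, e2]; exact hsM
    have hbpos : 0 < (s/e)*e + (s/e)*t₀ := by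
      have := Nat.mul_pos hq hepos
      omega
    have hrpos : 0 < s % e + (t + ((s/e)*t₀+1)*k₂ - (s/e)*t₀) := by omega
    have := rb2 key hbpos hrpos hbase hsum'
    exact Nat.find_min hexe hre ⟨by omega, _, this⟩
  -- Step B5 : characterization of the support
  have hchar : ∀ s t : ℕ, 0 < s + t →
      (α s t ≠ 0 ↔ (e ∣ s ∧ t ≡ (s/e) * t₀ [MOD k₂])) := by
    intro s t hst
    constructor
    · intro ha
      refine ⟨hediv s t ha, ?_⟩
      rcases Nat.eq_zero_or_pos s with rfl | hs
      · have hk2t : k₂ ∣ t := (hiff₂ t (by omega)).1 ha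
        simpa using (Nat.modEq_zero_iff_dvd).2 hk2t
      · have hq : 0 < s / e := Nat.div_pos (Nat.find_min' hexe ⟨hs, t, ha⟩) hepos
        have hes : e ∣ s := hediv s t ha
        have hMk : (s/e)*t₀ < ((s/e)*t₀+1)*k₂ := by
          have := Nat.le_mul_of_pos_right ((s/e)*t₀+1) hk₂
          omega
        have hyM : α 0 (((s/e)*t₀+1)*k₂) ≠ 0 := by
          have := (rb3 key (show 0 < 0 + k₂ by omega) hak₂ ((s/e)*t₀+1) (by omega)).1
          simpa using this
        have hsM : α s (t + ((s/e)*t₀+1)*k₂) ≠ 0 := by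
          have := (rb1 key (show 0 < s + t by omega)
            (show 0 < 0 + ((s/e)*t₀+1)*k₂ by omega) ha hyM).1
          simpa using this
        have hbase := (rb3 key hept hat₀ (s/e) hq).1
        have hsum' : α ((s/e)*e + 0) ((s/e)*t₀ + (t + ((s/e)*t₀+1)*k₂ - (s/e)*t₀)) ≠ 0 := by
          have e1 : (s/e)*e + 0 = s := by
            rw [Nat.add_zero, Nat.div_mul_cancel hes]
          have e2 : (s/e)*t₀ + (t + ((s/e)*t₀+1)*k₂ - (s/e)*t₀) = t + ((s/e)*t₀+1)*k₂ := by
            omega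
          rw [e1, e2]; exact hsM
        have hbpos : 0 < (s/e)*e + (s/e)*t₀ := by
          have := Nat.mul_pos hq hepos
          omega
        have hwpos : 0 < t + ((s/e)*t₀+1)*k₂ - (s/e)*t₀ := by omega
        have haw := rb2 key hbpos (by omega) hbase hsum'
        have hk2w : k₂ ∣ (t + ((s/e)*t₀+1)*k₂ - (s/e)*t₀) := (hiff₂ _ hwpos).1 haw
        obtain ⟨z, hz⟩ := hk2w
        show t % k₂ = ((s/e)*t₀) % k₂
        calc t % k₂ = (t + ((s/e)*t₀+1)*k₂) % k₂ := (Nat.add_mul_mod_self_right ..).symm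
          _ = ((s/e)*t₀ + k₂*z) % k₂ := by rw [← hz]; congr 1; omega
          _ = ((s/e)*t₀ + z*k₂) % k₂ := by rw [Nat.mul_comm k₂ z]
          _ = ((s/e)*t₀) % k₂ := Nat.add_mul_mod_self_right ..
    · rintro ⟨hes, hmod⟩
      obtain ⟨Q, hsQ⟩ := hes
      have hQeq : s / e = Q := by
        rw [hsQ, Nat.mul_div_cancel_left _ hepos]
      rw [hQeq] at hmod
      rcases Nat.eq_zero_or_pos Q with rfl | hq
      · have hs0 : s = 0 := by omega
        subst hs0
        have ht : 0 < t := by omega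
        have hk2t : k₂ ∣ t := by
          have : t ≡ 0 [MOD k₂] := by simpa using hmod
          exact (Nat.modEq_zero_iff_dvd).1 this
        exact (hiff₂ t ht).2 hk2t
      · have hbase := (rb3 key hept hat₀ Q hq).1
        rcases Nat.lt_or_ge t (Q*t₀) with hlt | hge
        · have hz : k₂ ∣ Q*t₀ - t := (Nat.modEq_iff_dvd' hlt.le).1 hmod
          have haz : α 0 (Q*t₀ - t) ≠ 0 := (hiff₂ _ (by omega)).2 hz
          have hsum' : α (0 + s) ((Q*t₀ - t) + t) ≠ 0 := by
            have e1 : 0 + s = Q*e := by rw [Nat.zero_add, hsQ, Nat.mul_comm]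
            have e2 : (Q*t₀ - t) + t = Q*t₀ := by omega
            rw [e1, e2]; exact hbase
          exact rb2 key (by omega) (by omega) haz hsum'
        · have hz : k₂ ∣ t - Q*t₀ := (Nat.modEq_iff_dvd' hge).1 hmod.symm
          rcases Nat.eq_zero_or_pos (t - Q*t₀) with h0 | hzpos
          · have hteq : t = Q*t₀ := by omega
            have hseq : s = Q*e := by rw [hsQ, Nat.mul_comm]
            rw [hteq, hseq]; exact hbase
          · have haz : α 0 (t - Q*t₀) ≠ 0 := (hiff₂ _ hzpos).2 hz
            have hbpos : 0 < Q*e + Q*t₀ := by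
              have := Nat.mul_pos hq hepos
              omega
            have := (rb1 key hbpos (by omega) hbase haz).1
            have e1 : Q*e + 0 = s := by rw [Nat.add_zero, hsQ, Nat.mul_comm]
            have e2 : Q*t₀ + (t - Q*t₀) = t := by omega
            rwa [e1, e2] at this
  -- Step B6 : b and the order of t₀ mod k₂
  have hek₁ : e ∣ k₁ := hediv k₁ 0 hak₁
  have hk₁eb : k₁ = e * (k₁/e) := (Nat.mul_div_cancel' hek₁).symm
  set b := k₁ / e with hbdef
  have hbpos : 0 < b := Nat.div_pos (Nat.le_of_dvd hk₁ hek₁) hepos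
  have hbt₀ : k₂ ∣ b * t₀ := by
    have h' := ((hchar k₁ 0 (by omega)).1 hak₁).2
    exact (Nat.modEq_zero_iff_dvd).1 h'.symm
  have horder : ∀ M : ℕ, 0 < M → k₂ ∣ M * t₀ → b ∣ M := by
    intro M hM hdvd
    obtain ⟨z, hz⟩ := hdvd
    have hMe : α (M*e) (M*t₀) ≠ 0 := (rb3 key hept hat₀ M hM).1
    have hMe0 : α (M*e) 0 ≠ 0 := by
      rcases Nat.eq_zero_or_pos z with rfl | hzp
      · rw [Nat.mul_zero] at hz
        rwa [hz] at hMe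
      · have haz : α 0 (k₂*z) ≠ 0 := (hiff₂ _ (Nat.mul_pos hk₂ hzp)).2 ⟨z, rfl⟩
        have hsum' : α (0 + M*e) (k₂*z + 0) ≠ 0 := by
          have e1 : 0 + M*e = M*e := by omega
          have e2 : k₂*z + 0 = M*t₀ := by omega
          rw [e1, e2]; exact hMe
        have hp1 : 0 < k₂*z := Nat.mul_pos hk₂ hzp
        have hp2 : 0 < M*e := Nat.mul_pos hM hepos
        exact rb2 key (by omega) (by omega) haz hsum'
    have hp2 : 0 < M*e := Nat.mul_pos hM hepos
    have hk₁d : k₁ ∣ M*e := (hiff₁ _ (by omega)).1 hMe0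
    obtain ⟨u, hu⟩ := hk₁d
    refine ⟨u, ?_⟩
    have h' : e*M = e*(b*u) := by
      calc e*M = M*e := by ring
        _ = k₁*u := hu
        _ = (e*b)*u := by rw [← hk₁eb]
        _ = e*(b*u) := by ring
    exact Nat.eq_of_mul_eq_mul_left hepos h'
  have hbk₂ : b ∣ k₂ := horder k₂ hk₂ ⟨t₀, rfl⟩
  obtain ⟨z₀, hz₀⟩ := hbt₀
  set kb := k₂ / b with hkbdef
  have hk₂b : k₂ = b * kb := (Nat.mul_div_cancel' hbk₂).symm
  have ht₀ : t₀ = kb * z₀ := by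
    have h' : b * t₀ = b * (kb * z₀) := by
      rw [hz₀, hk₂b]; ring
    exact Nat.eq_of_mul_eq_mul_left hbpos h'
  set w := z₀ % b with hwdef
  set T := kb * w with hTdef
  have hwb : w < b := Nat.mod_lt _ hbpos
  have hTle : T ≤ t₀ := by
    rw [ht₀, hTdef]
    exact Nat.mul_le_mul_left _ (Nat.mod_le _ _)
  have hTmod : T + k₂ * (z₀ / b) = t₀ := by
    have hw' : w + b*(z₀/b) = z₀ := by
      rw [hwdef]; exact Nat.mod_add_div z₀ b
    rw [hTdef, ht₀, hk₂b]
    calc kb*w + b*kb*(z₀/b) = kb*(w + b*(z₀/b)) := by ring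
      _ = kb*z₀ := by rw [hw']
  have hmodT : T ≡ t₀ [MOD k₂] := (Nat.modEq_iff_dvd' hTle).2 ⟨z₀/b, by omega⟩
  set d := Nat.gcd k₁ k₂ with hddef
  have hdpos : 0 < d := Nat.gcd_pos_of_pos_left _ hk₁
  have hbd : b ∣ d := Nat.dvd_gcd ⟨e, by rw [hk₁eb]; ring⟩ hbk₂
  set a := (d/b) * w with hadef
  have hdb : (d/b)*b = d := Nat.div_mul_cancel hbd
  have hdb1 : 1 ≤ d/b := Nat.div_pos (Nat.le_of_dvd hdpos hbd) hbpos
  have had : a < d := by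
    have h1 : a ≤ (d/b)*(b-1) := Nat.mul_le_mul_left _ (by omega)
    have h2 : (d/b)*(b-1) + (d/b) = (d/b)*b := by
      rw [← Nat.mul_succ]; congr 1; omega
    omega
  have hkad : k₂ * a = d * T := by
    have h' : k₂*(d/b)*b = d*kb*b := by
      calc k₂*(d/b)*b = k₂*((d/b)*b) := by ring
        _ = k₂*d := by rw [hdb]
        _ = d*(b*kb) := by rw [hk₂b]; ring
        _ = d*kb*b := by ring
    have h'' : k₂*(d/b) = d*kb := Nat.eq_of_mul_eq_mul_right hbpos h'
    calc k₂*a = (k₂*(d/b))*w := by rw [hadef]; ring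
      _ = (d*kb)*w := by rw [h'']
      _ = d*T := by rw [hTdef]; ring
  have hk₂ad : k₂ * a / d = T := by
    rw [hkad, Nat.mul_div_cancel_left _ hdpos]
  have hk₁bb : k₁ / b = e := by
    rw [hk₁eb, Nat.mul_div_cancel _ hbpos]
  have hgcd : (d/b) ∣ Nat.gcd a d := Nat.dvd_gcd ⟨w, hadef⟩ (Nat.div_dvd_of_dvd hbd)
  -- Step B7 : values
  have hval : ∀ s t : ℕ, 0 < s + t → α s t ≠ 0 →
      ((k₁:F)*(k₂:F))*(α s t)⁻¹ = (s:F)*(k₂:F)*(α k₁ 0)⁻¹ + (t:F)*(k₁:F)*(α 0 k₂)⁻¹ := by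
    intro s t hst ha
    rcases Nat.eq_zero_or_pos s with rfl | hs
    · have hk2t : k₂ ∣ t := (hiff₂ t (by omega)).1 ha
      obtain ⟨a', ha'⟩ := hk2t
      have hapos : 0 < a' := by
        rcases Nat.eq_zero_or_pos a' with rfl | h
        · rw [Nat.mul_zero] at ha'; omega
        · exact h
      have hinv := (rb3 key (show 0 < 0 + k₂ by omega) hak₂ a' hapos).2
      have e2 : a'*k₂ = t := by rw [ha']; ring
      rw [Nat.mul_zero, e2] at hinv
      rw [hinv, ha']
      push_cast
      ring
    · rcases Nat.eq_zero_or_pos t with rfl | ht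
      · have hk1s : k₁ ∣ s := (hiff₁ s (by omega)).1 ha
        obtain ⟨a', ha'⟩ := hk1s
        have hapos : 0 < a' := by
          rcases Nat.eq_zero_or_pos a' with rfl | h
          · rw [Nat.mul_zero] at ha'; omega
          · exact h
        have hinv := (rb3 key (show 0 < k₁ + 0 by omega) hak₁ a' hapos).2
        have e1 : a'*k₁ = s := by rw [ha']; ring
        rw [Nat.mul_zero, e1] at hinv
        rw [hinv, ha']
        push_cast
        ring
      · have h1 := (rb3 key (show 0 < s + t by omega) ha (k₁*k₂) (Nat.mul_pos hk₁ hk₂)).2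
        have hX := rb3 key (show 0 < k₁ + 0 by omega) hak₁ (k₂*s) (Nat.mul_pos hk₂ hs)
        have hY := rb3 key (show 0 < 0 + k₂ by omega) hak₂ (k₁*t) (Nat.mul_pos hk₁ ht)
        have hXp : 0 < (k₂*s)*k₁ := Nat.mul_pos (Nat.mul_pos hk₂ hs) hk₁
        have hYp : 0 < (k₁*t)*k₂ := Nat.mul_pos (Nat.mul_pos hk₁ ht) hk₂
        have hsum := rb1 key (show 0 < (k₂*s)*k₁ + (k₂*s)*0 by omega)
          (show 0 < (k₁*t)*0 + (k₁*t)*k₂ by omega) hX.1 hY.1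
        have hmain := hsum.2
        rw [hX.2, hY.2] at hmain
        have e1 : (k₂*s)*k₁ + (k₁*t)*0 = (k₁*k₂)*s := by ring
        have e2 : (k₂*s)*0 + (k₁*t)*k₂ = (k₁*k₂)*t := by ring
        rw [e1, e2, h1] at hmain
        push_cast at hmain ⊢
        linear_combination hmain
  have hformula : ∀ s t : ℕ, 0 < s + t → α s t ≠ 0 →
      α s t = ((k₁:F)*k₂*(α k₁ 0)*(α 0 k₂)) /
        ((t:F)*k₁*(α k₁ 0) + (s:F)*k₂*(α 0 k₂)) := by
    intro s t hst ha
    have E := hval s t hst ha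
    have hk₁F : (k₁:F) ≠ 0 := Nat.cast_ne_zero.mpr (by omega)
    have hk₂F : (k₂:F) ≠ 0 := Nat.cast_ne_zero.mpr (by omega)
    have hden : (t:F)*k₁*(α k₁ 0) + (s:F)*k₂*(α 0 k₂)
        = (k₁:F)*k₂*(α k₁ 0)*(α 0 k₂)*(α s t)⁻¹ := by
      have hre : (α k₁ 0)*(α 0 k₂)*((s:F)*k₂*(α k₁ 0)⁻¹ + (t:F)*k₁*(α 0 k₂)⁻¹)
          = (t:F)*k₁*(α k₁ 0) + (s:F)*k₂*(α 0 k₂) := by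
        field_simp
        ring
      rw [← hre, ← E]
      ring
    have hden0 : (t:F)*k₁*(α k₁ 0) + (s:F)*k₂*(α 0 k₂) ≠ 0 := by
      rw [hden]
      exact mul_ne_zero (mul_ne_zero (mul_ne_zero (mul_ne_zero hk₁F hk₂F) hak₁) hak₂)
        (inv_ne_zero ha)
    rw [eq_div_iff hden0, hden]
    field_simp
  -- Step B8 : congruence condition equivalence
  have hcond : ∀ s t : ℕ, 0 < s + t →
      ((∃ l, l < b ∧ s ≡ e * l [MOD k₁] ∧ t ≡ T * l [MOD k₂]) ↔
        (e ∣ s ∧ t ≡ (s/e) * t₀ [MOD k₂])) := by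
    intro s t _
    constructor
    · rintro ⟨l, hl, hs, ht⟩
      have helk : e*l < k₁ := by
        have h2 : e*(l+1) ≤ e*b := Nat.mul_le_mul_left e (by omega)
        have h3 : e*(l+1) = e*l + e := by ring
        omega
      have hs' : s % k₁ = e*l := by
        have h := hs
        have h' : s % k₁ = (e*l) % k₁ := h
        rwa [Nat.mod_eq_of_lt helk] at h'
      have hsdecomp : k₁*(s/k₁) + e*l = s := by
        rw [← hs']; exact Nat.div_add_mod s k₁
      set Qk := s / k₁ with hQk
      have hX : s = e*(b*Qk + l) := by
        rw [← hsdecomp, hk₁eb]; ring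
      refine ⟨⟨b*Qk + l, hX⟩, ?_⟩
      have hse : s/e = b*Qk + l := by
        conv_lhs => rw [hX]
        rw [Nat.mul_div_cancel_left _ hepos]
      have h2 : (s/e)*t₀ = l*t₀ + k₂*(Qk*z₀) := by
        rw [hse]
        calc (b*Qk+l)*t₀ = l*t₀ + Qk*(b*t₀) := by ring
          _ = l*t₀ + Qk*(k₂*z₀) := by rw [hz₀]
          _ = l*t₀ + k₂*(Qk*z₀) := by ring
      show t % k₂ = ((s/e)*t₀) % k₂
      calc t % k₂ = (T*l) % k₂ := ht
        _ = (t₀*l) % k₂ := Nat.ModEq.mul_right l hmodT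
        _ = (l*t₀) % k₂ := by rw [Nat.mul_comm]
        _ = (l*t₀ + k₂*(Qk*z₀)) % k₂ := (Nat.add_mul_mod_self_left _ _ _).symm
        _ = ((s/e)*t₀) % k₂ := by rw [← h2]
    · rintro ⟨hes, hmod⟩
      obtain ⟨Q, hsQ⟩ := hes
      have hQeq : s/e = Q := by rw [hsQ, Nat.mul_div_cancel_left _ hepos]
      rw [hQeq] at hmod
      refine ⟨Q % b, Nat.mod_lt _ hbpos, ?_, ?_⟩
      · have h1 : s = k₁*(Q/b) + e*(Q % b) := by
          rw [hsQ, hk₁eb]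
          calc e*Q = e*(b*(Q/b) + Q % b) := by rw [Nat.div_add_mod Q b]
            _ = e*b*(Q/b) + e*(Q % b) := by ring
        show s % k₁ = (e*(Q % b)) % k₁
        rw [h1, Nat.add_comm, Nat.add_mul_mod_self_left]
      · have h2 : Q*t₀ = (Q % b)*t₀ + k₂*((Q/b)*z₀) := by
          calc Q*t₀ = (b*(Q/b) + Q % b)*t₀ := by rw [Nat.div_add_mod Q b]
            _ = (Q % b)*t₀ + (Q/b)*(b*t₀) := by ring
            _ = (Q % b)*t₀ + (Q/b)*(k₂*z₀) := by rw [hz₀]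
            _ = (Q % b)*t₀ + k₂*((Q/b)*z₀) := by ring
        show t % k₂ = (T*(Q % b)) % k₂
        calc t % k₂ = (Q*t₀) % k₂ := hmod
          _ = ((Q % b)*t₀ + k₂*((Q/b)*z₀)) % k₂ := by rw [← h2]
          _ = ((Q % b)*t₀) % k₂ := Nat.add_mul_mod_self_left _ _ _
          _ = (t₀*(Q % b)) % k₂ := by rw [Nat.mul_comm]
          _ = (T*(Q % b)) % k₂ := (Nat.ModEq.mul_right _ hmodT).symm
  -- assemble
  refine ⟨k₁, k₂, hk₁, hk₂, α k₁ 0, α 0 k₂, hak₁, hak₂, a, b, d, hddef, had, hbd, hgcd, ?_⟩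
  intro s t hst
  rw [hk₁bb, hk₂ad]
  constructor
  · intro hC
    exact hformula s t hst ((hchar s t hst).2 ((hcond s t hst).1 hC))
  · intro hC
    by_contra h0
    exact hC ((hcond s t hst).2 ((hchar s t hst).1 h0))


end RBaux

/-- Classification of monomial weight-zero Rota–Baxter operators of the form
`R(xⁿyᵐ) = α_{n,m} xⁿyᵐ` on the non-unital algebra `F₀[x,y]` of polynomials
with zero constant term (the ideal generated by `x` and `y`). -/
theorem rb_weight_zero_diagonal_nonunital {F : Type*} [Field F] [CharZero F]
    (α : ℕ → ℕ → F)
    (I : Ideal (MvPolynomial (Fin 2) F))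
    (hI : I = Ideal.span {X 0, X 1})
    (R : (I.restrictScalars F) →ₗ[F] (I.restrictScalars F))
    (hRB : ∀ a b : I.restrictScalars F,
      (R a : MvPolynomial (Fin 2) F) * (R b : MvPolynomial (Fin 2) F) =
        (R ⟨(R a : MvPolynomial (Fin 2) F) * (b : MvPolynomial (Fin 2) F) +
              (a : MvPolynomial (Fin 2) F) * (R b : MvPolynomial (Fin 2) F),
            I.add_mem (I.mul_mem_left _ b.2) (I.mul_mem_left _ (R b).2)⟩ :
          MvPolynomial (Fin 2) F))
    (hmono : ∀ n m : ℕ, 0 < n + m →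
      ∀ h : (X 0 ^ n * X 1 ^ m : MvPolynomial (Fin 2) F) ∈ I,
        (R ⟨X 0 ^ n * X 1 ^ m, h⟩ : MvPolynomial (Fin 2) F) =
          α n m • (X 0 ^ n * X 1 ^ m)) :
    (∃ l r : ℕ, ¬(l = 0 ∧ r = 0) ∧ ∃ γ : F, ∀ s t : ℕ, 0 < s + t →
      (∀ a : ℕ, 0 < a → s = a * l → t = a * r → α s t = γ / (a : F)) ∧
      ((∀ a : ℕ, 0 < a → ¬(s = a * l ∧ t = a * r)) → α s t = 0)) ∨
    (∃ k₁ k₂ : ℕ, 0 < k₁ ∧ 0 < k₂ ∧ ∃ α₁ α₂ : F, α₁ ≠ 0 ∧ α₂ ≠ 0 ∧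
      ∃ a b d : ℕ, d = Nat.gcd k₁ k₂ ∧ a < d ∧ b ∣ d ∧ (d / b) ∣ Nat.gcd a d ∧
      ∀ s t : ℕ, 0 < s + t →
        ((∃ l : ℕ, l < b ∧ s ≡ (k₁ / b) * l [MOD k₁] ∧ t ≡ (k₂ * a / d) * l [MOD k₂]) →
          α s t = ((k₁ : F) * k₂ * α₁ * α₂) /
            ((t : F) * k₁ * α₁ + (s : F) * k₂ * α₂)) ∧
        ((¬ ∃ l : ℕ, l < b ∧ s ≡ (k₁ / b) * l [MOD k₁] ∧ t ≡ (k₂ * a / d) * l [MOD k₂]) →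
          α s t = 0)) := by
  have key : RBkey α := by
    have hmem : ∀ n m : ℕ, 0 < n + m → (X 0^n * X 1^m : MvPolynomial (Fin 2) F) ∈ I := by
      intro n m h
      rw [hI]
      rcases Nat.eq_zero_or_pos n with hn | hn
      · subst hn
        have hm : m ≠ 0 := by omega
        have : (X 0^0 * X 1^m : MvPolynomial (Fin 2) F) = (X 0^0 * X 1^(m-1)) * X 1 := by
          rw [mul_assoc, ← pow_succ]; congr 2; omega
        rw [this]
        exact Ideal.mul_mem_left _ _ (Ideal.subset_span (by simp))
      · have : (X 0^n * X 1^m : MvPolynomial (Fin 2) F) = (X 0^(n-1) * X 1^m) * X 0 := by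
          have h' : (X 0:MvPolynomial (Fin 2) F)^n = X 0^(n-1) * X 0 := by
            rw [← pow_succ]; congr 1; omega
          rw [h']; ring
        rw [this]
        exact Ideal.mul_mem_left _ _ (Ideal.subset_span (by simp))
    intro n m p q h1 h2
    have h3 : 0 < (n+p) + (m+q) := by omega
    have e := hRB ⟨_, hmem n m h1⟩ ⟨_, hmem p q h2⟩
    have hM : (X 0^n * X 1^m : MvPolynomial (Fin 2) F) * (X 0^p * X 1^q)
        = X 0^(n+p) * X 1^(m+q) := by ring
    have harg : (⟨(R ⟨_, hmem n m h1⟩ : MvPolynomial (Fin 2) F) * (X 0^p * X 1^q) +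
          (X 0^n * X 1^m) * (R ⟨_, hmem p q h2⟩ : MvPolynomial (Fin 2) F),
          I.add_mem (I.mul_mem_left _ (hmem p q h2)) (I.mul_mem_left _ (R ⟨_, hmem p q h2⟩).2)⟩
          : I.restrictScalars F) =
        (α n m + α p q) • (⟨X 0^(n+p) * X 1^(m+q), hmem _ _ h3⟩ : I.restrictScalars F) := by
      apply Subtype.ext
      show (R ⟨X 0^n * X 1^m, hmem n m h1⟩ : MvPolynomial (Fin 2) F) * (X 0^p * X 1^q) +
          (X 0^n * X 1^m) * (R ⟨X 0^p * X 1^q, hmem p q h2⟩ : MvPolynomial (Fin 2) F) =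
          (α n m + α p q) • (X 0^(n+p) * X 1^(m+q) : MvPolynomial (Fin 2) F)
      rw [hmono n m h1, hmono p q h2]
      rw [smul_mul_assoc, mul_smul_comm, hM, ← add_smul]
    rw [harg, map_smul] at e
    rw [hmono n m h1, hmono p q h2] at e
    rw [smul_mul_smul_comm, hM, Submodule.coe_smul, hmono _ _ h3, smul_smul] at e
    have hMne : (X 0^(n+p) * X 1^(m+q) : MvPolynomial (Fin 2) F) ≠ 0 :=
      mul_ne_zero (pow_ne_zero _ (X_ne_zero _)) (pow_ne_zero _ (X_ne_zero _))
    exact smul_left_injective F hMne e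
  by_cases hne : ∃ n m : ℕ, 0 < n + m ∧ α n m ≠ 0
  · by_cases hind : ∃ n m p q : ℕ, 0 < n + m ∧ 0 < p + q ∧
        α n m ≠ 0 ∧ α p q ≠ 0 ∧ n*q ≠ m*p
    · exact Or.inr (rbcaseB key hind)
    · push_neg at hind
      exact Or.inl (rbcaseA key hne hind)
  · push_neg at hne
    refine Or.inl ⟨1, 0, by simp, 0, fun s t hst => ⟨?_, ?_⟩⟩
    · intro a ha _ _
      rw [hne s t hst]
      simp
    · intro _
      exact hne s t hst
end

section
/- Let F be a field, let p_x > 0 and p_y ≥ 0 be natural numbers, and let T be an averaging operator on F[x,y] with T(x^n y^m) = α_{n,m} · x^{n+p_x} y^{m+p_y} for all n, m ≥ 0, where α_{n,m} ∈ F. Then any two nonzero coefficients coincide: if α_{n,m} ≠ 0 and α_{s,t} ≠ 0, then α_{n,m} = α_{s,t}. -/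
open MvPolynomial

/-- For an averaging operator `T(xⁿyᵐ) = α_{n,m} x^{n+pₓ} y^{m+p_y}` on `F[x,y]`
with `pₓ > 0`, any two nonzero coefficients coincide. -/
theorem averaging_shift_coeffs_equal {F : Type*} [Field F]
    (px py : ℕ) (hpx : 0 < px) (α : ℕ → ℕ → F)
    (T : MvPolynomial (Fin 2) F →ₗ[F] MvPolynomial (Fin 2) F)
    (hav : ∀ u v : MvPolynomial (Fin 2) F,
      T u * T v = T (T u * v) ∧ T u * T v = T (u * T v))
    (hmono : ∀ n m : ℕ,
      T (X 0 ^ n * X 1 ^ m) = α n m • (X 0 ^ (n + px) * X 1 ^ (m + py))) :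
    ∀ n m s t : ℕ, α n m ≠ 0 → α s t ≠ 0 → α n m = α s t := by
  have hmul : ∀ a b c d : ℕ,
      (X 0 ^ a * X 1 ^ b : MvPolynomial (Fin 2) F) * (X 0 ^ c * X 1 ^ d)
        = X 0 ^ (a + c) * X 1 ^ (b + d) := by
    intro a b c d
    rw [pow_add, pow_add]; ring
  have hne : ∀ a b : ℕ, (X 0 ^ a * X 1 ^ b : MvPolynomial (Fin 2) F) ≠ 0 :=
    fun a b => mul_ne_zero (pow_ne_zero _ (X_ne_zero _)) (pow_ne_zero _ (X_ne_zero _))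
  have key1 : ∀ n m s t : ℕ,
      α n m * α s t = α n m * α (n + s + px) (m + t + py) := by
    intro n m s t
    have h := (hav (X 0 ^ n * X 1 ^ m) (X 0 ^ s * X 1 ^ t)).1
    rw [hmono n m, hmono s t, smul_mul_smul_comm, hmul, smul_mul_assoc, hmul, map_smul,
      hmono, smul_smul] at h
    rw [show n + px + (s + px) = n + s + px + px from by ring,
        show m + py + (t + py) = m + t + py + py from by ring,
        show n + px + s = n + s + px from by ring,
        show m + py + t = m + t + py from by ring] at h
    exact smul_left_injective F (hne _ _) h
  have key2 : ∀ n m s t : ℕ,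
      α n m * α s t = α s t * α (n + s + px) (m + t + py) := by
    intro n m s t
    have h := (hav (X 0 ^ n * X 1 ^ m) (X 0 ^ s * X 1 ^ t)).2
    rw [hmono n m, hmono s t, smul_mul_smul_comm, hmul, mul_smul_comm, hmul, map_smul,
      hmono, smul_smul] at h
    rw [show n + px + (s + px) = n + (s + px) + px from by ring,
        show m + py + (t + py) = m + (t + py) + py from by ring] at h
    have h' := smul_left_injective F (hne _ _) h
    rw [show n + (s + px) = n + s + px from by ring,
        show m + (t + py) = m + t + py from by ring] at h'
    exact h'
  intro n m s t hnm hst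
  have e1 : α s t = α (n + s + px) (m + t + py) :=
    mul_left_cancel₀ hnm (key1 n m s t)
  have e2 : α n m = α (n + s + px) (m + t + py) := by
    have := key2 n m s t
    rw [mul_comm (α n m) (α s t)] at this
    exact mul_left_cancel₀ hst this
  rw [e1, e2]
end

section
/- Let F be a field, let p_x > 0 and p_y ≥ 0 be natural numbers, and let T be an averaging operator on F[x,y] with T(x^n y^m) = α_{n,m} · x^{n+p_x} y^{m+p_y} for all n, m ≥ 0, where α_{n,m} ∈ F. If α_{n,m} ≠ 0, then for all s, t, a ∈ ℕ: (1) α_{s + a·(n+p_x), t + a·(m+p_y)} = α_{s,t}, and (2) α_{(a+1)·n + a·p_x, (a+1)·m + a·p_y} = α_{n,m}. -/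
open MvPolynomial

/-- For an averaging operator `T(xⁿyᵐ) = α_{n,m} x^{n+pₓ} y^{m+p_y}` on `F[x,y]`
with `pₓ > 0`: if `α_{n,m} ≠ 0`, then
`α_{s + a(n+pₓ), t + a(m+p_y)} = α_{s,t}` and
`α_{(a+1)n + a pₓ, (a+1)m + a p_y} = α_{n,m}` for all `s, t, a`. -/
theorem averaging_shift_translation {F : Type*} [Field F]
    (px py : ℕ) (hpx : 0 < px) (α : ℕ → ℕ → F)
    (T : MvPolynomial (Fin 2) F →ₗ[F] MvPolynomial (Fin 2) F)
    (hav : ∀ u v : MvPolynomial (Fin 2) F,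
      T u * T v = T (T u * v) ∧ T u * T v = T (u * T v))
    (hmono : ∀ n m : ℕ,
      T (X 0 ^ n * X 1 ^ m) = α n m • (X 0 ^ (n + px) * X 1 ^ (m + py)))
    (n m : ℕ) (hnm : α n m ≠ 0) :
    ∀ s t a : ℕ,
      α (s + a * (n + px)) (t + a * (m + py)) = α s t ∧
      α ((a + 1) * n + a * px) ((a + 1) * m + a * py) = α n m := by
  have hm : ∀ a b c d : ℕ, (X (0:Fin 2) ^ a * X 1 ^ b : MvPolynomial (Fin 2) F)
      * (X 0 ^ c * X 1 ^ d) = X 0 ^ (a+c) * X 1 ^ (b+d) := by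
    intros a b c d; ring
  have hne : ∀ a b : ℕ, (X (0:Fin 2) ^ a * X 1 ^ b : MvPolynomial (Fin 2) F) ≠ 0 :=
    fun a b => mul_ne_zero (pow_ne_zero _ (X_ne_zero 0)) (pow_ne_zero _ (X_ne_zero 1))
  have key : ∀ s t : ℕ, α (s + (n+px)) (t + (m+py)) = α s t := by
    intro s t
    have h := (hav (X 0 ^ s * X 1 ^ t) (X 0 ^ n * X 1 ^ m)).2
    rw [hmono, hmono, smul_mul_smul_comm, hm, mul_smul_comm, map_smul, hm, hmono,
      smul_smul, show s + px + (n + px) = s + (n + px) + px from by omega,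
      show t + py + (m + py) = t + (m + py) + py from by omega] at h
    have h2 : (α s t * α n m - α n m * α (s+(n+px)) (t+(m+py)))
        • (X (0:Fin 2) ^ (s + (n+px) + px) * X 1 ^ (t + (m+py) + py)
          : MvPolynomial (Fin 2) F) = 0 := by
      rw [sub_smul, h, sub_self]
    rcases smul_eq_zero.mp h2 with h3 | h3
    · have h4 : α s t * α n m = α n m * α (s+(n+px)) (t+(m+py)) := sub_eq_zero.mp h3
      rw [mul_comm (α s t)] at h4
      exact (mul_left_cancel₀ hnm h4).symm
    · exact absurd h3 (hne _ _)
  have p1 : ∀ a s t : ℕ, α (s + a * (n + px)) (t + a * (m + py)) = α s t := by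
    intro a
    induction a with
    | zero => simp
    | succ k ih =>
      intro s t
      rw [show s + (k+1) * (n + px) = (s + k * (n + px)) + (n + px) from by ring,
        show t + (k+1) * (m + py) = (t + k * (m + py)) + (m + py) from by ring,
        key, ih]
  intro s t a
  refine ⟨p1 a s t, ?_⟩
  rw [show (a + 1) * n + a * px = n + a * (n + px) from by ring,
    show (a + 1) * m + a * py = m + a * (m + py) from by ring]
  exact p1 a n m
end

section
/- Let F be a field of characteristic zero, let p_x > 0 and p_y ≥ 0 be natural numbers, and let k, c, Δ ∈ ℕ satisfy Δ > 0, c ≤ Δ ≤ c + p_y, Δ ∣ c + p_y, and (c + p_y) ∣ (k + p_x)·Δ; set r := (c + p_y)/Δ and q := (k + p_x)·Δ/(c + p_y). Let R be a Rota–Baxter operator of weight zero on F[x,y] with R(x^n y^m) = γ_{n,m} · x^{n+p_x} y^{m+p_y} for all n, m ≥ 0, where γ_{n,m} ∈ F, and suppose that γ_{k + q·s, c + Δ·s} ≠ 0 for all s ≥ 0 while γ_{n,m} = 0 whenever (n, m) is not of the form (k + q·s, c + Δ·s) for some s ≥ 0. Then for every s ≥ 0: γ_{k + q·s, c + Δ·s}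 = (r · γ_{k,c})/(r + s) (natural numbers cast into F). -/
open MvPolynomial

/-- Case (a) of the corollary: for a weight-zero Rota–Baxter operator
`R(xⁿyᵐ) = γ_{n,m} x^{n+pₓ} y^{m+p_y}` whose nonzero coefficients are exactly those
indexed by `(k + q·s, c + Δ·s)`, `s ≥ 0` (with `q = (k+pₓ)·Δ/(c+p_y)`), one has
`γ_{k+q·s, c+Δ·s} = r·γ_{k,c}/(r+s)` where `r = (c+p_y)/Δ`. -/
theorem rb_case_a_coefficients {F : Type*} [Field F] [CharZero F]
    (px py k c Δ : ℕ) (hpx : 0 < px) (hΔ : 0 < Δ)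
    (hcΔ : c ≤ Δ) (hΔcp : Δ ≤ c + py) (hdvd₁ : Δ ∣ (c + py))
    (hdvd₂ : (c + py) ∣ ((k + px) * Δ))
    (γ : ℕ → ℕ → F)
    (R : MvPolynomial (Fin 2) F →ₗ[F] MvPolynomial (Fin 2) F)
    (hRB : ∀ u v : MvPolynomial (Fin 2) F, R u * R v = R (R u * v + u * R v))
    (hmono : ∀ n m : ℕ,
      R (X 0 ^ n * X 1 ^ m) = γ n m • (X 0 ^ (n + px) * X 1 ^ (m + py)))
    (hnz : ∀ s : ℕ, γ (k + ((k + px) * Δ / (c + py)) * s) (c + Δ * s) ≠ 0)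
    (hz : ∀ n m : ℕ,
      (∀ s : ℕ, ¬(n = k + ((k + px) * Δ / (c + py)) * s ∧ m = c + Δ * s)) →
        γ n m = 0) :
    ∀ s : ℕ, γ (k + ((k + px) * Δ / (c + py)) * s) (c + Δ * s) =
      (((c + py) / Δ : ℕ) : F) * γ k c / ((((c + py) / Δ : ℕ) : F) + s) := by
  set q := (k + px) * Δ / (c + py) with hqdef
  set r := (c + py) / Δ with hrdef
  have hΔr : Δ * r = c + py := Nat.mul_div_cancel' hdvd₁
  have hqcp : q * (c + py) = (k + px) * Δ := Nat.div_mul_cancel hdvd₂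
  have hqr : q * r = k + px := by
    have h : q * r * Δ = (k + px) * Δ := by
      calc q * r * Δ = q * (Δ * r) := by ring
        _ = q * (c + py) := by rw [hΔr]
        _ = (k + px) * Δ := hqcp
    exact Nat.eq_of_mul_eq_mul_right hΔ h
  have hr1 : 1 ≤ r := (Nat.one_le_div_iff hΔ).mpr hΔcp
  -- key multiplicative identity on coefficients
  have key : ∀ n m n' m' : ℕ, γ n m * γ n' m' =
      (γ n m + γ n' m') * γ (n + n' + px) (m + m' + py) := by
    intro n m n' m'
    have h := hRB (X 0 ^ n * X 1 ^ m) (X 0 ^ n' * X 1 ^ m')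
    rw [hmono n m, hmono n' m'] at h
    have harg : (γ n m • (X 0 ^ (n + px) * X 1 ^ (m + py))) * (X 0 ^ n' * X 1 ^ m')
        + (X 0 ^ n * X 1 ^ m) * (γ n' m' • (X 0 ^ (n' + px) * X 1 ^ (m' + py)))
        = (γ n m + γ n' m') • (X 0 ^ (n + n' + px) * X 1 ^ (m + m' + py)
            : MvPolynomial (Fin 2) F) := by
      rw [smul_mul_assoc, mul_smul_comm, add_smul]
      congr 1 <;> ring
    rw [harg, map_smul, hmono] at h
    have hlhs : (γ n m • (X 0 ^ (n + px) * X 1 ^ (m + py)))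
        * (γ n' m' • (X 0 ^ (n' + px) * X 1 ^ (m' + py)))
        = (γ n m * γ n' m') • (X 0 ^ (n + n' + px + px) * X 1 ^ (m + m' + py + py)
            : MvPolynomial (Fin 2) F) := by
      rw [smul_mul_smul_comm]
      congr 1
      ring
    rw [hlhs, smul_smul] at h
    have hW : (X 0 ^ (n + n' + px + px) * X 1 ^ (m + m' + py + py)
        : MvPolynomial (Fin 2) F) ≠ 0 :=
      mul_ne_zero (pow_ne_zero _ (X_ne_zero _)) (pow_ne_zero _ (X_ne_zero _))
    exact smul_left_injective F hW h
  set δ : ℕ → F := fun s => γ (k + q * s) (c + Δ * s) with hδdef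
  have hδnz : ∀ s, δ s ≠ 0 := hnz
  have hrel : ∀ s t, δ s * δ t = (δ s + δ t) * δ (s + t + r) := by
    intro s t
    have h := key (k + q * s) (c + Δ * s) (k + q * t) (c + Δ * t)
    have e1 : k + q * s + (k + q * t) + px = k + q * (s + t + r) := by
      rw [Nat.mul_add, Nat.mul_add, hqr]; ring
    have e2 : c + Δ * s + (c + Δ * t) + py = c + Δ * (s + t + r) := by
      rw [Nat.mul_add, Nat.mul_add, hΔr]; ring
    rw [e1, e2] at h
    exact h
  have hsum : ∀ s t, δ s + δ t ≠ 0 := by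
    intro s t h0
    have h := hrel s t
    rw [h0, zero_mul] at h
    rcases mul_eq_zero.mp h with h | h
    · exact hδnz s h
    · exact hδnz t h
  set β : ℕ → F := fun s => (δ s)⁻¹ with hβdef
  have hβnz : ∀ s, β s ≠ 0 := fun s => inv_ne_zero (hδnz s)
  have hβadd : ∀ s t, β (s + t + r) = β s + β t := by
    intro s t
    have h := hrel s t
    have h1 := hδnz (s + t + r)
    have h2 := hδnz s
    have h3 := hδnz t
    simp only [hβdef]
    field_simp
    linear_combination h
  have hd : ∀ s, β (s + 1) = β s + (β 1 - β 0) := by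
    intro s
    have h1 := hβadd (s + 1) 0
    have h2 := hβadd s 1
    rw [show s + 1 + 0 + r = s + 1 + r from by ring] at h1
    linear_combination h2 - h1
  have hβ : ∀ s, β s = β 0 + (s : F) * (β 1 - β 0) := by
    intro s
    induction s with
    | zero => simp
    | succ n ih => rw [hd n, ih]; push_cast; ring
  have hrd : (r : F) * (β 1 - β 0) = β 0 := by
    have h00 := hβadd 0 0
    rw [show (0 : ℕ) + 0 + r = r from by ring] at h00
    have := hβ r
    rw [h00] at this
    linear_combination -this
  intro s
  have hrcast : ((r : ℕ) : F) ≠ 0 := Nat.cast_ne_zero.mpr (by omega)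
  have hrs : ((r : ℕ) : F) + (s : F) ≠ 0 := by
    have : ((r + s : ℕ) : F) ≠ 0 := Nat.cast_ne_zero.mpr (by omega)
    push_cast at this
    exact this
  have hkey : (r : F) * β s = ((r : F) + s) * β 0 := by
    rw [hβ s]
    linear_combination (s : F) * hrd
  have h0 : δ 0 = γ k c := by simp [hδdef]
  have hfin : δ s = (r : F) * δ 0 / ((r : F) + s) := by
    have hβs := hβnz s
    have hβ0 := hβnz 0
    rw [show δ s = (β s)⁻¹ from by rw [hβdef]; simp [hδdef],
        show δ 0 = (β 0)⁻¹ from by rw [hβdef]; simp [hδdef]]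
    field_simp
    linear_combination -hkey
  rw [← h0]
  exact hfin
end
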